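/- arXiv:1503.05699 — 10 statements merged into one kernel-verified Lean document; each statement's English description precedes it below -/
import Mathlib

section
/- Let f : [a,b] × [c,d] ⊂ ℝ² → ℝ be a continuous function with continuous partial derivative with respect to the first variable, and let x : [a,b] → [c,d] be continuously differentiable. Then ∫_a^b f(t, x(t)) x'(t) dt = ∫_{x(a)}^{x(b)} f(b, r) dr − ∫_a^b ( ∫_{x(a)}^{x(t)} ∂f/∂t (t, r) dr ) dt. -/
open MeasureTheory Set intervalIntegral

/-- Auxiliary version of the non-autonomous change of variables formula, under the
stronger assumptions that `f`, `ft` and `x` are globally continuous. -/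
private lemma nacov_aux
    (a b c d : ℝ) (hab : a < b) (hcd : c ≤ d)
    (f ft : ℝ → ℝ → ℝ)
    (hf : Continuous fun p : ℝ × ℝ => f p.1 p.2)
    (hft : ∀ t ∈ Set.Icc a b, ∀ r ∈ Set.Icc c d,
      HasDerivWithinAt (fun s => f s r) (ft t r) (Set.Icc a b) t)
    (hftc : Continuous fun p : ℝ × ℝ => ft p.1 p.2)
    (x x' : ℝ → ℝ) (hxc : Continuous x)
    (hxmem : ∀ t ∈ Set.Icc a b, x t ∈ Set.Icc c d)
    (hx : ∀ t ∈ Set.Icc a b, HasDerivWithinAt x (x' t) (Set.Icc a b) t)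
    (hx'c : ContinuousOn x' (Set.Icc a b)) :
    ∫ t in a..b, f t (x t) * x' t =
      (∫ r in x a..x b, f b r) - ∫ t in a..b, (∫ r in x a..x t, ft t r) := by
  have ha : a ∈ Icc a b := ⟨le_refl a, hab.le⟩
  have hb : b ∈ Icc a b := ⟨hab.le, le_refl b⟩
  -- bound for `ft` on the rectangle
  obtain ⟨M₀, hM₀⟩ := (isCompact_Icc.prod isCompact_Icc
    (s := Icc a b) (t := Icc c d)).exists_bound_of_continuousOn hftc.continuousOn
  set M : ℝ := max M₀ 0 with hMdef
  have hM : ∀ t ∈ Icc a b, ∀ r ∈ Icc c d, |ft t r| ≤ M := fun t ht r hr =>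
    le_trans (hM₀ (t, r) ⟨ht, hr⟩) (le_max_left _ _)
  have hM0 : (0:ℝ) ≤ M := le_max_right _ _
  -- bound for `x'`
  obtain ⟨L₀, hL₀⟩ := isCompact_Icc.exists_bound_of_continuousOn hx'c
  set L : ℝ := max L₀ 0 with hLdef
  have hL : ∀ t ∈ Icc a b, |x' t| ≤ L := fun t ht =>
    le_trans (hL₀ t ht) (le_max_left _ _)
  have hL0 : (0:ℝ) ≤ L := le_max_right _ _
  -- `x` is Lipschitz on `[a,b]`
  have hxlip : ∀ s ∈ Icc a b, ∀ t ∈ Icc a b, |x t - x s| ≤ L * |t - s| := fun s hs t ht =>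
    Convex.norm_image_sub_le_of_norm_hasDerivWithin_le hx hL (convex_Icc a b) hs ht
  -- `f · r` is Lipschitz on `[a,b]`, uniformly in `r ∈ [c,d]`
  have hflip : ∀ r ∈ Icc c d, ∀ s ∈ Icc a b, ∀ t ∈ Icc a b,
      |f t r - f s r| ≤ M * |t - s| := fun r hr s hs t ht =>
    Convex.norm_image_sub_le_of_norm_hasDerivWithin_le
      (fun u hu => hft u hu r hr) (fun u hu => hM u hu r hr) (convex_Icc a b) hs ht
  -- the relevant unordered intervals sit inside `[c,d]`
  have hsub : ∀ u ∈ Icc c d, ∀ v ∈ Icc c d, uIcc u v ⊆ Icc c d := fun u hu v hv =>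
    uIcc_subset_Icc hu hv
  -- continuity of the slices
  have hfc1 : ∀ t, Continuous (f t) := fun t => hf.comp (Continuous.prodMk_right t)
  have hftc1 : ∀ t, Continuous (ft t) := fun t => hftc.comp (Continuous.prodMk_right t)
  set F : ℝ → ℝ := fun t => ∫ r in x a..x t, f t r with hFdef
  set G : ℝ → ℝ := fun t => ∫ r in x a..x t, ft t r with hGdef
  have hFc : Continuous F :=
    intervalIntegral.continuous_parametric_intervalIntegral_of_continuous hf hxc
  have hGc : Continuous G :=
    intervalIntegral.continuous_parametric_intervalIntegral_of_continuous hftc hxc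
  -- the key derivative computation
  have key : ∀ t₀ ∈ Ioo a b, HasDerivAt F (f t₀ (x t₀) * x' t₀ + G t₀) t₀ := by
    intro t₀ ht₀
    have ht₀' : t₀ ∈ Icc a b := Ioo_subset_Icc_self ht₀
    have hmem : Icc a b ∈ nhds t₀ := Icc_mem_nhds ht₀.1 ht₀.2
    have hxd : HasDerivAt x (x' t₀) t₀ := (hx t₀ ht₀').hasDerivAt hmem
    -- derivative of the FTC part
    have h1 : HasDerivAt (fun t => ∫ r in x a..x t, f t₀ r) (f t₀ (x t₀) * x' t₀) t₀ := by
      have hprim : HasDerivAt (fun u => ∫ r in x a..u, f t₀ r) (f t₀ (x t₀)) (x t₀) :=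
        intervalIntegral.integral_hasDerivAt_right ((hfc1 t₀).intervalIntegrable _ _)
          ((hfc1 t₀).stronglyMeasurableAtFilter _ _) (hfc1 t₀).continuousAt
      have := HasDerivAt.comp t₀ hprim hxd
      simpa [Function.comp_def] using this
    -- derivative of the fixed-endpoint parametric part
    obtain ⟨ε, εpos, hball⟩ := Metric.mem_nhds_iff.1 (Ioo_mem_nhds ht₀.1 ht₀.2)
    have h2 : HasDerivAt (fun t => ∫ r in x a..x t₀, (f t r - f t₀ r))
        (∫ r in x a..x t₀, ft t₀ r) t₀ := by
      have := (intervalIntegral.hasDerivAt_integral_of_dominated_loc_of_deriv_le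
        (F := fun t r => f t r - f t₀ r) (F' := ft) (bound := fun _ => M)
        (a := x a) (b := x t₀) (μ := volume) (Metric.ball_mem_nhds t₀ εpos)
        (Filter.Eventually.of_forall fun t =>
          ((hfc1 t).sub (hfc1 t₀)).aestronglyMeasurable)
        (((hfc1 t₀).sub (hfc1 t₀)).intervalIntegrable _ _)
        (hftc1 t₀).aestronglyMeasurable
        (MeasureTheory.ae_of_all _ fun r hr t htb =>
          hM t (Ioo_subset_Icc_self (hball htb)) r
            (hsub _ (hxmem a ha) _ (hxmem t₀ ht₀') (uIoc_subset_uIcc hr)))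
        intervalIntegrable_const
        (MeasureTheory.ae_of_all _ fun r hr t htb =>
          (((hft t (Ioo_subset_Icc_self (hball htb)) r
              (hsub _ (hxmem a ha) _ (hxmem t₀ ht₀') (uIoc_subset_uIcc hr))).hasDerivAt
            (Icc_mem_nhds (hball htb).1 (hball htb).2)).sub_const (f t₀ r)))).2
      exact this
    -- the error term has derivative `0`
    have h3 : HasDerivAt (fun t => ∫ r in x t₀..x t, (f t r - f t₀ r)) 0 t₀ := by
      rw [hasDerivAt_iff_isLittleO]
      have hbig : (fun t => ∫ r in x t₀..x t, (f t r - f t₀ r))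
          =O[nhds t₀] fun t => (t - t₀) ^ 2 := by
        rw [Asymptotics.isBigO_iff]
        refine ⟨M * L, ?_⟩
        filter_upwards [hmem] with t ht
        have hb1 : ‖∫ r in x t₀..x t, (f t r - f t₀ r)‖ ≤ M * |t - t₀| * |x t - x t₀| := by
          refine intervalIntegral.norm_integral_le_of_norm_le_const fun r hr => ?_
          exact hflip r (hsub _ (hxmem t₀ ht₀') _ (hxmem t ht) (uIoc_subset_uIcc hr))
            t₀ ht₀' t ht
        have hb2 : |x t - x t₀| ≤ L * |t - t₀| := hxlip t₀ ht₀' t ht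
        calc ‖∫ r in x t₀..x t, (f t r - f t₀ r)‖
            ≤ M * |t - t₀| * |x t - x t₀| := hb1
          _ ≤ M * |t - t₀| * (L * |t - t₀|) := by
              have := mul_nonneg hM0 (abs_nonneg (t - t₀))
              exact mul_le_mul_of_nonneg_left hb2 this
          _ = M * L * ‖(t - t₀) ^ 2‖ := by
              rw [Real.norm_eq_abs, abs_pow]
              ring
      have hsmall : (fun t : ℝ => (t - t₀) ^ 2) =o[nhds t₀] fun t => t - t₀ := by
        rw [Asymptotics.isLittleO_iff]
        intro c hc
        filter_upwards [Metric.closedBall_mem_nhds t₀ hc] with t htc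
        have : |t - t₀| ≤ c := by
          rw [Metric.mem_closedBall, Real.dist_eq] at htc; exact htc
        calc ‖(t - t₀) ^ 2‖ = |t - t₀| * ‖t - t₀‖ := by
              rw [Real.norm_eq_abs, Real.norm_eq_abs, abs_pow, sq]
          _ ≤ c * ‖t - t₀‖ := by
              exact mul_le_mul_of_nonneg_right this (norm_nonneg _)
      simpa using hbig.trans_isLittleO hsmall
    have hadd := (h1.add h2).add h3
    have heq : ∀ t, F t = (((fun t => ∫ r in x a..x t, f t₀ r) t +
        (fun t => ∫ r in x a..x t₀, (f t r - f t₀ r)) t) +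
        (fun t => ∫ r in x t₀..x t, (f t r - f t₀ r)) t) := by
      intro t
      have i1 : IntervalIntegrable (f t) volume (x a) (x t₀) :=
        (hfc1 t).intervalIntegrable _ _
      have i2 : IntervalIntegrable (f t₀) volume (x a) (x t₀) :=
        (hfc1 t₀).intervalIntegrable _ _
      have i3 : IntervalIntegrable (f t) volume (x t₀) (x t) :=
        (hfc1 t).intervalIntegrable _ _
      have i4 : IntervalIntegrable (f t₀) volume (x t₀) (x t) :=
        (hfc1 t₀).intervalIntegrable _ _
      have e1 : (∫ r in x a..x t₀, f t r) + (∫ r in x t₀..x t, f t r)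
          = ∫ r in x a..x t, f t r :=
        intervalIntegral.integral_add_adjacent_intervals i1 i3
      have e2 : (∫ r in x a..x t₀, f t₀ r) + (∫ r in x t₀..x t, f t₀ r)
          = ∫ r in x a..x t, f t₀ r :=
        intervalIntegral.integral_add_adjacent_intervals i2 i4
      have e3 : (∫ r in x a..x t₀, (f t r - f t₀ r))
          = (∫ r in x a..x t₀, f t r) - (∫ r in x a..x t₀, f t₀ r) :=
        intervalIntegral.integral_sub i1 i2
      have e4 : (∫ r in x t₀..x t, (f t r - f t₀ r))
          = (∫ r in x t₀..x t, f t r) - (∫ r in x t₀..x t, f t₀ r) :=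
        intervalIntegral.integral_sub i3 i4
      show (∫ r in x a..x t, f t r) = ((∫ r in x a..x t, f t₀ r) +
        (∫ r in x a..x t₀, (f t r - f t₀ r))) + (∫ r in x t₀..x t, (f t r - f t₀ r))
      rw [e3, e4]
      linarith
    have hF' := hadd.congr_of_eventuallyEq (Filter.Eventually.of_forall heq)
    simpa using hF'
  -- integrability of the derivative
  have hcont1 : Continuous fun t => f t (x t) := hf.comp (continuous_id.prodMk hxc)
  have hint1 : IntervalIntegrable (fun t => f t (x t) * x' t) volume a b := by
    apply ContinuousOn.intervalIntegrable
    rw [uIcc_of_le hab.le]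
    exact hcont1.continuousOn.mul hx'c
  have hint2 : IntervalIntegrable G volume a b := hGc.intervalIntegrable _ _
  -- fundamental theorem of calculus
  have hFTC : (∫ t in a..b, (f t (x t) * x' t + G t)) = F b - F a :=
    intervalIntegral.integral_eq_sub_of_hasDeriv_right_of_le hab.le hFc.continuousOn
      (fun t ht => (key t ht).hasDerivWithinAt) (hint1.add hint2)
  rw [intervalIntegral.integral_add hint1 hint2] at hFTC
  have hFa : F a = 0 := intervalIntegral.integral_same
  have hFb : F b = ∫ r in x a..x b, f b r := rfl
  have hGint : (∫ t in a..b, G t) = ∫ t in a..b, (∫ r in x a..x t, ft t r) := rfl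
  rw [hFa, hFb] at hFTC
  linarith [hFTC]

/-- Non-autonomous change of variables formula (Theorem 1), for continuously
differentiable `x : [a,b] → [c,d]` and continuous `f : [a,b] × [c,d] → ℝ` with
continuous partial derivative `f_t` with respect to the first variable. -/
theorem nonautonomous_change_of_variables
    (a b c d : ℝ) (hab : a < b) (hcd : c ≤ d)
    (f ft : ℝ → ℝ → ℝ)
    (hf : ContinuousOn (fun p : ℝ × ℝ => f p.1 p.2) (Set.Icc a b ×ˢ Set.Icc c d))
    (hft : ∀ t ∈ Set.Icc a b, ∀ r ∈ Set.Icc c d,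
      HasDerivWithinAt (fun s => f s r) (ft t r) (Set.Icc a b) t)
    (hftc : ContinuousOn (fun p : ℝ × ℝ => ft p.1 p.2) (Set.Icc a b ×ˢ Set.Icc c d))
    (x x' : ℝ → ℝ)
    (hxmem : ∀ t ∈ Set.Icc a b, x t ∈ Set.Icc c d)
    (hx : ∀ t ∈ Set.Icc a b, HasDerivWithinAt x (x' t) (Set.Icc a b) t)
    (hx'c : ContinuousOn x' (Set.Icc a b)) :
    ∫ t in a..b, f t (x t) * x' t =
      (∫ r in x a..x b, f b r) - ∫ t in a..b, (∫ r in x a..x t, ft t r) := by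
  have ha : a ∈ Icc a b := ⟨le_refl a, hab.le⟩
  have hb : b ∈ Icc a b := ⟨hab.le, le_refl b⟩
  set p : ℝ → ℝ := fun t => (Set.projIcc a b hab.le t : ℝ) with hpdef
  set q : ℝ → ℝ := fun r => (Set.projIcc c d hcd r : ℝ) with hqdef
  have hpc : Continuous p := continuous_subtype_val.comp continuous_projIcc
  have hqc : Continuous q := continuous_subtype_val.comp continuous_projIcc
  have hpm : ∀ t, p t ∈ Icc a b := fun t => (Set.projIcc a b hab.le t).2
  have hqm : ∀ r, q r ∈ Icc c d := fun r => (Set.projIcc c d hcd r).2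
  have hpeq : ∀ t ∈ Icc a b, p t = t := fun t ht => by
    simp only [hpdef]; rw [Set.projIcc_of_mem _ ht]
  have hqeq : ∀ r ∈ Icc c d, q r = r := fun r hr => by
    simp only [hqdef]; rw [Set.projIcc_of_mem _ hr]
  set fC : ℝ → ℝ → ℝ := fun t r => f (p t) (q r) with hfCdef
  set ftC : ℝ → ℝ → ℝ := fun t r => ft (p t) (q r) with hftCdef
  set xC : ℝ → ℝ := fun t => x (p t) with hxCdef
  have hxcont : ContinuousOn x (Icc a b) := fun t ht => (hx t ht).continuousWithinAt
  have hfCc : Continuous fun pp : ℝ × ℝ => fC pp.1 pp.2 :=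
    hf.comp_continuous ((hpc.comp continuous_fst).prodMk (hqc.comp continuous_snd))
      fun pp => ⟨hpm _, hqm _⟩
  have hftCc : Continuous fun pp : ℝ × ℝ => ftC pp.1 pp.2 :=
    hftc.comp_continuous ((hpc.comp continuous_fst).prodMk (hqc.comp continuous_snd))
      fun pp => ⟨hpm _, hqm _⟩
  have hxCc : Continuous xC := hxcont.comp_continuous hpc hpm
  have hxCeq : ∀ t ∈ Icc a b, xC t = x t := fun t ht => by
    simp only [hxCdef]; rw [hpeq t ht]
  have hfCeq : ∀ t ∈ Icc a b, ∀ r ∈ Icc c d, fC t r = f t r := fun t ht r hr => by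
    simp only [hfCdef]; rw [hpeq t ht, hqeq r hr]
  have hftCeq : ∀ t ∈ Icc a b, ∀ r ∈ Icc c d, ftC t r = ft t r := fun t ht r hr => by
    simp only [hftCdef]; rw [hpeq t ht, hqeq r hr]
  have hftC : ∀ t ∈ Icc a b, ∀ r ∈ Icc c d,
      HasDerivWithinAt (fun s => fC s r) (ftC t r) (Icc a b) t := by
    intro t ht r hr
    rw [hftCeq t ht r hr]
    exact (hft t ht r hr).congr (fun s hs => hfCeq s hs r hr) (hfCeq t ht r hr)
  have hxCmem : ∀ t ∈ Icc a b, xC t ∈ Icc c d := fun t ht => by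
    rw [hxCeq t ht]; exact hxmem t ht
  have hxCd : ∀ t ∈ Icc a b, HasDerivWithinAt xC (x' t) (Icc a b) t := fun t ht =>
    (hx t ht).congr (fun s hs => hxCeq s hs) (hxCeq t ht)
  have main := nacov_aux a b c d hab hcd fC ftC hfCc hftC hftCc xC x' hxCc hxCmem hxCd hx'c
  have hIab : uIcc a b = Icc a b := uIcc_of_le hab.le
  have hxa : xC a = x a := hxCeq a ha
  have hxb : xC b = x b := hxCeq b hb
  have e1 : (∫ t in a..b, fC t (xC t) * x' t) = ∫ t in a..b, f t (x t) * x' t := by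
    apply intervalIntegral.integral_congr
    intro t ht
    rw [hIab] at ht
    show fC t (xC t) * x' t = f t (x t) * x' t
    rw [hxCeq t ht, hfCeq t ht (x t) (hxmem t ht)]
  have e2 : (∫ r in xC a..xC b, fC b r) = ∫ r in x a..x b, f b r := by
    rw [hxa, hxb]
    apply intervalIntegral.integral_congr
    intro r hr
    exact hfCeq b hb r (uIcc_subset_Icc (hxmem a ha) (hxmem b hb) hr)
  have e3 : (∫ t in a..b, (∫ r in xC a..xC t, ftC t r))
      = ∫ t in a..b, (∫ r in x a..x t, ft t r) := by
    apply intervalIntegral.integral_congr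
    intro t ht
    rw [hIab] at ht
    show (∫ r in xC a..xC t, ftC t r) = ∫ r in x a..x t, ft t r
    rw [hxa, hxCeq t ht]
    apply intervalIntegral.integral_congr
    intro r hr
    exact hftCeq t ht r (uIcc_subset_Icc (hxmem a ha) (hxmem t ht) hr)
  rw [e1, e2, e3] at main
  exact main
end

section
/- Let f : [a,b] × [c,d] ⊂ ℝ² → ℝ be a continuous function with continuous partial derivative with respect to the first variable, and let x : [a,b] → [c,d] be Lipschitz continuous. Then ∫_a^b f(t, x(t)) x'(t) dt = ∫_{x(a)}^{x(b)} f(b, r) dr − ∫_a^b ( ∫_{x(a)}^{x(t)} ∂f/∂t (t, r) dr ) dt, where x'(t) denotes the derivative of x, which exists for almost every t ∈ [a,b]. -/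
open MeasureTheory Set intervalIntegral

open Filter Topology NNReal Asymptotics


private lemma add_tendsto_nhdsNE (s : ℝ) :
    Tendsto (fun τ : ℝ => s + τ) (𝓝[>] (0:ℝ)) (𝓝[≠] s) := by
  apply tendsto_nhdsWithin_of_tendsto_nhds_of_eventually_within
  · have : Tendsto (fun τ : ℝ => s + τ) (𝓝 0) (𝓝 (s + 0)) := tendsto_const_nhds.add tendsto_id
    rw [add_zero] at this
    exact this.mono_left nhdsWithin_le_nhds
  · filter_upwards [self_mem_nhdsWithin] with τ (hτ : (0:ℝ) < τ)
    simp [ne_of_gt, hτ.ne']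

private lemma abs_deriv_le_of_lipschitz {K : ℝ≥0} {g : ℝ → ℝ} (hg : LipschitzWith K g)
    {t g' : ℝ} (h : HasDerivAt g g' t) : |g'| ≤ K := by
  have h1 := hasDerivAt_iff_tendsto_slope.mp h
  have h2 : Tendsto (fun u => |slope g t u|) (𝓝[≠] t) (𝓝 |g'|) :=
    (continuous_abs.tendsto _).comp h1
  apply le_of_tendsto h2
  filter_upwards [self_mem_nhdsWithin] with u hu
  have hut : u ≠ t := hu
  rw [slope_def_field, abs_div, div_le_iff₀ (abs_pos.2 (sub_ne_zero.2 hut))]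
  have := hg.dist_le_mul u t
  rw [Real.dist_eq, Real.dist_eq] at this
  exact this

/-- FTC for a globally Lipschitz function with a.e. derivative. -/
private lemma ftc_lipschitz_global {K : ℝ≥0} {g h : ℝ → ℝ} {a b : ℝ} (hab : a ≤ b)
    (hg : LipschitzWith K g)
    (hderiv : ∀ᵐ t ∂volume, t ∈ Set.Ioo a b → HasDerivAt g (h t) t) :
    ∫ t in a..b, h t = g b - g a := by
  have gc : Continuous g := hg.continuous
  have gi : ∀ u v : ℝ, IntervalIntegrable g volume u v := fun u v => gc.intervalIntegrable u v
  set μ := volume.restrict (Set.Ioc a b) with hμ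
  have hfin : IsFiniteMeasure μ := by
    constructor
    rw [hμ, Measure.restrict_apply_univ]
    exact measure_Ioc_lt_top
  set F : ℝ → ℝ → ℝ := fun τ s => (g (s + τ) - g s) / τ with hFdef
  have hmeas : ∀ τ : ℝ, AEStronglyMeasurable (F τ) μ := fun τ =>
    (((gc.comp (continuous_id.add continuous_const)).sub gc).div_const τ).aestronglyMeasurable
  have h_bound : ∀ᶠ τ in 𝓝[>] (0:ℝ), ∀ᵐ s ∂μ, ‖F τ s‖ ≤ (K:ℝ) := by
    filter_upwards [self_mem_nhdsWithin] with τ (hτ : (0:ℝ) < τ)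
    refine Eventually.of_forall fun s => ?_
    have hd := hg.dist_le_mul (s + τ) s
    rw [Real.dist_eq, Real.dist_eq] at hd
    simp only [hFdef, Real.norm_eq_abs, abs_div, abs_of_pos hτ]
    rw [div_le_iff₀ hτ]
    simpa [abs_of_pos hτ] using hd
  have bound_int : Integrable (fun _ : ℝ => (K:ℝ)) μ := integrable_const _
  have hb_ne : ∀ᵐ s ∂μ, s ≠ b := by
    refine ae_restrict_of_ae ?_
    refine ae_iff.mpr ?_
    simpa [not_not] using measure_singleton (α := ℝ) b
  have h_lim : ∀ᵐ s ∂μ, Tendsto (fun τ => F τ s) (𝓝[>] (0:ℝ)) (𝓝 (h s)) := by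
    filter_upwards [ae_restrict_mem measurableSet_Ioc, hb_ne, ae_restrict_of_ae hderiv]
      with s hs hsb hds
    have hs' : s ∈ Set.Ioo a b := ⟨hs.1, lt_of_le_of_ne hs.2 hsb⟩
    have h1 := (hasDerivAt_iff_tendsto_slope.mp (hds hs')).comp (add_tendsto_nhdsNE s)
    refine h1.congr fun τ => ?_
    simp [Function.comp, slope_def_field, hFdef]
  have dct := MeasureTheory.tendsto_integral_filter_of_dominated_convergence
    (μ := μ) (F := F) (f := h) (l := 𝓝[>] (0:ℝ)) (fun _ => (K:ℝ))
    (Eventually.of_forall hmeas) h_bound bound_int h_lim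
  have key : ∀ τ : ℝ, 0 < τ → ∫ s, F τ s ∂μ
      = ((∫ u in b..(b+τ), g u) - ∫ u in a..(a+τ), g u) / τ := by
    intro τ hτ
    have i1 : IntervalIntegrable (fun s => g (s + τ)) volume a b :=
      (gc.comp (continuous_id.add continuous_const)).intervalIntegrable a b
    have h1 : ∫ s, F τ s ∂μ = ∫ s in a..b, F τ s := (intervalIntegral.integral_of_le hab).symm
    rw [h1]
    have h2 : ∫ s in a..b, F τ s = ((∫ s in a..b, g (s+τ)) - ∫ s in a..b, g s) / τ := by
      rw [← intervalIntegral.integral_sub i1 (gi a b), ← intervalIntegral.integral_div]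
    rw [h2, intervalIntegral.integral_comp_add_right]
    have e1 := intervalIntegral.integral_add_adjacent_intervals (gi a (a+τ)) (gi (a+τ) (b+τ))
    have e2 := intervalIntegral.integral_add_adjacent_intervals (gi a b) (gi b (b+τ))
    have : (∫ s in (a+τ)..(b+τ), g s) - ∫ s in a..b, g s
        = (∫ u in b..(b+τ), g u) - ∫ u in a..(a+τ), g u := by linarith
    rw [this]
  have slope_lim : ∀ s : ℝ, Tendsto (fun τ => (∫ u in s..(s+τ), g u) / τ) (𝓝[>] (0:ℝ)) (𝓝 (g s)) := by
    intro s
    have hD : HasDerivAt (fun u => ∫ v in s..u, g v) (g s) s :=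
      intervalIntegral.integral_hasDerivAt_right (gi s s)
        (gc.stronglyMeasurable.stronglyMeasurableAtFilter) gc.continuousAt
    have h1 := (hasDerivAt_iff_tendsto_slope.mp hD).comp (add_tendsto_nhdsNE s)
    refine h1.congr fun τ => ?_
    simp [Function.comp, slope_def_field]
  have lim_rhs : Tendsto (fun τ => ((∫ u in b..(b+τ), g u) - ∫ u in a..(a+τ), g u) / τ)
      (𝓝[>] (0:ℝ)) (𝓝 (g b - g a)) := by
    have := (slope_lim b).sub (slope_lim a)
    refine this.congr fun τ => ?_
    rw [_root_.sub_div]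
  have lim2 : Tendsto (fun τ => ∫ s, F τ s ∂μ) (𝓝[>] (0:ℝ)) (𝓝 (g b - g a)) := by
    refine lim_rhs.congr' ?_
    filter_upwards [self_mem_nhdsWithin] with τ (hτ : (0:ℝ) < τ)
    exact (key τ hτ).symm
  have := tendsto_nhds_unique dct lim2
  rw [intervalIntegral.integral_of_le hab]
  exact this

/-- FTC for a function Lipschitz on `Icc a b` with a.e. derivative. -/
private lemma ftc_lipschitzOnWith {K : ℝ≥0} {g h : ℝ → ℝ} {a b : ℝ} (hab : a < b)
    (hg : LipschitzOnWith K g (Set.Icc a b))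
    (hderiv : ∀ᵐ t ∂volume, t ∈ Set.Ioo a b → HasDerivAt g (h t) t) :
    ∫ t in a..b, h t = g b - g a := by
  obtain ⟨ge, hge, hEq⟩ := hg.extend_real
  have hd : ∀ᵐ t ∂volume, t ∈ Set.Ioo a b → HasDerivAt ge (h t) t := by
    filter_upwards [hderiv] with t ht hti
    refine (ht hti).congr_of_eventuallyEq ?_
    filter_upwards [Icc_mem_nhds hti.1 hti.2] with u hu
    exact (hEq hu).symm
  rw [ftc_lipschitz_global hab.le hge hd, hEq ⟨hab.le, le_rfl⟩, hEq ⟨le_rfl, hab.le⟩]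

private lemma abs_sub_le_of_uIoc {u v r : ℝ} (hr : r ∈ Set.uIoc u v) : |r - u| ≤ |v - u| := by
  rcases Set.mem_uIoc.mp hr with ⟨h1, h2⟩ | ⟨h1, h2⟩ <;>
    [have := le_abs_self (v - u); have := neg_abs_le (v - u)] <;>
    rw [abs_le] <;> constructor <;> linarith [le_abs_self (v - u), neg_abs_le (v - u)]

/-- Derivative of an interval integral with a moving endpoint and parameter. -/
private lemma hasDerivAt_moving_endpoint {F : ℝ → ℝ → ℝ}
    (hF : Continuous fun p : ℝ × ℝ => F p.1 p.2) {y : ℝ → ℝ} {y't t : ℝ}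
    (hy : HasDerivAt y y't t) :
    HasDerivAt (fun s => ∫ r in y t..y s, F s r) (F t (y t) * y't) t := by
  have hint : ∀ s u v : ℝ, IntervalIntegrable (F s) volume u v := fun s u v =>
    (hF.comp (continuous_const.prodMk continuous_id)).intervalIntegrable u v
  rw [hasDerivAt_iff_isLittleO]
  set c := F t (y t) with hc
  have hyO := hasDerivAt_iff_isLittleO.mp hy
  have term2 : (fun s => c * (y s - y t - (s - t) * y't)) =o[𝓝 t] fun s => s - t := by
    refine IsLittleO.const_mul_left ?_ c
    simpa [smul_eq_mul] using hyO
  have term1 : (fun s => ∫ r in y t..y s, (F s r - c)) =o[𝓝 t] fun s => s - t := by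
    rw [isLittleO_iff]
    intro ε hε
    set C := |y't| + 1 with hC
    have hC0 : 0 < C := by positivity
    have hyB : ∀ᶠ s in 𝓝 t, |y s - y t| ≤ C * |s - t| := by
      filter_upwards [hyO.def one_pos] with s hs
      simp only [Real.norm_eq_abs, smul_eq_mul, one_mul] at hs
      have h1 : |y s - y t| ≤ |y s - y t - (s - t) * y't| + |(s - t) * y't| := by
        calc |y s - y t| = |(y s - y t - (s - t) * y't) + (s - t) * y't| := by ring_nf
          _ ≤ _ := abs_add_le _ _
      rw [abs_mul] at h1
      calc |y s - y t| ≤ |s - t| + |s - t| * |y't| := by linarith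
        _ = C * |s - t| := by rw [hC]; ring
    obtain ⟨δ, hδ0, hδ⟩ := Metric.continuousAt_iff.mp hF.continuousAt (ε / C) (by positivity)
    have hev : ∀ᶠ s in 𝓝 t, |s - t| < δ ∧ C * |s - t| < δ := by
      have h1 : Tendsto (fun s : ℝ => |s - t|) (𝓝 t) (𝓝 0) := by
        have : Tendsto (fun s : ℝ => s - t) (𝓝 t) (𝓝 (t - t)) :=
          tendsto_id.sub tendsto_const_nhds
        rw [sub_self] at this
        simpa using this.abs
      have h2 : Tendsto (fun s : ℝ => C * |s - t|) (𝓝 t) (𝓝 (C * 0)) :=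
        tendsto_const_nhds.mul h1
      rw [mul_zero] at h2
      filter_upwards [h1.eventually_lt_const hδ0, h2.eventually_lt_const hδ0] with s h1 h2
      exact ⟨h1, h2⟩
    filter_upwards [hyB, hev] with s hsB ⟨hs1, hs2⟩
    have hbound : ∀ r ∈ Set.uIoc (y t) (y s), ‖F s r - c‖ ≤ ε / C := by
      intro r hr
      have h1 : |r - y t| ≤ |y s - y t| := abs_sub_le_of_uIoc hr
      have hdist : dist (s, r) (t, y t) < δ := by
        rw [Prod.dist_eq]
        apply max_lt
        · rw [Real.dist_eq]; exact hs1
        · rw [Real.dist_eq]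
          exact lt_of_le_of_lt (h1.trans hsB) hs2
      have := hδ hdist
      rw [Real.dist_eq] at this
      exact this.le
    have h2 := intervalIntegral.norm_integral_le_of_norm_le_const hbound
    calc ‖∫ r in y t..y s, (F s r - c)‖ ≤ ε / C * |y s - y t| := h2
      _ ≤ ε / C * (C * |s - t|) := by
          apply mul_le_mul_of_nonneg_left hsB (by positivity)
      _ = ε * |s - t| := by field_simp
      _ = ε * ‖s - t‖ := by rw [Real.norm_eq_abs]
  have hsum := term1.add term2
  refine hsum.congr' (Eventually.of_forall fun s => ?_) (Eventually.of_forall fun s => rfl)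
  have e1 : ∫ r in y t..y s, (F s r - c) = (∫ r in y t..y s, F s r) - (y s - y t) * c := by
    rw [intervalIntegral.integral_sub (hint s _ _) (intervalIntegrable_const),
      intervalIntegral.integral_const, smul_eq_mul]
  simp only [e1, intervalIntegral.integral_same, smul_eq_mul]
  ring

/-- Non-autonomous change of variables formula for a Lipschitz continuous function
`x : [a,b] → [c,d]` (Remark 1).  Here `x'` denotes the derivative of `x`, which
exists for almost every `t ∈ [a,b]`. -/
theorem nonautonomous_change_of_variables_lipschitz
    (a b c d : ℝ) (hab : a < b) (hcd : c ≤ d)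
    (f ft : ℝ → ℝ → ℝ)
    (hf : ContinuousOn (fun p : ℝ × ℝ => f p.1 p.2) (Set.Icc a b ×ˢ Set.Icc c d))
    (hft : ∀ t ∈ Set.Icc a b, ∀ r ∈ Set.Icc c d,
      HasDerivWithinAt (fun s => f s r) (ft t r) (Set.Icc a b) t)
    (hftc : ContinuousOn (fun p : ℝ × ℝ => ft p.1 p.2) (Set.Icc a b ×ˢ Set.Icc c d))
    (x x' : ℝ → ℝ)
    (hxlip : ∃ K, LipschitzOnWith K x (Set.Icc a b))
    (hxmem : ∀ t ∈ Set.Icc a b, x t ∈ Set.Icc c d)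
    (hx : ∀ᵐ t ∂volume, t ∈ Set.Ioo a b → HasDerivAt x (x' t) t) :
    ∫ t in a..b, f t (x t) * x' t =
      (∫ r in x a..x b, f b r) - ∫ t in a..b, (∫ r in x a..x t, ft t r) := by
  obtain ⟨K, hxK⟩ := hxlip
  obtain ⟨xe, hxe, hxeq⟩ := hxK.extend_real
  have hax : a ∈ Set.Icc a b := ⟨le_rfl, hab.le⟩
  have hbx : b ∈ Set.Icc a b := ⟨hab.le, le_rfl⟩
  -- projections onto the rectangle
  set π₁ : ℝ → ℝ := fun t => (Set.projIcc a b hab.le t : ℝ) with hπ₁def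
  set π₂ : ℝ → ℝ := fun r => (Set.projIcc c d hcd r : ℝ) with hπ₂def
  have hπ₁c : Continuous π₁ := continuous_subtype_val.comp continuous_projIcc
  have hπ₂c : Continuous π₂ := continuous_subtype_val.comp continuous_projIcc
  have hπ₁m : ∀ t, π₁ t ∈ Set.Icc a b := fun t => (Set.projIcc a b hab.le t).2
  have hπ₂m : ∀ r, π₂ r ∈ Set.Icc c d := fun r => (Set.projIcc c d hcd r).2
  have hπ₁id : ∀ t ∈ Set.Icc a b, π₁ t = t := fun t ht => by
    simp [hπ₁def, Set.projIcc_of_mem hab.le ht]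
  have hπ₂id : ∀ r ∈ Set.Icc c d, π₂ r = r := fun r hr => by
    simp [hπ₂def, Set.projIcc_of_mem hcd hr]
  set fe : ℝ → ℝ → ℝ := fun t r => f (π₁ t) (π₂ r) with hfedef
  set fte : ℝ → ℝ → ℝ := fun t r => ft (π₁ t) (π₂ r) with hftedef
  have feC : Continuous fun p : ℝ × ℝ => fe p.1 p.2 := by
    apply hf.comp_continuous ((hπ₁c.comp continuous_fst).prodMk (hπ₂c.comp continuous_snd))
    exact fun p => ⟨hπ₁m p.1, hπ₂m p.2⟩
  have fteC : Continuous fun p : ℝ × ℝ => fte p.1 p.2 := by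
    apply hftc.comp_continuous ((hπ₁c.comp continuous_fst).prodMk (hπ₂c.comp continuous_snd))
    exact fun p => ⟨hπ₁m p.1, hπ₂m p.2⟩
  have fe_eq : ∀ t ∈ Set.Icc a b, ∀ r ∈ Set.Icc c d, fe t r = f t r := fun t ht r hr => by
    simp only [hfedef]; simp only [hπ₁id t ht, hπ₂id r hr]
  have fte_eq : ∀ t ∈ Set.Icc a b, ∀ r ∈ Set.Icc c d, fte t r = ft t r := fun t ht r hr => by
    simp only [hftedef]; simp only [hπ₁id t ht, hπ₂id r hr]
  -- bounds
  obtain ⟨M, hM⟩ := (isCompact_Icc.prod isCompact_Icc).exists_bound_of_continuousOn hf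
  obtain ⟨M', hM'⟩ := (isCompact_Icc.prod isCompact_Icc).exists_bound_of_continuousOn hftc
  have hM0 : 0 ≤ M := le_trans (norm_nonneg _) (hM (a, c) ⟨hax, ⟨le_rfl, hcd⟩⟩)
  have hM'0 : 0 ≤ M' := le_trans (norm_nonneg _) (hM' (a, c) ⟨hax, ⟨le_rfl, hcd⟩⟩)
  have hfeM : ∀ t r, |fe t r| ≤ M := fun t r => hM (π₁ t, π₂ r) ⟨hπ₁m t, hπ₂m r⟩
  have hfteM : ∀ t r, |fte t r| ≤ M' := fun t r => hM' (π₁ t, π₂ r) ⟨hπ₁m t, hπ₂m r⟩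
  -- derivative of fe in first variable
  have hfeD : ∀ s ∈ Set.Ioo a b, ∀ r : ℝ, HasDerivAt (fun u => fe u r) (fte s r) s := by
    intro s hs r
    have h1 : HasDerivWithinAt (fun u => f u (π₂ r)) (ft s (π₂ r)) (Set.Icc a b) s :=
      hft s (Set.Ioo_subset_Icc_self hs) _ (hπ₂m r)
    have h2 : HasDerivAt (fun u => f u (π₂ r)) (ft s (π₂ r)) s :=
      h1.hasDerivAt (Icc_mem_nhds hs.1 hs.2)
    have h3 : fte s r = ft s (π₂ r) := by simp only [hftedef]; simp only [hπ₁id s (Set.Ioo_subset_Icc_self hs)]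
    rw [h3]
    refine h2.congr_of_eventuallyEq ?_
    filter_upwards [Ioo_mem_nhds hs.1 hs.2] with u hu
    simp only [hfedef]; simp only [hπ₁id u (Set.Ioo_subset_Icc_self hu)]
  -- Lipschitz property of fe in first variable
  have hfelip : ∀ r : ℝ, ∀ s ∈ Set.Icc a b, ∀ t ∈ Set.Icc a b,
      |fe t r - fe s r| ≤ M' * |t - s| := by
    intro r s hs t ht
    have h1 : ∀ u ∈ Set.Icc a b, HasDerivWithinAt (fun v => f v (π₂ r)) (ft u (π₂ r))
        (Set.Icc a b) u := fun u hu => hft u hu _ (hπ₂m r)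
    have h2 : ∀ u ∈ Set.Icc a b, ‖ft u (π₂ r)‖ ≤ M' := fun u hu => hM' (u, π₂ r) ⟨hu, hπ₂m r⟩
    have := (convex_Icc a b).norm_image_sub_le_of_norm_hasDerivWithin_le h1 h2 hs ht
    simp only [hfedef]
    simp only [hπ₁id t ht, hπ₁id s hs]
    simpa [Real.norm_eq_abs] using this
  -- x is Lipschitz via the extension
  have hxeq' : ∀ t ∈ Set.Icc a b, xe t = x t := fun t ht => (hxeq ht).symm
  -- main auxiliary functions
  set G : ℝ → ℝ := fun s => ∫ r in x a..xe s, fe s r with hGdef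
  set p2e : ℝ → ℝ := fun t => ∫ r in x a..xe t, fte t r with hp2edef
  set p1 : ℝ → ℝ := fun t => f t (x t) * x' t with hp1def
  set h : ℝ → ℝ := fun t => p1 t + p2e t with hhdef
  have hGc : Continuous G :=
    intervalIntegral.continuous_parametric_intervalIntegral_of_continuous
      (μ := volume) (f := fe) (by exact feC) hxe.continuous
  have hp2ec : Continuous p2e :=
    intervalIntegral.continuous_parametric_intervalIntegral_of_continuous
      (μ := volume) (f := fte) (by exact fteC) hxe.continuous
  -- a.e. derivative of G
  have hGderiv : ∀ᵐ t ∂volume, t ∈ Set.Ioo a b → HasDerivAt G (h t) t := by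
    filter_upwards [hx] with t hxt hti
    have htIcc : t ∈ Set.Icc a b := Set.Ioo_subset_Icc_self hti
    have hxed : HasDerivAt xe (x' t) t := by
      refine (hxt hti).congr_of_eventuallyEq ?_
      filter_upwards [Icc_mem_nhds hti.1 hti.2] with u hu
      exact hxeq' u hu
    -- part A : fixed endpoint, varying parameter
    set ε : ℝ := min (t - a) (b - t) with hεdef
    have hε : 0 < ε := lt_min (by linarith [hti.1]) (by linarith [hti.2])
    have hball : Metric.ball t ε ⊆ Set.Ioo a b := by
      intro u hu
      rw [Metric.mem_ball, Real.dist_eq, abs_lt] at hu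
      constructor
      · have := hu.1; have := min_le_left (t - a) (b - t); linarith
      · have := hu.2; have := min_le_right (t - a) (b - t); linarith
    have hA := (intervalIntegral.hasDerivAt_integral_of_dominated_loc_of_deriv_le
      (F := fun s r => fe s r) (F' := fte) (a := x a) (b := xe t) (x₀ := t)
      (bound := fun _ => M') (μ := volume) (Metric.ball_mem_nhds t hε)
      (Eventually.of_forall fun s =>
        ((feC.comp (continuous_const.prodMk continuous_id)).aestronglyMeasurable))
      ((feC.comp (continuous_const.prodMk continuous_id)).intervalIntegrable _ _)
      ((fteC.comp (continuous_const.prodMk continuous_id)).aestronglyMeasurable)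
      (Eventually.of_forall fun r _ s _ => by
        simpa [Real.norm_eq_abs] using hfteM s r)
      (intervalIntegrable_const)
      (Eventually.of_forall fun r _ s hs => hfeD s (hball hs) r)).2
    -- part B : moving endpoint
    have hB' := hasDerivAt_moving_endpoint feC hxed
    -- splitting
    have hsplit : ∀ s, G s = (∫ r in x a..xe t, fe s r) + ∫ r in xe t..xe s, fe s r := by
      intro s
      simp only [hGdef]
      exact (intervalIntegral.integral_add_adjacent_intervals
        ((feC.comp (continuous_const.prodMk continuous_id)).intervalIntegrable _ _)
        ((feC.comp (continuous_const.prodMk continuous_id)).intervalIntegrable _ _)).symm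
    have heq : G = fun s => (∫ r in x a..xe t, fe s r) + ∫ r in xe t..xe s, fe s r :=
      funext hsplit
    rw [heq]
    have hsum := hA.add hB'
    have hval : (∫ r in x a..xe t, fte t r) + fe t (xe t) * x' t = h t := by
      simp only [hhdef, hp1def, hp2edef]
      have h1 : fe t (xe t) = f t (x t) := by
        rw [hxeq' t htIcc]
        exact fe_eq t htIcc (x t) (hxmem t htIcc)
      rw [h1]; ring
    rw [← hval]
    exact hsum
  -- Lipschitz property of G on Icc a b
  set L : ℝ≥0 := Real.toNNReal (M * K + M' * (d - c)) with hLdef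
  have hGlip : LipschitzOnWith L G (Set.Icc a b) := by
    rw [lipschitzOnWith_iff_dist_le_mul]
    intro t ht s hs
    rw [Real.dist_eq, Real.dist_eq]
    have hint : ∀ u v w : ℝ, IntervalIntegrable (fe u) volume v w := fun u v w =>
      (feC.comp (continuous_const.prodMk continuous_id)).intervalIntegrable v w
    have e1 : G t - G s = (∫ r in xe s..xe t, fe t r)
        + ∫ r in x a..xe s, (fe t r - fe s r) := by
      simp only [hGdef]
      rw [intervalIntegral.integral_sub (hint t _ _) (hint s _ _)]
      have := intervalIntegral.integral_add_adjacent_intervals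
        (hint t (x a) (xe s)) (hint t (xe s) (xe t))
      linarith
    have hxdist : |xe t - xe s| ≤ (K : ℝ) * |t - s| := by
      have := hxe.dist_le_mul t s
      rw [Real.dist_eq, Real.dist_eq] at this
      exact this
    have b1 : |∫ r in xe s..xe t, fe t r| ≤ M * ((K : ℝ) * |t - s|) := by
      have h1 : ∀ r ∈ Set.uIoc (xe s) (xe t), ‖fe t r‖ ≤ M := fun r _ => hfeM t r
      have h2 := intervalIntegral.norm_integral_le_of_norm_le_const h1
      rw [Real.norm_eq_abs] at h2
      exact h2.trans (mul_le_mul_of_nonneg_left hxdist hM0)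
    have b2 : |∫ r in x a..xe s, (fe t r - fe s r)| ≤ M' * |t - s| * (d - c) := by
      have h1 : ∀ r ∈ Set.uIoc (x a) (xe s), ‖fe t r - fe s r‖ ≤ M' * |t - s| := fun r _ =>
        hfelip r s hs t ht
      have h2 := intervalIntegral.norm_integral_le_of_norm_le_const h1
      rw [Real.norm_eq_abs] at h2
      refine h2.trans (mul_le_mul_of_nonneg_left ?_ (by positivity))
      rw [hxeq' s hs]
      have hxs := hxmem s hs
      have hxa := hxmem a hax
      rw [abs_le]
      constructor <;> [linarith [hxs.1, hxa.2]; linarith [hxs.2, hxa.1]]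
    have hLge : M * K + M' * (d - c) ≤ (L : ℝ) := Real.le_coe_toNNReal _
    calc |G t - G s| ≤ |∫ r in xe s..xe t, fe t r|
          + |∫ r in x a..xe s, (fe t r - fe s r)| := by rw [e1]; exact abs_add_le _ _
      _ ≤ M * ((K : ℝ) * |t - s|) + M' * |t - s| * (d - c) := add_le_add b1 b2
      _ = (M * K + M' * (d - c)) * |t - s| := by ring
      _ ≤ (L : ℝ) * |t - s| := mul_le_mul_of_nonneg_right hLge (abs_nonneg _)
  -- apply the FTC
  have key : ∫ t in a..b, h t = G b - G a := ftc_lipschitzOnWith hab hGlip hGderiv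
  have hGa : G a = 0 := by simp only [hGdef]; simp [hxeq' a hax]
  have hGb : G b = ∫ r in x a..x b, f b r := by
    simp only [hGdef]
    simp only [hxeq' b hbx]
    apply intervalIntegral.integral_congr
    intro r hr
    have hr' : r ∈ Set.Icc c d := Set.uIcc_subset_Icc (hxmem a hax) (hxmem b hbx) hr
    exact fe_eq b hbx r hr'
  -- integrability of the two pieces
  set μ := volume.restrict (Set.Ioc a b) with hμdef
  have hfin : IsFiniteMeasure μ := by
    constructor
    rw [hμdef, Measure.restrict_apply_univ]
    exact measure_Ioc_lt_top
  have hb_ne : ∀ᵐ s ∂μ, s ≠ b := by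
    refine ae_restrict_of_ae ?_
    refine ae_iff.mpr ?_
    simpa [not_not] using measure_singleton (α := ℝ) b
  have ae_Ioo : ∀ᵐ s ∂μ, s ∈ Set.Ioo a b := by
    filter_upwards [ae_restrict_mem measurableSet_Ioc, hb_ne] with s hs hsb
    exact ⟨hs.1, lt_of_le_of_ne hs.2 hsb⟩
  have hxed_ae : ∀ᵐ t ∂μ, HasDerivAt xe (x' t) t := by
    filter_upwards [ae_Ioo, ae_restrict_of_ae hx] with t ht hxt
    refine (hxt ht).congr_of_eventuallyEq ?_
    filter_upwards [Icc_mem_nhds ht.1 ht.2] with u hu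
    exact hxeq' u hu
  have hp1int : IntervalIntegrable p1 volume a b := by
    rw [intervalIntegrable_iff, uIoc_of_le hab.le]
    have hmeas : AEStronglyMeasurable p1 μ := by
      have h1 : p1 =ᵐ[μ] fun t => fe t (xe t) * deriv xe t := by
        filter_upwards [ae_Ioo, hxed_ae] with t ht hd
        have htIcc : t ∈ Set.Icc a b := Set.Ioo_subset_Icc_self ht
        simp only [hp1def]
        have e1 : f t (x t) = fe t (xe t) := by
          rw [hxeq' t htIcc]; exact (fe_eq t htIcc (x t) (hxmem t htIcc)).symm
        show f t (x t) * x' t = fe t (xe t) * deriv xe t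
        rw [e1, hd.deriv]
      refine AEStronglyMeasurable.congr ?_ h1.symm
      exact ((feC.comp (continuous_id.prodMk hxe.continuous)).aestronglyMeasurable).mul
        (measurable_deriv xe).aestronglyMeasurable
    have hbound : ∀ᵐ t ∂μ, ‖p1 t‖ ≤ M * (K : ℝ) := by
      filter_upwards [ae_Ioo, hxed_ae] with t ht hd
      have htIcc : t ∈ Set.Icc a b := Set.Ioo_subset_Icc_self ht
      have h1 : |f t (x t)| ≤ M := hM (t, x t) ⟨htIcc, hxmem t htIcc⟩
      have h2 : |x' t| ≤ (K : ℝ) := abs_deriv_le_of_lipschitz hxe hd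
      simp only [hp1def]
      rw [Real.norm_eq_abs, abs_mul]
      exact mul_le_mul h1 h2 (abs_nonneg _) hM0
    exact Integrable.mono' (integrable_const (M * (K : ℝ))) hmeas hbound
  have hp2int : IntervalIntegrable p2e volume a b := hp2ec.intervalIntegrable a b
  have hsplit2 : ∫ t in a..b, h t = (∫ t in a..b, p1 t) + ∫ t in a..b, p2e t := by
    simp only [hhdef]
    exact intervalIntegral.integral_add hp1int hp2int
  have hp2eq : ∫ t in a..b, p2e t = ∫ t in a..b, (∫ r in x a..x t, ft t r) := by
    apply intervalIntegral.integral_congr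
    intro t ht
    rw [Set.uIcc_of_le hab.le] at ht
    simp only [hp2edef]
    simp only [hxeq' t ht]
    apply intervalIntegral.integral_congr
    intro r hr
    have hr' : r ∈ Set.Icc c d := Set.uIcc_subset_Icc (hxmem a hax) (hxmem t ht) hr
    exact fte_eq t ht r hr'
  have : (∫ t in a..b, p1 t) = (∫ r in x a..x b, f b r) - ∫ t in a..b, (∫ r in x a..x t, ft t r) := by
    rw [← hp2eq]
    have := key
    rw [hsplit2, hGa, hGb] at this
    linarith
  exact this
end

section
/- Let a, b ∈ ℝ with a < b, and let φ, ψ ∈ C¹([a,b]) satisfy φ(t) ≤ ψ(t) for all t ∈ [a,b]. Let D = {(t,x) ∈ ℝ² : t ∈ [a,b], φ(t) ≤ x ≤ ψ(t)}, assume D ⊂ [a,b] × [c,d], and let f₁, f₂ : [a,b] × [c,d] → ℝ be such that ∂f₁/∂x and ∂f₂/∂t exist and are continuous on [a,b] × [c,d]. Then the line integral of the vector field F = (f₁, f₂) along the positively oriented boundary Γ of D equals the double integral over D of (∂f₂/∂t − ∂f₁/∂x); equivalently, [∫_a^b f₁(t,φ(t)) dt + ∫_a^b f₂(t,φ(t))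 φ'(t) dt] + ∫_{φ(b)}^{ψ(b)} f₂(b,x) dx − [∫_a^b f₁(t,ψ(t)) dt + ∫_a^b f₂(t,ψ(t)) ψ'(t) dt] − ∫_{φ(a)}^{ψ(a)} f₂(a,x) dx = ∫_a^b ( ∫_{φ(t)}^{ψ(t)} ( ∂f₂/∂t (t,x) − ∂f₁/∂x (t,x) ) dx ) dt. -/
open MeasureTheory Set intervalIntegral

open Filter Topology in
lemma green_key
    {f f' : ℝ → ℝ → ℝ}
    (hf : Continuous fun p : ℝ × ℝ => f p.1 p.2)
    (hf' : Continuous fun p : ℝ × ℝ => f' p.1 p.2)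
    {a b c d t₀ : ℝ} (ht₀ : t₀ ∈ Set.Ioo a b) (hcd : c ≤ d)
    (hdiff : ∀ t ∈ Set.Ioo a b, ∀ x ∈ Set.Icc c d,
      HasDerivAt (fun s => f s x) (f' t x) t)
    {u : ℝ → ℝ} {u' : ℝ} (hu : HasDerivAt u u' t₀)
    (hmap : ∀ t ∈ Set.Ioo a b, u t ∈ Set.Icc c d) :
    HasDerivAt (fun t => ∫ x in c..u t, f t x)
      ((∫ x in c..u t₀, f' t₀ x) + f t₀ (u t₀) * u') t₀ := by
  have hfx : ∀ t, Continuous (fun x => f t x) := fun t => hf.comp (Continuous.prodMk_right t)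
  have hf'x : ∀ t, Continuous (fun x => f' t x) := fun t => hf'.comp (Continuous.prodMk_right t)
  have hcmem : c ∈ Set.Icc c d := ⟨le_rfl, hcd⟩
  have hsub : ∀ {y z : ℝ}, y ∈ Set.Icc c d → z ∈ Set.Icc c d → Set.uIoc y z ⊆ Set.Icc c d :=
    fun hy hz => Set.uIoc_subset_uIcc.trans (Set.uIcc_subset_Icc hy hz)
  set ε : ℝ := min (t₀ - a) (b - t₀) with hε
  have εpos : 0 < ε := lt_min (sub_pos.2 ht₀.1) (sub_pos.2 ht₀.2)
  have hball : Metric.ball t₀ ε ⊆ Set.Ioo a b := by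
    intro t ht
    rw [Metric.mem_ball, Real.dist_eq, abs_lt] at ht
    constructor
    · have := ht.1
      have h2 : ε ≤ t₀ - a := min_le_left _ _
      linarith
    · have := ht.2
      have h2 : ε ≤ b - t₀ := min_le_right _ _
      linarith
  -- bound for f' on the compact rectangle
  obtain ⟨C, hC⟩ := ((isCompact_Icc (a := a) (b := b)).prod
    (isCompact_Icc (a := c) (b := d))).exists_bound_of_continuousOn hf'.continuousOn
  -- derivative of the fixed-endpoint part
  have h₁ : HasDerivAt (fun t => ∫ x in c..u t₀, f t x) (∫ x in c..u t₀, f' t₀ x) t₀ := by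
    refine (intervalIntegral.hasDerivAt_integral_of_dominated_loc_of_deriv_le
      (F := fun t x => f t x) (F' := fun t x => f' t x) (bound := fun _ => C)
      (Metric.ball_mem_nhds t₀ εpos) (Eventually.of_forall fun t => (hfx t).aestronglyMeasurable)
      ((hfx t₀).intervalIntegrable _ _) (hf'x t₀).aestronglyMeasurable
      (MeasureTheory.ae_of_all _ fun x hx t ht => ?_)
      intervalIntegrable_const
      (MeasureTheory.ae_of_all _ fun x hx t ht => hdiff t (hball ht) x
        (hsub hcmem (hmap t₀ ht₀) hx))).2
    exact hC (t, x) ⟨Set.Ioo_subset_Icc_self (hball ht), hsub hcmem (hmap t₀ ht₀) hx⟩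
  -- derivative of the moving-endpoint part (frozen parameter)
  have hG : HasDerivAt (fun y => ∫ x in u t₀..y, f t₀ x) (f t₀ (u t₀)) (u t₀) :=
    intervalIntegral.integral_hasDerivAt_right ((hfx t₀).intervalIntegrable _ _)
      ((hfx t₀).stronglyMeasurableAtFilter _ _) (hfx t₀).continuousAt
  have h₂ : HasDerivAt (fun t => ∫ x in u t₀..u t, f t₀ x) (f t₀ (u t₀) * u') t₀ := by
    have := HasDerivAt.comp t₀ hG hu
    exact this
  -- the remainder term has derivative zero
  have h₃ : HasDerivAt (fun t => ∫ x in u t₀..u t, (f t x - f t₀ x)) 0 t₀ := by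
    rw [hasDerivAt_iff_tendsto_slope]
    rw [NormedAddCommGroup.tendsto_nhds_zero]
    intro ε' hε'
    set L : ℝ := |u'| + 1 with hL
    have hLpos : 0 < L := by positivity
    have hη : 0 < ε' / (2 * L) := by positivity
    obtain ⟨v, hv, hvf⟩ := IsCompact.mem_uniformity_of_prod
      (isCompact_Icc (a := c) (b := d)) hf.continuousOn (Set.mem_univ t₀)
      (Metric.dist_mem_uniformity hη)
    rw [nhdsWithin_univ] at hv
    have h1 : ∀ᶠ t in 𝓝[≠] t₀, t ∈ v := mem_nhdsWithin_of_mem_nhds hv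
    have h2 : ∀ᶠ t in 𝓝[≠] t₀, t ∈ Set.Ioo a b :=
      mem_nhdsWithin_of_mem_nhds (Ioo_mem_nhds ht₀.1 ht₀.2)
    have hslope := hasDerivAt_iff_tendsto_slope.1 hu
    have h3 : ∀ᶠ t in 𝓝[≠] t₀, |slope u t₀ t| < L := by
      filter_upwards [hslope (Metric.ball_mem_nhds u' one_pos)] with t ht
      simp only [Set.mem_preimage, Metric.mem_ball, Real.dist_eq] at ht
      calc |slope u t₀ t| ≤ |slope u t₀ t - u'| + |u'| := by
            have := abs_sub_abs_le_abs_sub (slope u t₀ t) u'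
            linarith [abs_add_le (slope u t₀ t - u') u']
        _ < L := by rw [hL]; linarith
    filter_upwards [h1, h2, h3, self_mem_nhdsWithin] with t htv htab hts htne
    have htne' : t ≠ t₀ := htne
    have habs : (0:ℝ) < |t - t₀| := abs_pos.2 (sub_ne_zero.2 htne')
    have hRt : |∫ x in u t₀..u t, (f t x - f t₀ x)| ≤ ε' / (2 * L) * |u t - u t₀| := by
      have := intervalIntegral.norm_integral_le_of_norm_le_const
        (C := ε' / (2 * L)) (f := fun x => f t x - f t₀ x) (a := u t₀) (b := u t) ?_
      · simpa [Real.norm_eq_abs] using this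
      · intro x hx
        have hxm : x ∈ Set.Icc c d := hsub (hmap t₀ ht₀) (hmap t htab) hx
        have := hvf t htv x hxm
        simp only [Set.mem_setOf_eq, Real.dist_eq] at this
        simpa [Real.norm_eq_abs] using this.le
    have hut : |u t - u t₀| ≤ L * |t - t₀| := by
      have : |slope u t₀ t| * |t - t₀| = |u t - u t₀| := by
        rw [slope_def_field, ← abs_mul, div_mul_cancel₀ _ (sub_ne_zero.2 htne')]
      nlinarith [hts.le, habs.le, abs_nonneg (slope u t₀ t)]
    have hslopeR : ‖slope (fun t => ∫ x in u t₀..u t, (f t x - f t₀ x)) t₀ t‖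
        = |∫ x in u t₀..u t, (f t x - f t₀ x)| / |t - t₀| := by
      rw [slope_def_field, Real.norm_eq_abs, abs_div]
      congr 2
      simp [intervalIntegral.integral_same]
    rw [hslopeR]
    have : |∫ x in u t₀..u t, (f t x - f t₀ x)| / |t - t₀| ≤ ε' / (2 * L) * L := by
      rw [div_le_iff₀ habs]
      calc |∫ x in u t₀..u t, (f t x - f t₀ x)| ≤ ε' / (2 * L) * (L * |t - t₀|) := by
            refine hRt.trans ?_
            exact mul_le_mul_of_nonneg_left hut hη.le
        _ = ε' / (2 * L) * L * |t - t₀| := by ring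
    have hfin : ε' / (2 * L) * L = ε' / 2 := by field_simp
    rw [hfin] at this
    linarith
  -- assemble
  have heq : (fun t => ∫ x in c..u t, f t x)
      = fun t => (∫ x in c..u t₀, f t x)
        + ((∫ x in u t₀..u t, f t₀ x) + ∫ x in u t₀..u t, (f t x - f t₀ x)) := by
    funext t
    have e1 : (∫ x in u t₀..u t, (f t x - f t₀ x))
        = (∫ x in u t₀..u t, f t x) - ∫ x in u t₀..u t, f t₀ x :=
      intervalIntegral.integral_sub ((hfx t).intervalIntegrable _ _)
        ((hfx t₀).intervalIntegrable _ _)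
    have e2 : (∫ x in c..u t₀, f t x) + (∫ x in u t₀..u t, f t x) = ∫ x in c..u t, f t x :=
      intervalIntegral.integral_add_adjacent_intervals ((hfx t).intervalIntegrable _ _)
        ((hfx t).intervalIntegrable _ _)
    linarith
  rw [heq]
  have := h₁.add (h₂.add h₃)
  refine this.congr_deriv ?_
  ring

set_option maxHeartbeats 2000000 in
lemma green_aux
    (a b c d : ℝ) (hab : a < b)
    (φ ψ φ' ψ' : ℝ → ℝ)
    (hφ : ∀ t ∈ Set.Icc a b, HasDerivWithinAt φ (φ' t) (Set.Icc a b) t)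
    (hφ'c : ContinuousOn φ' (Set.Icc a b))
    (hψ : ∀ t ∈ Set.Icc a b, HasDerivWithinAt ψ (ψ' t) (Set.Icc a b) t)
    (hψ'c : ContinuousOn ψ' (Set.Icc a b))
    (hle : ∀ t ∈ Set.Icc a b, φ t ≤ ψ t)
    (hD : ∀ t ∈ Set.Icc a b, c ≤ φ t ∧ ψ t ≤ d)
    (f₁ f₂ f₁x f₂t : ℝ → ℝ → ℝ)
    (hf₁ : Continuous (fun p : ℝ × ℝ => f₁ p.1 p.2))
    (hf₂ : Continuous (fun p : ℝ × ℝ => f₂ p.1 p.2))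
    (hf₁x : ∀ t ∈ Set.Icc a b, ∀ x ∈ Set.Icc c d,
      HasDerivWithinAt (fun y => f₁ t y) (f₁x t x) (Set.Icc c d) x)
    (hf₁xc : Continuous (fun p : ℝ × ℝ => f₁x p.1 p.2))
    (hf₂t : ∀ t ∈ Set.Icc a b, ∀ x ∈ Set.Icc c d,
      HasDerivWithinAt (fun s => f₂ s x) (f₂t t x) (Set.Icc a b) t)
    (hf₂tc : Continuous (fun p : ℝ × ℝ => f₂t p.1 p.2)) :
    ((∫ t in a..b, f₁ t (φ t)) + (∫ t in a..b, f₂ t (φ t) * φ' t))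
      + (∫ x in φ b..ψ b, f₂ b x)
      - ((∫ t in a..b, f₁ t (ψ t)) + (∫ t in a..b, f₂ t (ψ t) * ψ' t))
      - (∫ x in φ a..ψ a, f₂ a x)
    = ∫ t in a..b, (∫ x in φ t..ψ t, (f₂t t x - f₁x t x)) := by
  have hIab : Set.uIcc a b = Set.Icc a b := Set.uIcc_of_le hab.le
  have hamem : a ∈ Set.Icc a b := ⟨le_rfl, hab.le⟩
  have hbmem : b ∈ Set.Icc a b := ⟨hab.le, le_rfl⟩
  have hφc : ContinuousOn φ (Set.Icc a b) := fun t ht => (hφ t ht).continuousWithinAt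
  have hψc : ContinuousOn ψ (Set.Icc a b) := fun t ht => (hψ t ht).continuousWithinAt
  have hφm : ∀ t ∈ Set.Icc a b, φ t ∈ Set.Icc c d :=
    fun t ht => ⟨(hD t ht).1, (hle t ht).trans (hD t ht).2⟩
  have hψm : ∀ t ∈ Set.Icc a b, ψ t ∈ Set.Icc c d :=
    fun t ht => ⟨(hD t ht).1.trans (hle t ht), (hD t ht).2⟩
  have hcd : c ≤ d := (hφm a hamem).1.trans (hφm a hamem).2
  -- continuity of composed boundary integrands
  have hII : ∀ {h : ℝ → ℝ}, ContinuousOn h (Set.Icc a b) → IntervalIntegrable h volume a b :=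
    fun hh => (hh.mono hIab.subset).intervalIntegrable
  have hcomp : ∀ (g : ℝ → ℝ → ℝ), Continuous (fun p : ℝ × ℝ => g p.1 p.2) →
      ∀ (v : ℝ → ℝ), ContinuousOn v (Set.Icc a b) →
      ContinuousOn (fun t => g t (v t)) (Set.Icc a b) :=
    fun g hg v hv => hg.comp_continuousOn (continuousOn_id.prodMk hv)
  have i_f₁φ : IntervalIntegrable (fun t => f₁ t (φ t)) volume a b :=
    hII (hcomp f₁ hf₁ φ hφc)
  have i_f₁ψ : IntervalIntegrable (fun t => f₁ t (ψ t)) volume a b :=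
    hII (hcomp f₁ hf₁ ψ hψc)
  have i_f₂φ : IntervalIntegrable (fun t => f₂ t (φ t) * φ' t) volume a b :=
    hII ((hcomp f₂ hf₂ φ hφc).mul hφ'c)
  have i_f₂ψ : IntervalIntegrable (fun t => f₂ t (ψ t) * ψ' t) volume a b :=
    hII ((hcomp f₂ hf₂ ψ hψc).mul hψ'c)
  -- Part 1 : FTC in the x variable
  have E1 : ∀ t ∈ Set.Icc a b,
      (∫ x in φ t..ψ t, f₁x t x) = f₁ t (ψ t) - f₁ t (φ t) := by
    intro t ht
    apply intervalIntegral.integral_eq_sub_of_hasDeriv_right_of_le (hle t ht)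
    · exact (hf₁.comp (Continuous.prodMk_right t)).continuousOn
    · intro x hx
      have hx' : x ∈ Set.Icc c d := ⟨(hφm t ht).1.trans hx.1.le, hx.2.le.trans (hψm t ht).2⟩
      exact ((hf₁x t ht x hx').hasDerivAt (Icc_mem_nhds
        ((hφm t ht).1.trans_lt hx.1) (hx.2.trans_le (hψm t ht).2))).hasDerivWithinAt
    · exact (hf₁xc.comp (Continuous.prodMk_right t)).intervalIntegrable _ _
  -- Part 2 : Leibniz rule + FTC in the t variable
  have Pcont : Continuous fun p : ℝ × ℝ => ∫ x in c..p.2, f₂ p.1 x :=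
    intervalIntegral.continuous_parametric_primitive_of_continuous hf₂
  have Qcont : Continuous fun p : ℝ × ℝ => ∫ x in c..p.2, f₂t p.1 x :=
    intervalIntegral.continuous_parametric_primitive_of_continuous hf₂tc
  have Rcont : Continuous fun p : ℝ × ℝ => ∫ x in c..p.2, f₁x p.1 x :=
    intervalIntegral.continuous_parametric_primitive_of_continuous hf₁xc
  set g : ℝ → ℝ := fun t => (∫ x in c..ψ t, f₂ t x) - (∫ x in c..φ t, f₂ t x) with hgdef
  set w : ℝ → ℝ := fun t => ((∫ x in c..ψ t, f₂t t x) - (∫ x in c..φ t, f₂t t x))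
      + (f₂ t (ψ t) * ψ' t - f₂ t (φ t) * φ' t) with hwdef
  have hgeq : ∀ t, g t = ∫ x in φ t..ψ t, f₂ t x := fun t =>
    intervalIntegral.integral_interval_sub_left
      ((hf₂.comp (Continuous.prodMk_right t)).intervalIntegrable _ _)
      ((hf₂.comp (Continuous.prodMk_right t)).intervalIntegrable _ _)
  have hI1eq : ∀ t, (∫ x in c..ψ t, f₂t t x) - (∫ x in c..φ t, f₂t t x)
      = ∫ x in φ t..ψ t, f₂t t x := fun t =>
    intervalIntegral.integral_interval_sub_left
      ((hf₂tc.comp (Continuous.prodMk_right t)).intervalIntegrable _ _)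
      ((hf₂tc.comp (Continuous.prodMk_right t)).intervalIntegrable _ _)
  have hI2eq : ∀ t, (∫ x in c..ψ t, f₁x t x) - (∫ x in c..φ t, f₁x t x)
      = ∫ x in φ t..ψ t, f₁x t x := fun t =>
    intervalIntegral.integral_interval_sub_left
      ((hf₁xc.comp (Continuous.prodMk_right t)).intervalIntegrable _ _)
      ((hf₁xc.comp (Continuous.prodMk_right t)).intervalIntegrable _ _)
  have hmk : ∀ (v : ℝ → ℝ), ContinuousOn v (Set.Icc a b) →
      ContinuousOn (fun t : ℝ => (t, v t)) (Set.Icc a b) :=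
    fun v hv => continuousOn_id.prodMk hv
  have hPψ := Pcont.comp_continuousOn (hmk ψ hψc)
  have hPφ := Pcont.comp_continuousOn (hmk φ hφc)
  have hQψ := Qcont.comp_continuousOn (hmk ψ hψc)
  have hQφ := Qcont.comp_continuousOn (hmk φ hφc)
  have hRψ := Rcont.comp_continuousOn (hmk ψ hψc)
  have hRφ := Rcont.comp_continuousOn (hmk φ hφc)
  have hgc : ContinuousOn g (Set.Icc a b) := hPψ.sub hPφ
  have hwc : ContinuousOn w (Set.Icc a b) :=
    (hQψ.sub hQφ).add
      (((hcomp f₂ hf₂ ψ hψc).mul hψ'c).sub ((hcomp f₂ hf₂ φ hφc).mul hφ'c))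
  have hgw : ∀ t ∈ Set.Ioo a b, HasDerivWithinAt g (w t) (Set.Ioi t) t := by
    intro t ht
    have htmem := Set.Ioo_subset_Icc_self ht
    have hdiff2 : ∀ s ∈ Set.Ioo a b, ∀ x ∈ Set.Icc c d,
        HasDerivAt (fun r => f₂ r x) (f₂t s x) s := fun s hs x hx =>
      (hf₂t s (Set.Ioo_subset_Icc_self hs) x hx).hasDerivAt (Icc_mem_nhds hs.1 hs.2)
    have hψd : HasDerivAt ψ (ψ' t) t := (hψ t htmem).hasDerivAt (Icc_mem_nhds ht.1 ht.2)
    have hφd : HasDerivAt φ (φ' t) t := (hφ t htmem).hasDerivAt (Icc_mem_nhds ht.1 ht.2)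
    have H1 := green_key hf₂ hf₂tc ht hcd hdiff2 hψd
      (fun s hs => hψm s (Set.Ioo_subset_Icc_self hs))
    have H2 := green_key hf₂ hf₂tc ht hcd hdiff2 hφd
      (fun s hs => hφm s (Set.Ioo_subset_Icc_self hs))
    have Hsub := H1.sub H2
    have : HasDerivAt g (w t) t := by
      refine Hsub.congr_deriv ?_
      simp only [hwdef]
      ring
    exact this.hasDerivWithinAt
  have hwint : IntervalIntegrable w volume a b := hII hwc
  have FTC2 : ∫ t in a..b, w t = g b - g a :=
    intervalIntegral.integral_eq_sub_of_hasDeriv_right_of_le hab.le hgc hgw hwint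
  -- integrability of the inner integrals as functions of t
  have hInner1c : ContinuousOn (fun t => ∫ x in φ t..ψ t, f₂t t x) (Set.Icc a b) := by
    refine (hQψ.sub hQφ).congr ?_
    intro t ht
    exact (hI1eq t).symm
  have hInner2c : ContinuousOn (fun t => ∫ x in φ t..ψ t, f₁x t x) (Set.Icc a b) := by
    refine (hRψ.sub hRφ).congr ?_
    intro t ht
    exact (hI2eq t).symm
  have hInner1 : IntervalIntegrable (fun t => ∫ x in φ t..ψ t, f₂t t x) volume a b :=
    hII hInner1c
  have hInner2 : IntervalIntegrable (fun t => ∫ x in φ t..ψ t, f₁x t x) volume a b :=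
    hII hInner2c
  -- expand ∫ w
  have hwsplit : (∫ t in a..b, w t)
      = (∫ t in a..b, (∫ x in φ t..ψ t, f₂t t x))
        + ((∫ t in a..b, f₂ t (ψ t) * ψ' t) - ∫ t in a..b, f₂ t (φ t) * φ' t) := by
    have e : (∫ t in a..b, w t) = ∫ t in a..b,
        ((∫ x in φ t..ψ t, f₂t t x) + (f₂ t (ψ t) * ψ' t - f₂ t (φ t) * φ' t)) := by
      apply intervalIntegral.integral_congr
      intro t ht
      simp only [hwdef]
      rw [hI1eq t]
    rw [e, intervalIntegral.integral_add hInner1 (i_f₂ψ.sub i_f₂φ),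
      intervalIntegral.integral_sub i_f₂ψ i_f₂φ]
  -- the f₁ part
  have hI2 : (∫ t in a..b, (∫ x in φ t..ψ t, f₁x t x))
      = (∫ t in a..b, f₁ t (ψ t)) - ∫ t in a..b, f₁ t (φ t) := by
    rw [intervalIntegral.integral_congr (g := fun t => f₁ t (ψ t) - f₁ t (φ t))
      (fun t ht => E1 t (hIab ▸ ht))]
    exact intervalIntegral.integral_sub i_f₁ψ i_f₁φ
  -- split the RHS
  have hRHS : (∫ t in a..b, (∫ x in φ t..ψ t, (f₂t t x - f₁x t x)))
      = (∫ t in a..b, (∫ x in φ t..ψ t, f₂t t x))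
        - ∫ t in a..b, (∫ x in φ t..ψ t, f₁x t x) := by
    have e : Set.EqOn (fun t => ∫ x in φ t..ψ t, (f₂t t x - f₁x t x))
        (fun t => (∫ x in φ t..ψ t, f₂t t x) - (∫ x in φ t..ψ t, f₁x t x))
        (Set.uIcc a b) := by
      intro t ht
      exact intervalIntegral.integral_sub
        ((hf₂tc.comp (Continuous.prodMk_right t)).intervalIntegrable _ _)
        ((hf₁xc.comp (Continuous.prodMk_right t)).intervalIntegrable _ _)
    rw [intervalIntegral.integral_congr e, intervalIntegral.integral_sub hInner1 hInner2]
  have hgb : g b = ∫ x in φ b..ψ b, f₂ b x := hgeq b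
  have hga : g a = ∫ x in φ a..ψ a, f₂ a x := hgeq a
  rw [hRHS, ← hgb, ← hga]
  linarith [FTC2, hwsplit, hI2]

/-- Green's Theorem (Theorem 3) for the region `D` bounded by the graphs of two
`C¹` functions `φ ≤ ψ` on `[a,b]` and two vertical segments.  The line integral of
`F = (f₁, f₂)` along the positively oriented boundary of `D` is written explicitly
as the sum of the four integrals corresponding to the four pieces of the boundary,
and it equals the double integral over `D` of `∂f₂/∂t − ∂f₁/∂x`. -/
theorem greens_theorem_between_graphs
    (a b c d : ℝ) (hab : a < b)
    (φ ψ φ' ψ' : ℝ → ℝ)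
    (hφ : ∀ t ∈ Set.Icc a b, HasDerivWithinAt φ (φ' t) (Set.Icc a b) t)
    (hφ'c : ContinuousOn φ' (Set.Icc a b))
    (hψ : ∀ t ∈ Set.Icc a b, HasDerivWithinAt ψ (ψ' t) (Set.Icc a b) t)
    (hψ'c : ContinuousOn ψ' (Set.Icc a b))
    (hle : ∀ t ∈ Set.Icc a b, φ t ≤ ψ t)
    -- `D ⊂ [a,b] × [c,d]`
    (hD : ∀ t ∈ Set.Icc a b, c ≤ φ t ∧ ψ t ≤ d)
    (f₁ f₂ f₁x f₂t : ℝ → ℝ → ℝ)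
    (hf₁ : ContinuousOn (fun p : ℝ × ℝ => f₁ p.1 p.2) (Set.Icc a b ×ˢ Set.Icc c d))
    (hf₂ : ContinuousOn (fun p : ℝ × ℝ => f₂ p.1 p.2) (Set.Icc a b ×ˢ Set.Icc c d))
    -- `∂f₁/∂x` exists and is continuous on `[a,b] × [c,d]`
    (hf₁x : ∀ t ∈ Set.Icc a b, ∀ x ∈ Set.Icc c d,
      HasDerivWithinAt (fun y => f₁ t y) (f₁x t x) (Set.Icc c d) x)
    (hf₁xc : ContinuousOn (fun p : ℝ × ℝ => f₁x p.1 p.2) (Set.Icc a b ×ˢ Set.Icc c d))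
    -- `∂f₂/∂t` exists and is continuous on `[a,b] × [c,d]`
    (hf₂t : ∀ t ∈ Set.Icc a b, ∀ x ∈ Set.Icc c d,
      HasDerivWithinAt (fun s => f₂ s x) (f₂t t x) (Set.Icc a b) t)
    (hf₂tc : ContinuousOn (fun p : ℝ × ℝ => f₂t p.1 p.2) (Set.Icc a b ×ˢ Set.Icc c d)) :
    ((∫ t in a..b, f₁ t (φ t)) + (∫ t in a..b, f₂ t (φ t) * φ' t))
      + (∫ x in φ b..ψ b, f₂ b x)
      - ((∫ t in a..b, f₁ t (ψ t)) + (∫ t in a..b, f₂ t (ψ t) * ψ' t))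
      - (∫ x in φ a..ψ a, f₂ a x)
    = ∫ t in a..b, (∫ x in φ t..ψ t, (f₂t t x - f₁x t x)) := by
  have hIab : Set.uIcc a b = Set.Icc a b := Set.uIcc_of_le hab.le
  have hamem : a ∈ Set.Icc a b := ⟨le_rfl, hab.le⟩
  have hbmem : b ∈ Set.Icc a b := ⟨hab.le, le_rfl⟩
  have hcd : c ≤ d := le_trans (hD a hamem).1 (le_trans (hle a hamem) (hD a hamem).2)
  have hφm : ∀ t ∈ Set.Icc a b, φ t ∈ Set.Icc c d :=
    fun t ht => ⟨(hD t ht).1, (hle t ht).trans (hD t ht).2⟩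
  have hψm : ∀ t ∈ Set.Icc a b, ψ t ∈ Set.Icc c d :=
    fun t ht => ⟨(hD t ht).1.trans (hle t ht), (hD t ht).2⟩
  -- clamping maps
  set π₁ : ℝ → ℝ := fun t => max a (min t b) with hπ₁def
  set π₂ : ℝ → ℝ := fun x => max c (min x d) with hπ₂def
  have hπ₁c : Continuous π₁ := continuous_const.max (continuous_id.min continuous_const)
  have hπ₂c : Continuous π₂ := continuous_const.max (continuous_id.min continuous_const)
  have hπ₁m : ∀ t, π₁ t ∈ Set.Icc a b :=
    fun t => ⟨le_max_left _ _, max_le hab.le (min_le_right _ _)⟩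
  have hπ₂m : ∀ x, π₂ x ∈ Set.Icc c d :=
    fun x => ⟨le_max_left _ _, max_le hcd (min_le_right _ _)⟩
  have hπ₁id : ∀ t ∈ Set.Icc a b, π₁ t = t := by
    intro t ht
    simp only [hπ₁def]
    rw [min_eq_left ht.2, max_eq_right ht.1]
  have hπ₂id : ∀ x ∈ Set.Icc c d, π₂ x = x := by
    intro x hx
    simp only [hπ₂def]
    rw [min_eq_left hx.2, max_eq_right hx.1]
  -- clamped extensions of the four functions
  set g₁ : ℝ → ℝ → ℝ := fun t x => f₁ (π₁ t) (π₂ x) with hg₁def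
  set g₂ : ℝ → ℝ → ℝ := fun t x => f₂ (π₁ t) (π₂ x) with hg₂def
  set g₁x : ℝ → ℝ → ℝ := fun t x => f₁x (π₁ t) (π₂ x) with hg₁xdef
  set g₂t : ℝ → ℝ → ℝ := fun t x => f₂t (π₁ t) (π₂ x) with hg₂tdef
  have hclamp : ∀ (h : ℝ → ℝ → ℝ),
      ContinuousOn (fun p : ℝ × ℝ => h p.1 p.2) (Set.Icc a b ×ˢ Set.Icc c d) →
      Continuous (fun p : ℝ × ℝ => h (π₁ p.1) (π₂ p.2)) := by
    intro h hh
    have hm : Continuous (fun p : ℝ × ℝ => (π₁ p.1, π₂ p.2)) :=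
      (hπ₁c.comp continuous_fst).prodMk (hπ₂c.comp continuous_snd)
    have := hh.comp_continuous hm (fun p => ⟨hπ₁m _, hπ₂m _⟩)
    exact this
  have hg₁c : Continuous (fun p : ℝ × ℝ => g₁ p.1 p.2) := hclamp f₁ hf₁
  have hg₂c : Continuous (fun p : ℝ × ℝ => g₂ p.1 p.2) := hclamp f₂ hf₂
  have hg₁xc : Continuous (fun p : ℝ × ℝ => g₁x p.1 p.2) := hclamp f₁x hf₁xc
  have hg₂tc : Continuous (fun p : ℝ × ℝ => g₂t p.1 p.2) := hclamp f₂t hf₂tc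
  -- transferred derivative hypotheses
  have hg₁x : ∀ t ∈ Set.Icc a b, ∀ x ∈ Set.Icc c d,
      HasDerivWithinAt (fun y => g₁ t y) (g₁x t x) (Set.Icc c d) x := by
    intro t ht x hx
    have hval : g₁x t x = f₁x t x := by
      simp only [hg₁xdef, hπ₁id t ht, hπ₂id x hx]
    rw [hval]
    refine (hf₁x t ht x hx).congr (fun y hy => ?_) ?_
    · simp only [hg₁def, hπ₁id t ht, hπ₂id y hy]
    · simp only [hg₁def, hπ₁id t ht, hπ₂id x hx]
  have hg₂t : ∀ t ∈ Set.Icc a b, ∀ x ∈ Set.Icc c d,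
      HasDerivWithinAt (fun s => g₂ s x) (g₂t t x) (Set.Icc a b) t := by
    intro t ht x hx
    have hval : g₂t t x = f₂t t x := by
      simp only [hg₂tdef, hπ₁id t ht, hπ₂id x hx]
    rw [hval]
    refine (hf₂t t ht x hx).congr (fun s hs => ?_) ?_
    · simp only [hg₂def, hπ₁id s hs, hπ₂id x hx]
    · simp only [hg₂def, hπ₁id t ht, hπ₂id x hx]
  have key := green_aux a b c d hab φ ψ φ' ψ' hφ hφ'c hψ hψ'c hle hD
    g₁ g₂ g₁x g₂t hg₁c hg₂c hg₁x hg₁xc hg₂t hg₂tc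
  -- transfer the integrals back to the original functions
  have r1 : (∫ t in a..b, g₁ t (φ t)) = ∫ t in a..b, f₁ t (φ t) := by
    apply intervalIntegral.integral_congr
    intro t ht
    rw [hIab] at ht
    simp only [hg₁def, hπ₁id t ht, hπ₂id (φ t) (hφm t ht)]
  have r2 : (∫ t in a..b, g₂ t (φ t) * φ' t) = ∫ t in a..b, f₂ t (φ t) * φ' t := by
    apply intervalIntegral.integral_congr
    intro t ht
    rw [hIab] at ht
    simp only [hg₂def, hπ₁id t ht, hπ₂id (φ t) (hφm t ht)]
  have r3 : (∫ t in a..b, g₁ t (ψ t)) = ∫ t in a..b, f₁ t (ψ t) := by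
    apply intervalIntegral.integral_congr
    intro t ht
    rw [hIab] at ht
    simp only [hg₁def, hπ₁id t ht, hπ₂id (ψ t) (hψm t ht)]
  have r4 : (∫ t in a..b, g₂ t (ψ t) * ψ' t) = ∫ t in a..b, f₂ t (ψ t) * ψ' t := by
    apply intervalIntegral.integral_congr
    intro t ht
    rw [hIab] at ht
    simp only [hg₂def, hπ₁id t ht, hπ₂id (ψ t) (hψm t ht)]
  have r5 : (∫ x in φ b..ψ b, g₂ b x) = ∫ x in φ b..ψ b, f₂ b x := by
    apply intervalIntegral.integral_congr
    intro x hx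
    have hx' : x ∈ Set.Icc c d := (Set.uIcc_subset_Icc (hφm b hbmem) (hψm b hbmem)) hx
    simp only [hg₂def, hπ₁id b hbmem, hπ₂id x hx']
  have r6 : (∫ x in φ a..ψ a, g₂ a x) = ∫ x in φ a..ψ a, f₂ a x := by
    apply intervalIntegral.integral_congr
    intro x hx
    have hx' : x ∈ Set.Icc c d := (Set.uIcc_subset_Icc (hφm a hamem) (hψm a hamem)) hx
    simp only [hg₂def, hπ₁id a hamem, hπ₂id x hx']
  have r7 : (∫ t in a..b, (∫ x in φ t..ψ t, (g₂t t x - g₁x t x)))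
      = ∫ t in a..b, (∫ x in φ t..ψ t, (f₂t t x - f₁x t x)) := by
    apply intervalIntegral.integral_congr
    intro t ht
    rw [hIab] at ht
    apply intervalIntegral.integral_congr
    intro x hx
    have hx' : x ∈ Set.Icc c d := (Set.uIcc_subset_Icc (hφm t ht) (hψm t ht)) hx
    simp only [hg₂tdef, hg₁xdef, hπ₁id t ht, hπ₂id x hx']
  rw [r1, r2, r3, r4, r5, r6, r7] at key
  exact key
end

section
/- Let a, b > 0, let g : (0,a] × [0,b] → [0,∞) be a uniqueness bound, let t₀ ∈ ℝ, x₀ ∈ ℝⁿ, and let ‖·‖ be a norm on ℝⁿ. Suppose f : V = [t₀−a, t₀+a] × B̄(x₀,b) → ℝⁿ is continuous, ‖f(t,x)‖ ≤ g(|t−t₀|, ‖x−x₀‖) for all (t,x) ∈ V with t ≠ t₀, and f(t, x₀) = 0 for all t ∈ [t₀−a, t₀+a]. Then the initial value problem x' = f(t,x), x(t₀) = x₀ has only the constant solution x ≡ x₀ on any subinterval I ⊂ [t₀−a, t₀+a] containing t₀. -/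
/-! For a solution `x`, the function `φ s = ‖x (t₀ + s) - x₀‖` is Lipschitz (`x' = f(t, x)` is
bounded on the compact graph of `x`), vanishes together with its right derivative at `0` (because
`x'(t₀) = f(t₀, x₀) = 0`), and by the reverse triangle inequality satisfies
`φ' ≤ ‖x'‖ ≤ g(s, φ)` wherever it is differentiable. The uniqueness bound then forces `φ ≡ 0`.
Running through the interval backwards, `s ↦ x (t₀ - s)` solves the reflected equation, to which
the same argument applies. -/

open MeasureTheory Set

/-- A function `g : (0,a] × [0,b] → [0,∞)` is a *uniqueness bound* (Definition 1)
if for every `a' ∈ (0,a]` the only Lipschitz continuous function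
`φ : [0,a'] → [0,∞)` (taking values in the domain `[0,b]` of `g`) satisfying
`φ'(t) ≤ g(t,φ(t))` for almost all `t ∈ (0,a']`, `φ(0) = 0` and `φ'(0) = 0`,
is `φ ≡ 0` on `[0,a']`. -/
def IsUniquenessBound (a b : ℝ) (g : ℝ → ℝ → ℝ) : Prop :=
  ∀ a' ∈ Set.Ioc (0:ℝ) a, ∀ φ : ℝ → ℝ,
    (∃ K, LipschitzOnWith K φ (Set.Icc 0 a')) →
    (∀ t ∈ Set.Icc (0:ℝ) a', φ t ∈ Set.Icc (0:ℝ) b) →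
    φ 0 = 0 →
    HasDerivWithinAt φ 0 (Set.Ici 0) 0 →
    (∀ᵐ t ∂volume, t ∈ Set.Ioc (0:ℝ) a' → ∀ y, HasDerivAt φ y t → y ≤ g t (φ t)) →
    ∀ t ∈ Set.Icc (0:ℝ) a', φ t = 0

section NormDeriv

variable {E : Type*} [NormedAddCommGroup E] [NormedSpace ℝ E] {u : ℝ → E} {v : E} {s : Set ℝ}
  {t y : ℝ}

theorem HasDerivWithinAt.le_norm_of_hasDerivWithinAt_norm (hu : HasDerivWithinAt u v (Ioi t) t)
    (hφ : HasDerivWithinAt (fun r ↦ ‖u r‖) y (Ioi t) t) : y ≤ ‖v‖ := by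
  rw [hasDerivWithinAt_iff_tendsto_slope' self_notMem_Ioi] at hu hφ
  refine le_of_tendsto_of_tendsto hφ hu.norm (eventually_mem_nhdsWithin.mono fun r hr ↦ ?_)
  have hrt : 0 < r - t := sub_pos.mpr hr
  calc slope (fun r ↦ ‖u r‖) t r = (r - t)⁻¹ * (‖u r‖ - ‖u t‖) := slope_def_module _ _ _
    _ ≤ (r - t)⁻¹ * ‖u r - u t‖ := by gcongr; exact norm_sub_norm_le _ _
    _ = ‖slope u t r‖ := by
      rw [slope_def_module, norm_smul, norm_inv, Real.norm_of_nonneg hrt.le]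

theorem HasDerivWithinAt.norm_of_eq_zero (hu : HasDerivWithinAt u 0 s t) (h0 : u t = 0) :
    HasDerivWithinAt (fun r ↦ ‖u r‖) 0 s t := by
  rw [hasDerivWithinAt_iff_isLittleO] at hu ⊢
  simpa [h0] using hu.norm_left

end NormDeriv

namespace IsUniquenessBound

variable {E : Type*} [NormedAddCommGroup E] [NormedSpace ℝ E] {a b : ℝ} {g : ℝ → ℝ → ℝ}
  {C : ℝ}

theorem eq_zero_of_hasDerivWithinAt (hg : IsUniquenessBound a b g) {a' : ℝ}
    (ha' : a' ∈ Ioc 0 a) {u v : ℝ → E}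
    (hu : ∀ s ∈ Icc 0 a', HasDerivWithinAt u (v s) (Icc 0 a') s)
    (hvC : ∀ s ∈ Icc 0 a', ‖v s‖ ≤ C) (hu0 : u 0 = 0) (hv0 : v 0 = 0)
    (hub : ∀ s ∈ Icc 0 a', ‖u s‖ ≤ b) (hvg : ∀ s ∈ Ioo 0 a', ‖v s‖ ≤ g s ‖u s‖) :
    ∀ s ∈ Icc 0 a', u s = 0 := by
  have hlip : LipschitzOnWith C.toNNReal u (Icc 0 a') :=
    (convex_Icc 0 a').lipschitzOnWith_of_nnnorm_hasDerivWithin_le hu fun s hs ↦ by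
      rw [← NNReal.coe_le_coe, coe_nnnorm]
      exact (hvC s hs).trans (Real.le_coe_toNNReal C)
  have hφ0 : HasDerivWithinAt (fun s ↦ ‖u s‖) 0 (Ici 0) 0 :=
    ((hv0 ▸ hu 0 ⟨le_rfl, ha'.1.le⟩).norm_of_eq_zero hu0).mono_of_mem_nhdsWithin
      (Icc_mem_nhdsGE ha'.1)
  have hφ' : ∀ s ∈ Ioo 0 a', ∀ y, HasDerivAt (fun s ↦ ‖u s‖) y s → y ≤ g s ‖u s‖ :=
    fun s hs y hy ↦ le_trans
      (((hu s (Ioo_subset_Icc_self hs)).hasDerivAt (Icc_mem_nhds hs.1 hs.2)).hasDerivWithinAt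
        |>.le_norm_of_hasDerivWithinAt_norm hy.hasDerivWithinAt) (hvg s hs)
  -- the right endpoint, where `u` has only a one-sided derivative, is a null set
  have hae : ∀ᵐ s, s ∈ Ioc 0 a' → ∀ y, HasDerivAt (fun s ↦ ‖u s‖) y s → y ≤ g s ‖u s‖ := by
    filter_upwards [(Ioo_ae_eq_Ioc (μ := volume)).mem_iff] with s hs hsIoc
      using hφ' s (hs.2 hsIoc)
  intro s hs
  exact norm_eq_zero.mp <| hg a' ha' _ ⟨_, lipschitzWith_one_norm.comp_lipschitzOnWith hlip⟩
    (fun s hs ↦ ⟨norm_nonneg _, hub s hs⟩) (by simp [hu0]) hφ0 hae s hs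

theorem eq_along_ray_of_hasDerivWithinAt (hg : IsUniquenessBound a b g) {a' : ℝ}
    (ha' : a' ∈ Ioc 0 a) {ε t₀ : ℝ} (hε : |ε| = 1) {I : Set ℝ}
    (hI : MapsTo (fun s ↦ t₀ + ε * s) (Icc 0 a') I) {x w : ℝ → E} {x₀ : E}
    (hx : ∀ t ∈ I, HasDerivWithinAt x (w t) I t) (hwC : ∀ t ∈ I, ‖w t‖ ≤ C)
    (hx0 : x t₀ = x₀) (hw0 : w t₀ = 0) (hxb : ∀ t ∈ I, ‖x t - x₀‖ ≤ b)
    (hwg : ∀ t ∈ I, t ≠ t₀ → ‖w t‖ ≤ g |t - t₀| ‖x t - x₀‖) :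
    ∀ s ∈ Icc 0 a', x (t₀ + ε * s) = x₀ := by
  have hdist : ∀ s ∈ Icc 0 a', |t₀ + ε * s - t₀| = s := fun s hs ↦ by
    rw [add_sub_cancel_left, abs_mul, hε, one_mul, abs_of_nonneg hs.1]
  have hu : ∀ s ∈ Icc 0 a', HasDerivWithinAt (fun s ↦ x (t₀ + ε * s) - x₀)
      (ε • w (t₀ + ε * s)) (Icc 0 a') s := fun s hs ↦
    ((hx _ (hI hs)).scomp s (by simpa using ((hasDerivWithinAt_id s _).const_mul ε).const_add t₀)
      hI).sub_const x₀
  have hnorm : ∀ s, ‖ε • w (t₀ + ε * s)‖ = ‖w (t₀ + ε * s)‖ := fun s ↦ by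
    rw [norm_smul, Real.norm_eq_abs, hε, one_mul]
  have hvg : ∀ s ∈ Ioo 0 a', ‖ε • w (t₀ + ε * s)‖ ≤ g s ‖x (t₀ + ε * s) - x₀‖ := fun s hs ↦ by
    have hs' := Ioo_subset_Icc_self hs
    have hne : t₀ + ε * s ≠ t₀ := by
      simpa [hs.1.ne'] using (show ε ≠ 0 by rintro rfl; simp at hε)
    simpa only [hnorm, hdist s hs'] using hwg _ (hI hs') hne
  intro s hs
  exact sub_eq_zero.mp <| hg.eq_zero_of_hasDerivWithinAt ha' hu
    (fun s hs ↦ hnorm s ▸ hwC _ (hI hs)) (by simp [hx0]) (by simp [hw0])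
    (fun s hs ↦ hxb _ (hI hs)) hvg s hs

theorem eq_of_hasDerivWithinAt (hg : IsUniquenessBound a b g) {t₀ t₁ t₂ : ℝ}
    (h₁ : t₀ - a ≤ t₁) (h₁₀ : t₁ ≤ t₀) (h₀₂ : t₀ ≤ t₂) (h₂ : t₂ ≤ t₀ + a) {x w : ℝ → E} {x₀ : E}
    (hx : ∀ t ∈ Icc t₁ t₂, HasDerivWithinAt x (w t) (Icc t₁ t₂) t)
    (hwC : ∀ t ∈ Icc t₁ t₂, ‖w t‖ ≤ C) (hx0 : x t₀ = x₀) (hw0 : w t₀ = 0)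
    (hxb : ∀ t ∈ Icc t₁ t₂, ‖x t - x₀‖ ≤ b)
    (hwg : ∀ t ∈ Icc t₁ t₂, t ≠ t₀ → ‖w t‖ ≤ g |t - t₀| ‖x t - x₀‖) :
    ∀ t ∈ Icc t₁ t₂, x t = x₀ := by
  intro t ht
  rcases lt_trichotomy t t₀ with hlt | rfl | hgt
  · have hside := hg.eq_along_ray_of_hasDerivWithinAt (a' := t₀ - t₁) (ε := -1) (I := Icc t₁ t₂)
      ⟨by linarith [ht.1], by linarith⟩
      (by simp) (fun s hs ↦ ⟨by linarith [hs.2], by linarith [hs.1]⟩) hx hwC hx0 hw0 hxb hwg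
      (t₀ - t) ⟨by linarith, by linarith [ht.1]⟩
    rwa [show t₀ + -1 * (t₀ - t) = t by ring] at hside
  · exact hx0
  · have hside := hg.eq_along_ray_of_hasDerivWithinAt (a' := t₂ - t₀) (ε := 1) (I := Icc t₁ t₂)
      ⟨by linarith [ht.2], by linarith⟩
      (by simp) (fun s hs ↦ ⟨by linarith [hs.1], by linarith [hs.2]⟩) hx hwC hx0 hw0 hxb hwg
      (t - t₀) ⟨by linarith, by linarith [ht.2]⟩
    rwa [show t₀ + 1 * (t - t₀) = t by ring] at hside

end IsUniquenessBound

theorem only_constant_solution_of_uniquenessBound_general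
    {E : Type*} [NormedAddCommGroup E] [NormedSpace ℝ E]
    (a b : ℝ)
    (g : ℝ → ℝ → ℝ)
    (hg : IsUniquenessBound a b g)
    (t₀ : ℝ) (x₀ : E) (f : ℝ → E → E)
    (hf : ContinuousOn (fun p : ℝ × E => f p.1 p.2)
      (Set.Icc (t₀ - a) (t₀ + a) ×ˢ Metric.closedBall x₀ b))
    (hbound : ∀ t ∈ Set.Icc (t₀ - a) (t₀ + a), ∀ x ∈ Metric.closedBall x₀ b,
      t ≠ t₀ → ‖f t x‖ ≤ g |t - t₀| ‖x - x₀‖)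
    (hf0 : ∀ t ∈ Set.Icc (t₀ - a) (t₀ + a), f t x₀ = 0) :
    ∀ t₁ t₂ : ℝ, t₀ - a ≤ t₁ → t₁ ≤ t₀ → t₀ ≤ t₂ → t₂ ≤ t₀ + a →
      ∀ x : ℝ → E,
        (∀ t ∈ Set.Icc t₁ t₂, x t ∈ Metric.closedBall x₀ b) →
        x t₀ = x₀ →
        (∀ t ∈ Set.Icc t₁ t₂, HasDerivWithinAt x (f t (x t)) (Set.Icc t₁ t₂) t) →
        ∀ t ∈ Set.Icc t₁ t₂, x t = x₀ := by
  intro t₁ t₂ h₁ h₁₀ h₀₂ h₂ x hxb hx0 hx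
  have hI : Icc t₁ t₂ ⊆ Icc (t₀ - a) (t₀ + a) := Icc_subset_Icc h₁ h₂
  obtain ⟨C, hC⟩ := isCompact_Icc.exists_bound_of_continuousOn <|
    hf.comp (continuousOn_id.prodMk fun t ht ↦ (hx t ht).continuousWithinAt)
      fun t ht ↦ ⟨hI ht, hxb t ht⟩
  exact hg.eq_of_hasDerivWithinAt h₁ h₁₀ h₀₂ h₂ hx hC hx0
    (by rw [hx0]; exact hf0 t₀ (hI ⟨h₁₀, h₀₂⟩)) (fun t ht ↦ mem_closedBall_iff_norm.mp (hxb t ht))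
    fun t ht ↦ hbound t (hI ht) (x t) (hxb t ht)

/-- Proposition 1(1): if `‖f(t,x)‖ ≤ g(|t-t₀|, ‖x-x₀‖)` for a uniqueness bound `g`
and `f(t,x₀) = 0`, then the IVP `x' = f(t,x)`, `x(t₀) = x₀` has only the constant
solution `x ≡ x₀` on any subinterval `I ⊂ [t₀-a, t₀+a]` containing `t₀`. -/
theorem only_constant_solution_of_uniquenessBound
    {E : Type*} [NormedAddCommGroup E] [NormedSpace ℝ E] [FiniteDimensional ℝ E]
    (a b : ℝ) (ha : 0 < a) (hb : 0 < b)
    (g : ℝ → ℝ → ℝ)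
    (hg0 : ∀ t ∈ Set.Ioc (0:ℝ) a, ∀ x ∈ Set.Icc (0:ℝ) b, 0 ≤ g t x)
    (hg : IsUniquenessBound a b g)
    (t₀ : ℝ) (x₀ : E) (f : ℝ → E → E)
    (hf : ContinuousOn (fun p : ℝ × E => f p.1 p.2)
      (Set.Icc (t₀ - a) (t₀ + a) ×ˢ Metric.closedBall x₀ b))
    (hbound : ∀ t ∈ Set.Icc (t₀ - a) (t₀ + a), ∀ x ∈ Metric.closedBall x₀ b,
      t ≠ t₀ → ‖f t x‖ ≤ g |t - t₀| ‖x - x₀‖)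
    (hf0 : ∀ t ∈ Set.Icc (t₀ - a) (t₀ + a), f t x₀ = 0) :
    ∀ t₁ t₂ : ℝ, t₀ - a ≤ t₁ → t₁ ≤ t₀ → t₀ ≤ t₂ → t₂ ≤ t₀ + a →
      ∀ x : ℝ → E,
        (∀ t ∈ Set.Icc t₁ t₂, x t ∈ Metric.closedBall x₀ b) →
        x t₀ = x₀ →
        (∀ t ∈ Set.Icc t₁ t₂, HasDerivWithinAt x (f t (x t)) (Set.Icc t₁ t₂) t) →
        ∀ t ∈ Set.Icc t₁ t₂, x t = x₀ :=
  only_constant_solution_of_uniquenessBound_general a b g hg t₀ x₀ f hf hbound hf0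
end

section
/- Let a, b > 0, let g : (0,a] × [0,b] → [0,∞) be a uniqueness bound, let t₀ ∈ ℝ, x₀ ∈ ℝⁿ, and let ‖·‖ be a norm on ℝⁿ. Suppose f : W = [t₀−a, t₀+a] × B̄(x₀, b/2) → ℝⁿ is continuous and ‖f(t,x) − f(t,y)‖ ≤ g(|t−t₀|, ‖x−y‖) for all (t,x), (t,y) ∈ W with t ≠ t₀. Then the initial value problem x' = f(t,x), x(t₀) = x₀ has at most one solution on any subinterval I ⊂ [t₀−a, t₀+a] containing t₀. -/
open MeasureTheory Set

/-- Auxiliary: the right-half version of the uniqueness statement. -/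
theorem right_half_uniq
    {E : Type*} [NormedAddCommGroup E] [NormedSpace ℝ E] [FiniteDimensional ℝ E]
    (a b : ℝ) (ha : 0 < a) (hb : 0 < b)
    (g : ℝ → ℝ → ℝ)
    (hg : IsUniquenessBound a b g)
    (t₀ : ℝ) (x₀ : E) (f : ℝ → E → E)
    (hf : ContinuousOn (fun p : ℝ × E => f p.1 p.2)
      (Set.Icc (t₀ - a) (t₀ + a) ×ˢ Metric.closedBall x₀ (b / 2)))
    (hbound : ∀ t ∈ Set.Icc (t₀ - a) (t₀ + a), t ≠ t₀ →
      ∀ x ∈ Metric.closedBall x₀ (b / 2), ∀ y ∈ Metric.closedBall x₀ (b / 2),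
        ‖f t x - f t y‖ ≤ g |t - t₀| ‖x - y‖)
    (t₁ t₂ : ℝ) (h1 : t₀ - a ≤ t₁) (h2 : t₁ ≤ t₀) (h3 : t₀ ≤ t₂) (h4 : t₂ ≤ t₀ + a)
    (x y : ℝ → E)
    (hxmem : ∀ t ∈ Set.Icc t₁ t₂, x t ∈ Metric.closedBall x₀ (b / 2))
    (hymem : ∀ t ∈ Set.Icc t₁ t₂, y t ∈ Metric.closedBall x₀ (b / 2))
    (hx0 : x t₀ = x₀) (hy0 : y t₀ = x₀)
    (hx : ∀ t ∈ Set.Icc t₁ t₂, HasDerivWithinAt x (f t (x t)) (Set.Icc t₁ t₂) t)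
    (hy : ∀ t ∈ Set.Icc t₁ t₂, HasDerivWithinAt y (f t (y t)) (Set.Icc t₁ t₂) t) :
    ∀ t ∈ Set.Icc t₀ t₂, x t = y t := by
  rcases eq_or_lt_of_le h3 with rfl | ht02
  · intro t ht
    have : t = t₀ := le_antisymm ht.2 ht.1
    rw [this, hx0, hy0]
  set a' : ℝ := t₂ - t₀ with ha'def
  have ha' : 0 < a' := by simp [ha'def]; linarith
  have haa : a' ≤ a := by simp [ha'def]; linarith
  have hsub : Set.Icc t₁ t₂ ⊆ Set.Icc (t₀ - a) (t₀ + a) :=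
    Set.Icc_subset_Icc h1 h4
  -- a bound on f over the compact set
  obtain ⟨C, hC⟩ := (isCompact_Icc.prod (isCompact_closedBall x₀ (b/2))).exists_bound_of_continuousOn hf
  set C' : ℝ := max C 0 with hC'def
  have hC'0 : 0 ≤ C' := le_max_right _ _
  have hxlip : ∀ s ∈ Set.Icc t₁ t₂, ∀ t ∈ Set.Icc t₁ t₂, ‖x t - x s‖ ≤ C' * ‖t - s‖ := by
    intro s hs t ht
    refine Convex.norm_image_sub_le_of_norm_hasDerivWithin_le hx ?_ (convex_Icc _ _) hs ht
    intro r hr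
    exact le_trans (hC (r, x r) ⟨hsub hr, hxmem r hr⟩) (le_max_left _ _)
  have hylip : ∀ s ∈ Set.Icc t₁ t₂, ∀ t ∈ Set.Icc t₁ t₂, ‖y t - y s‖ ≤ C' * ‖t - s‖ := by
    intro s hs t ht
    refine Convex.norm_image_sub_le_of_norm_hasDerivWithin_le hy ?_ (convex_Icc _ _) hs ht
    intro r hr
    exact le_trans (hC (r, y r) ⟨hsub hr, hymem r hr⟩) (le_max_left _ _)
  set u : ℝ → E := fun s => x (t₀ + s) - y (t₀ + s) with hudef
  set φ : ℝ → ℝ := fun s => ‖u s‖ with hφdef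
  have hmapsTo : ∀ s ∈ Set.Icc (0:ℝ) a', t₀ + s ∈ Set.Icc t₁ t₂ := by
    intro s hs
    constructor
    · linarith [hs.1]
    · have := hs.2; simp only [ha'def] at this; linarith
  -- Lipschitz
  have hφlip : LipschitzOnWith (Real.toNNReal (2 * C')) φ (Set.Icc 0 a') := by
    rw [lipschitzOnWith_iff_dist_le_mul]
    intro s hs t ht
    have h1' := hxlip (t₀ + t) (hmapsTo t ht) (t₀ + s) (hmapsTo s hs)
    have h2' := hylip (t₀ + t) (hmapsTo t ht) (t₀ + s) (hmapsTo s hs)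
    have key : dist (φ s) (φ t) ≤ ‖u s - u t‖ := by
      rw [Real.dist_eq]
      exact abs_norm_sub_norm_le _ _
    have : ‖u s - u t‖ ≤ 2 * C' * dist s t := by
      have : u s - u t = (x (t₀ + s) - x (t₀ + t)) - (y (t₀ + s) - y (t₀ + t)) := by
        simp only [hudef]; abel
      rw [this, Real.dist_eq]
      calc ‖(x (t₀ + s) - x (t₀ + t)) - (y (t₀ + s) - y (t₀ + t))‖
          ≤ ‖x (t₀ + s) - x (t₀ + t)‖ + ‖y (t₀ + s) - y (t₀ + t)‖ := norm_sub_le _ _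
        _ ≤ C' * ‖(t₀ + s) - (t₀ + t)‖ + C' * ‖(t₀ + s) - (t₀ + t)‖ := add_le_add h1' h2'
        _ = 2 * C' * |s - t| := by rw [show (t₀ + s) - (t₀ + t) = s - t by ring]; rw [Real.norm_eq_abs]; ring
    rw [Real.coe_toNNReal _ (by positivity)]
    exact key.trans this
  -- range
  have hφmem : ∀ t ∈ Set.Icc (0:ℝ) a', φ t ∈ Set.Icc (0:ℝ) b := by
    intro t ht
    refine ⟨norm_nonneg _, ?_⟩
    have hxm := hxmem _ (hmapsTo t ht)
    have hym := hymem _ (hmapsTo t ht)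
    rw [Metric.mem_closedBall, dist_eq_norm] at hxm hym
    have hue : u t = (x (t₀ + t) - x₀) - (y (t₀ + t) - x₀) := by simp [hudef]
    calc ‖u t‖ ≤ ‖x (t₀ + t) - x₀‖ + ‖y (t₀ + t) - x₀‖ := by
          rw [hue]; exact norm_sub_le _ _
      _ ≤ b / 2 + b / 2 := add_le_add hxm hym
      _ = b := by ring
  have hφ0 : φ 0 = 0 := by simp [hφdef, hudef, hx0, hy0]
  -- derivative at 0
  have ht₀mem : t₀ ∈ Set.Icc t₁ t₂ := ⟨h2, h3⟩
  have hu0 : HasDerivWithinAt u 0 (Set.Icc 0 a') 0 := by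
    have hshift : HasDerivWithinAt (fun s : ℝ => t₀ + s) 1 (Set.Icc 0 a') 0 :=
      ((hasDerivAt_id (0:ℝ)).const_add t₀).hasDerivWithinAt
    have hxc : HasDerivWithinAt (fun s : ℝ => x (t₀ + s)) ((1:ℝ) • f t₀ (x t₀)) (Set.Icc 0 a') 0 := by
      have := HasDerivWithinAt.scomp_of_eq (0:ℝ) (hx t₀ ht₀mem) hshift hmapsTo (by ring)
      simpa [Function.comp_def] using this
    have hyc : HasDerivWithinAt (fun s : ℝ => y (t₀ + s)) ((1:ℝ) • f t₀ (y t₀)) (Set.Icc 0 a') 0 := by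
      have := HasDerivWithinAt.scomp_of_eq (0:ℝ) (hy t₀ ht₀mem) hshift hmapsTo (by ring)
      simpa [Function.comp_def] using this
    have := hxc.sub hyc
    simpa [hx0, hy0, hudef, Pi.sub_def] using this
  have hφd0 : HasDerivWithinAt φ 0 (Set.Ici 0) 0 := by
    have hu0' : HasDerivWithinAt u 0 (Set.Ici 0) 0 := by
      rw [HasDerivWithinAt, ← nhdsWithin_Icc_eq_nhdsGE ha']
      exact hu0
    rw [hasDerivWithinAt_iff_isLittleO] at hu0' ⊢
    refine (Asymptotics.isBigO_of_le _ fun s => ?_).trans_isLittleO hu0'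
    simp only [smul_zero, sub_zero, Real.norm_eq_abs]
    have : φ s - φ 0 = ‖u s‖ - ‖u 0‖ := by simp [hφdef]
    rw [this]
    exact abs_norm_sub_norm_le _ _
  -- a.e. differential inequality
  have hae : ∀ᵐ t ∂volume, t ∈ Set.Ioc (0:ℝ) a' → ∀ d, HasDerivAt φ d t → d ≤ g t (φ t) := by
    have hne : ∀ᵐ t ∂(volume : Measure ℝ), t ≠ a' :=
      compl_mem_ae_iff.mpr (measure_singleton a')
    filter_upwards [hne] with t hta ht d hd
    have htlt : t < a' := lt_of_le_of_ne ht.2 hta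
    have hmem2 : t₀ + t ∈ Set.Ioo t₁ t₂ := by
      constructor
      · linarith [ht.1]
      · simp only [ha'def] at htlt; linarith
    have hmemIcc : t₀ + t ∈ Set.Icc t₁ t₂ := ⟨hmem2.1.le, hmem2.2.le⟩
    -- u has a genuine derivative at t
    set v : E := f (t₀ + t) (x (t₀ + t)) - f (t₀ + t) (y (t₀ + t)) with hvdef
    have hu : HasDerivAt u v t := by
      have hxat : HasDerivAt x (f (t₀ + t) (x (t₀ + t))) (t₀ + t) :=
        (hx _ hmemIcc).hasDerivAt (Icc_mem_nhds hmem2.1 hmem2.2)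
      have hyat : HasDerivAt y (f (t₀ + t) (y (t₀ + t))) (t₀ + t) :=
        (hy _ hmemIcc).hasDerivAt (Icc_mem_nhds hmem2.1 hmem2.2)
      have hshift : HasDerivAt (fun s : ℝ => t₀ + s) 1 t :=
        (hasDerivAt_id t).const_add t₀
      have hxc := hxat.scomp t hshift
      have hyc := hyat.scomp t hshift
      have := hxc.sub hyc
      simpa [hudef, hvdef, Function.comp_def, Pi.sub_def] using this
    -- bound on ‖v‖
    have hvbound : ‖v‖ ≤ g t (φ t) := by
      have h0 := hbound (t₀ + t) (hsub hmemIcc) (by intro h; nlinarith [ht.1])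
        (x (t₀ + t)) (hxmem _ hmemIcc) (y (t₀ + t)) (hymem _ hmemIcc)
      have : |t₀ + t - t₀| = t := by rw [show t₀ + t - t₀ = t by ring, abs_of_pos ht.1]
      rw [this] at h0
      simpa [hvdef, hφdef, hudef] using h0
    -- d ≤ ‖v‖ by comparing slopes from the right
    have hdle : d ≤ ‖v‖ := by
      have hsl : Filter.Tendsto (slope φ t) (nhdsWithin t (Set.Ioi t)) (nhds d) :=
        (hasDerivAt_iff_tendsto_slope.mp hd).mono_left
          (nhdsWithin_mono t fun s hs => (Set.mem_compl_singleton_iff).mpr hs.ne')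
      have hslu : Filter.Tendsto (fun s => ‖slope u t s‖) (nhdsWithin t (Set.Ioi t)) (nhds ‖v‖) :=
        (Filter.Tendsto.norm ((hasDerivAt_iff_tendsto_slope.mp hu).mono_left
          (nhdsWithin_mono t fun s hs => (Set.mem_compl_singleton_iff).mpr hs.ne')))
      refine le_of_tendsto_of_tendsto hsl hslu ?_
      filter_upwards [self_mem_nhdsWithin] with s hs
      have hpos : 0 < s - t := sub_pos.mpr hs
      rw [slope_def_module, slope_def_module, norm_smul, Real.norm_eq_abs, abs_inv,
        abs_of_pos hpos, smul_eq_mul]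
      have h1' : φ s - φ t ≤ ‖u s - u t‖ := norm_sub_norm_le _ _
      exact mul_le_mul_of_nonneg_left h1' (inv_nonneg.mpr hpos.le)
    exact hdle.trans hvbound
  -- apply the uniqueness bound
  have hzero := hg a' ⟨ha', haa⟩ φ ⟨_, hφlip⟩ hφmem hφ0 hφd0 hae
  intro t ht
  have h5 : t - t₀ ∈ Set.Icc (0:ℝ) a' := ⟨by linarith [ht.1], by simp [ha'def]; linarith [ht.2]⟩
  have := hzero (t - t₀) h5
  have : ‖x t - y t‖ = 0 := by
    simpa [hφdef, hudef, show t₀ + (t - t₀) = t by ring] using this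
  rw [norm_eq_zero, sub_eq_zero] at this
  exact this

/-- Proposition 1(2) (Kamke-type uniqueness): if
`‖f(t,x) - f(t,y)‖ ≤ g(|t-t₀|, ‖x-y‖)` on `W = [t₀-a,t₀+a] × B̄(x₀,b/2)` for a
uniqueness bound `g`, then the IVP `x' = f(t,x)`, `x(t₀) = x₀` has at most one
solution on any subinterval `I ⊂ [t₀-a, t₀+a]` containing `t₀`. -/
theorem at_most_one_solution_of_uniquenessBound
    {E : Type*} [NormedAddCommGroup E] [NormedSpace ℝ E] [FiniteDimensional ℝ E]
    (a b : ℝ) (ha : 0 < a) (hb : 0 < b)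
    (g : ℝ → ℝ → ℝ)
    (hg0 : ∀ t ∈ Set.Ioc (0:ℝ) a, ∀ x ∈ Set.Icc (0:ℝ) b, 0 ≤ g t x)
    (hg : IsUniquenessBound a b g)
    (t₀ : ℝ) (x₀ : E) (f : ℝ → E → E)
    (hf : ContinuousOn (fun p : ℝ × E => f p.1 p.2)
      (Set.Icc (t₀ - a) (t₀ + a) ×ˢ Metric.closedBall x₀ (b / 2)))
    (hbound : ∀ t ∈ Set.Icc (t₀ - a) (t₀ + a), t ≠ t₀ →
      ∀ x ∈ Metric.closedBall x₀ (b / 2), ∀ y ∈ Metric.closedBall x₀ (b / 2),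
        ‖f t x - f t y‖ ≤ g |t - t₀| ‖x - y‖) :
    ∀ t₁ t₂ : ℝ, t₀ - a ≤ t₁ → t₁ ≤ t₀ → t₀ ≤ t₂ → t₂ ≤ t₀ + a →
      ∀ x y : ℝ → E,
        (∀ t ∈ Set.Icc t₁ t₂, x t ∈ Metric.closedBall x₀ (b / 2)) →
        (∀ t ∈ Set.Icc t₁ t₂, y t ∈ Metric.closedBall x₀ (b / 2)) →
        x t₀ = x₀ → y t₀ = x₀ →
        (∀ t ∈ Set.Icc t₁ t₂, HasDerivWithinAt x (f t (x t)) (Set.Icc t₁ t₂) t) →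
        (∀ t ∈ Set.Icc t₁ t₂, HasDerivWithinAt y (f t (y t)) (Set.Icc t₁ t₂) t) →
        ∀ t ∈ Set.Icc t₁ t₂, x t = y t := by
  intro t₁ t₂ h1 h2 h3 h4 x y hxm hym hx0 hy0 hx hy t ht
  rcases le_or_gt t₀ t with hcase | hcase
  · exact right_half_uniq a b ha hb g hg t₀ x₀ f hf hbound t₁ t₂ h1 h2 h3 h4 x y
      hxm hym hx0 hy0 hx hy t ⟨hcase, ht.2⟩
  · -- reflect
    set F : ℝ → E → E := fun s v => -f (2*t₀ - s) v with hFdef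
    set X : ℝ → E := fun s => x (2*t₀ - s) with hXdef
    set Y : ℝ → E := fun s => y (2*t₀ - s) with hYdef
    have hrefl : ∀ s : ℝ, s ∈ Set.Icc (t₀ - a) (t₀ + a) → 2*t₀ - s ∈ Set.Icc (t₀ - a) (t₀ + a) := by
      intro s hs; exact ⟨by linarith [hs.2], by linarith [hs.1]⟩
    have hrefl2 : ∀ s : ℝ, s ∈ Set.Icc (2*t₀ - t₂) (2*t₀ - t₁) → 2*t₀ - s ∈ Set.Icc t₁ t₂ := by
      intro s hs; exact ⟨by linarith [hs.2], by linarith [hs.1]⟩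
    have hF : ContinuousOn (fun p : ℝ × E => F p.1 p.2)
        (Set.Icc (t₀ - a) (t₀ + a) ×ˢ Metric.closedBall x₀ (b / 2)) := by
      have hm : Continuous (fun p : ℝ × E => ((2*t₀ - p.1, p.2) : ℝ × E)) := by continuity
      have := (hf.comp hm.continuousOn (fun p hp => ⟨hrefl p.1 (Set.mem_prod.mp hp).1, (Set.mem_prod.mp hp).2⟩)).neg
      exact this
    have hFbound : ∀ t ∈ Set.Icc (t₀ - a) (t₀ + a), t ≠ t₀ →
        ∀ u ∈ Metric.closedBall x₀ (b / 2), ∀ v ∈ Metric.closedBall x₀ (b / 2),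
          ‖F t u - F t v‖ ≤ g |t - t₀| ‖u - v‖ := by
      intro t htI htne u hu v hv
      have h2tne : 2*t₀ - t ≠ t₀ := by intro h; apply htne; linarith [h]
      have := hbound (2*t₀ - t) (hrefl t htI) h2tne u hu v hv
      have habs : |2*t₀ - t - t₀| = |t - t₀| := by
        rw [show 2*t₀ - t - t₀ = -(t - t₀) by ring, abs_neg]
      rw [habs] at this
      calc ‖F t u - F t v‖ = ‖f (2*t₀ - t) u - f (2*t₀ - t) v‖ := by
            simp only [hFdef]; rw [show -f (2*t₀-t) u - -f (2*t₀-t) v = -(f (2*t₀-t) u - f (2*t₀-t) v) by abel, norm_neg]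
        _ ≤ g |t - t₀| ‖u - v‖ := this
    have hXd : ∀ s ∈ Set.Icc (2*t₀ - t₂) (2*t₀ - t₁),
        HasDerivWithinAt X (F s (X s)) (Set.Icc (2*t₀ - t₂) (2*t₀ - t₁)) s := by
      intro s hs
      have hshift : HasDerivWithinAt (fun r : ℝ => 2*t₀ - r) (-1)
          (Set.Icc (2*t₀ - t₂) (2*t₀ - t₁)) s := by
        simpa using ((hasDerivAt_id s).const_sub (2*t₀)).hasDerivWithinAt
      have := (hx (2*t₀ - s) (hrefl2 s hs)).scomp s hshift hrefl2
      simpa [hXdef, hFdef, neg_one_smul, Function.comp_def] using this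
    have hYd : ∀ s ∈ Set.Icc (2*t₀ - t₂) (2*t₀ - t₁),
        HasDerivWithinAt Y (F s (Y s)) (Set.Icc (2*t₀ - t₂) (2*t₀ - t₁)) s := by
      intro s hs
      have hshift : HasDerivWithinAt (fun r : ℝ => 2*t₀ - r) (-1)
          (Set.Icc (2*t₀ - t₂) (2*t₀ - t₁)) s := by
        simpa using ((hasDerivAt_id s).const_sub (2*t₀)).hasDerivWithinAt
      have := (hy (2*t₀ - s) (hrefl2 s hs)).scomp s hshift hrefl2
      simpa [hYdef, hFdef, neg_one_smul, Function.comp_def] using this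
    have key := right_half_uniq a b ha hb g hg t₀ x₀ F hF hFbound
      (2*t₀ - t₂) (2*t₀ - t₁) (by linarith) (by linarith) (by linarith) (by linarith)
      X Y (fun s hs => hxm _ (hrefl2 s hs)) (fun s hs => hym _ (hrefl2 s hs))
      (by simp [hXdef, show 2*t₀ - t₀ = t₀ by ring, hx0])
      (by simp [hYdef, show 2*t₀ - t₀ = t₀ by ring, hy0])
      hXd hYd (2*t₀ - t) ⟨by linarith, by linarith [ht.1]⟩
    simpa [hXdef, hYdef, show 2*t₀ - (2*t₀ - t) = t by ring] using key
end

section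
/- Let a, b > 0 and let g : (0,a] × [0,b] → [0,∞) satisfy g(t,x) ≤ p(t) ψ(t,x), where p : (0,a] → (0,∞) is locally integrable on (0,a] and ψ : (0,a] × [0,2b] → [0,∞) is continuous. Assume: (i) ψ(t,0) = 0 for all t ∈ (0,a] and ψ(t,x) > 0 for all (t,x) ∈ (0,a] × (0,b]; (ii') ψ is nondecreasing with respect to its first variable; (iii') for every Lipschitz continuous function u : (t₁,t₂] ⊂ (0,a] → (0,b) with lim_{t→t₁⁺} u(t)/(t−t₁) = 0, one has limsup_{t→t₁⁺} ( ∫_{u(t)}^{u(t₂)} dr/ψ(t₂,r) − ∫_t^{t₂} p(s) ds ) > 0. Then g is a uniqueness bound. -/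
open MeasureTheory Set Filter intervalIntegral

/-!
Suppose `φ` does not vanish identically. Take the last zero `t₁` of `φ` before a point where it
is positive, and `t₂ > t₁` so close that `0 < φ < b` on `(t₁, t₂]`. For `t₁ < τ < t₂`, the
function `σ ↦ ∫_{φ t₂}^{φ σ} dr / ψ(t₂, r)` is Lipschitz on `[τ, t₂]` with derivative
`φ' / ψ(t₂, φ) ≤ p ψ(σ, φ) / ψ(t₂, φ) ≤ p` (monotonicity of `ψ` in `t`), so
`∫_{φ τ}^{φ t₂} dr / ψ(t₂, r) ≤ ∫_τ^{t₂} p`.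

If `t₁ = 0`, then `u = φ` is admissible in (iii') because `φ'(0) = 0`, and this inequality says
that the limsup in (iii') is `≤ 0`. If `t₁ > 0`, then `p` is integrable on `[t₁, t₂]`, and letting
`τ → t₁` shows that `1 / ψ(t₂, ·)` is integrable near `0`. But then (iii') fails for
`u(t) = ε ((t - t₁) / (t₂ - t₁))²` with `ε` small: `∫_{u t}^{ε} dr / ψ(t₂, r)` is small, while
`∫_t^{t₂} p` stays bounded away from `0` as `t → t₁`.
-/

open scoped Topology NNReal

theorem LipschitzOnWith.sub_le_integral_of_hasDerivAt_le {h p : ℝ → ℝ} {s t : ℝ} {K : ℝ≥0}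
    (hst : s ≤ t) (hh : LipschitzOnWith K h (Icc s t)) (hp : IntervalIntegrable p volume s t)
    (hd : ∀ᵐ σ, σ ∈ Ioo s t → ∃ y ≤ p σ, HasDerivAt h y σ) :
    h t - h s ≤ ∫ σ in s..t, p σ := by
  have hac : AbsolutelyContinuousOnInterval h s t :=
    LipschitzOnWith.absolutelyContinuousOnInterval (by rwa [uIcc_of_le hst])
  rw [← hac.integral_deriv_eq_sub]
  refine integral_mono_ae_restrict hst hac.intervalIntegrable_deriv hp ?_
  rw [← Measure.restrict_congr_set Ioo_ae_eq_Icc]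
  filter_upwards [ae_restrict_mem measurableSet_Ioo, ae_restrict_of_ae hd] with σ hσ hdσ
  obtain ⟨y, hy, hder⟩ := hdσ hσ
  exact hder.deriv ▸ hy

theorem ContinuousOn.hasDerivAt_intervalIntegral_of_mem_Ioo {f : ℝ → ℝ} {α β c x : ℝ}
    (hf : ContinuousOn f (Ioo α β)) (hc : c ∈ Ioo α β) (hx : x ∈ Ioo α β) :
    HasDerivAt (fun y => ∫ r in c..y, f r) (f x) x :=
  integral_hasDerivAt_right (hf.mono (ordConnected_Ioo.uIcc_subset hc hx)).intervalIntegrable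
    (hf.stronglyMeasurableAtFilter isOpen_Ioo x hx) (hf.continuousAt (isOpen_Ioo.mem_nhds hx))

theorem integral_one_div_comp_le_of_deriv_le {ρ φ p : ℝ → ℝ} {α β τ t : ℝ} {K : ℝ≥0}
    (hτt : τ ≤ t) (hρ : ContinuousOn ρ (Ioo α β)) (hρpos : ∀ x ∈ Ioo α β, 0 < ρ x)
    (hφ : LipschitzOnWith K φ (Icc τ t)) (hφmaps : MapsTo φ (Icc τ t) (Ioo α β))
    (hp : IntervalIntegrable p volume τ t)
    (hφ' : ∀ᵐ σ, σ ∈ Ioo τ t → ∀ y, HasDerivAt φ y σ → y ≤ p σ * ρ (φ σ)) :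
    ∫ r in φ τ..φ t, 1 / ρ r ≤ ∫ σ in τ..t, p σ := by
  have hw : ContinuousOn (fun r => 1 / ρ r) (Ioo α β) :=
    continuousOn_const.div hρ fun x hx => (hρpos x hx).ne'
  set F : ℝ → ℝ := fun y => ∫ r in φ τ..y, 1 / ρ r
  have hF : ∀ x ∈ Ioo α β, HasDerivAt F (1 / ρ x) x := fun x hx =>
    hw.hasDerivAt_intervalIntegral_of_mem_Ioo (hφmaps ⟨le_rfl, hτt⟩) hx
  have hJ : IsCompact (φ '' Icc τ t) := isCompact_Icc.image_of_continuousOn hφ.continuousOn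
  have hJconv : Convex ℝ (φ '' Icc τ t) :=
    (isPreconnected_Icc.image φ hφ.continuousOn).ordConnected.convex
  obtain ⟨C, hC⟩ := hJ.exists_bound_of_continuousOn (hw.mono (image_subset_iff.2 hφmaps))
  have hFlip : LipschitzOnWith C.toNNReal F (φ '' Icc τ t) := by
    refine hJconv.lipschitzOnWith_of_nnnorm_hasDerivWithin_le
      (fun x hx => (hF x (image_subset_iff.2 hφmaps hx)).hasDerivWithinAt) fun x hx => ?_
    rw [← NNReal.coe_le_coe, coe_nnnorm, Real.coe_toNNReal']
    exact (hC x hx).trans (le_max_left _ _)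
  have hφac : AbsolutelyContinuousOnInterval φ τ t :=
    LipschitzOnWith.absolutelyContinuousOnInterval (by rwa [uIcc_of_le hτt])
  have key := (hFlip.comp hφ (mapsTo_image φ _)).sub_le_integral_of_hasDerivAt_le hτt hp ?_
  · simpa [F] using key
  filter_upwards [hφ', hφac.ae_differentiableAt] with σ hσ hdiff hσmem
  have hφσ := (hdiff (uIcc_of_le hτt ▸ Ioo_subset_Icc_self hσmem)).hasDerivAt
  have hρσ := hρpos _ (hφmaps (Ioo_subset_Icc_self hσmem))
  refine ⟨1 / ρ (φ σ) * deriv φ σ, ?_, (hF _ (hφmaps (Ioo_subset_Icc_self hσmem))).comp σ hφσ⟩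
  rw [one_div, inv_mul_le_iff₀ hρσ, mul_comm]
  exact hσ hσmem _ hφσ

theorem integrableOn_Ioc_of_intervalIntegral_le {f : ℝ → ℝ} {a c M : ℝ}
    (hf : ContinuousOn f (Ioc a c)) (hf0 : ∀ x ∈ Ioc a c, 0 ≤ f x)
    (hM : ∀ x ∈ Ioo a c, ∫ r in x..c, f r ≤ M) : IntegrableOn f (Ioc a c) := by
  rcases le_or_gt c a with hca | hac
  · simp [Ioc_eq_empty_of_le hca]
  set x : ℕ → ℝ := fun n => a + (c - a) / (n + 1)
  have hx : ∀ n, x n ∈ Ioc a c := fun n =>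
    ⟨lt_add_of_pos_right a (by have := sub_pos.2 hac; positivity),
      by linarith [div_le_self (sub_pos.2 hac).le (le_add_of_nonneg_left n.cast_nonneg)]⟩
  refine integrableOn_Ioc_of_intervalIntegral_norm_bounded_left (a := x) (l := atTop) (I := M)
    (fun n => ?_) ?_ ?_
  · exact ((hf.mono (Icc_subset_Ioc (hx n).1 le_rfl)).integrableOn_compact
      isCompact_Icc).mono_set Ioc_subset_Icc_self
  · simpa using (tendsto_const_nhds (x := a)).add
      ((tendsto_const_div_atTop_nhds_zero_nat (c - a)).comp (tendsto_add_atTop_nat 1))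
  · filter_upwards [eventually_gt_atTop 0] with n hn
    have hxc : x n < c := by
      have : (c - a) / (n + 1) < c - a :=
        div_lt_self (sub_pos.2 hac) (by norm_cast; omega)
      linarith
    rw [← integral_of_le hxc.le]
    calc ∫ r in x n..c, ‖f r‖ = ∫ r in x n..c, f r :=
          integral_congr fun r hr => Real.norm_of_nonneg <| hf0 r <|
            (uIcc_of_le hxc.le ▸ Icc_subset_Ioc (hx n).1 le_rfl) hr
      _ ≤ M := hM _ ⟨(hx n).1, hxc⟩

theorem integrableOn_Ioc_of_intervalIntegral_comp_le {w φ p : ℝ → ℝ} {t₁ t₂ : ℝ}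
    (ht : t₁ < t₂) (hw : ContinuousOn w (Ioc 0 (φ t₂))) (hw0 : ∀ r ∈ Ioc 0 (φ t₂), 0 ≤ w r)
    (hφ : Tendsto φ (𝓝[>] t₁) (𝓝 0)) (hφpos : ∀ τ ∈ Ioo t₁ t₂, 0 < φ τ)
    (hp : IntervalIntegrable p volume t₁ t₂) (hp0 : ∀ s ∈ Ioc t₁ t₂, 0 ≤ p s)
    (hcomp : ∀ τ ∈ Ioo t₁ t₂, ∫ r in φ τ..φ t₂, w r ≤ ∫ s in τ..t₂, p s) :
    IntegrableOn w (Ioc 0 (φ t₂)) := by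
  refine integrableOn_Ioc_of_intervalIntegral_le (M := ∫ s in t₁..t₂, p s) hw hw0 fun x hx => ?_
  obtain ⟨τ, hτx, hτ⟩ :=
    ((hφ.eventually (gt_mem_nhds hx.1)).and (Ioo_mem_nhdsGT ht)).exists
  calc ∫ r in x..φ t₂, w r ≤ ∫ r in φ τ..φ t₂, w r := by
        refine integral_mono_interval hτx.le hx.2.le le_rfl ?_ ?_
        · filter_upwards [ae_restrict_mem measurableSet_Ioc] with r hr
          exact hw0 r ⟨(hφpos τ hτ).trans hr.1, hr.2⟩
        · exact (hw.mono (uIcc_of_le (hτx.trans hx.2).le ▸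
            Icc_subset_Ioc (hφpos τ hτ) le_rfl)).intervalIntegrable
    _ ≤ ∫ s in τ..t₂, p s := hcomp τ hτ
    _ ≤ ∫ s in t₁..t₂, p s := by
        refine integral_mono_interval hτ.1.le hτ.2.le le_rfl ?_ hp
        filter_upwards [ae_restrict_mem measurableSet_Ioc] with s hs
        exact hp0 s hs

theorem IntegrableOn.tendsto_intervalIntegral_nhdsGT {f : ℝ → ℝ} {a c : ℝ}
    (hf : IntegrableOn f (Ioc a c)) (hac : a < c) :
    Tendsto (fun x => ∫ r in a..x, f r) (𝓝[>] a) (𝓝 0) := by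
  have hcont := continuousOn_primitive_interval' (μ := volume)
    ((intervalIntegrable_iff_integrableOn_Ioc_of_le hac.le).2 hf) left_mem_uIcc a left_mem_uIcc
  rw [uIcc_of_le hac.le] at hcont
  simpa using (hcont.mono_of_mem_nhdsWithin (Icc_mem_nhdsGT hac)).tendsto

theorem exists_Ioc_mapsTo_Ioo_of_ne_zero {f : ℝ → ℝ} {s A x ℓ : ℝ}
    (hf : ContinuousOn f (Icc s A)) (hfs : f s = 0) (hf0 : ∀ σ ∈ Icc s A, 0 ≤ f σ)
    (hx : x ∈ Icc s A) (hfx : f x ≠ 0) (hℓ : 0 < ℓ) :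
    ∃ t₁ t₂, s ≤ t₁ ∧ t₁ < t₂ ∧ t₂ ≤ A ∧ f t₁ = 0 ∧ MapsTo f (Ioc t₁ t₂) (Ioo 0 ℓ) := by
  set Z := Icc s x ∩ f ⁻¹' {0}
  have hZ : IsClosed Z :=
    (hf.mono (Icc_subset_Icc_right hx.2)).preimage_isClosed_of_isClosed isClosed_Icc
      isClosed_singleton
  have hZbdd : BddAbove Z := ⟨x, fun σ hσ => hσ.1.2⟩
  obtain ⟨⟨hst₁, ht₁x⟩, hft₁⟩ : sSup Z ∈ Z := hZ.csSup_mem ⟨s, ⟨le_rfl, hx.1⟩, hfs⟩ hZbdd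
  set t₁ := sSup Z
  have ht₁x' : t₁ < x := ht₁x.lt_of_ne fun h => hfx (h ▸ hft₁)
  have hpos : ∀ σ ∈ Ioc t₁ x, 0 < f σ := fun σ hσ =>
    (hf0 σ ⟨hst₁.trans hσ.1.le, hσ.2.trans hx.2⟩).lt_of_ne' fun h =>
      hσ.1.not_ge (le_csSup hZbdd ⟨⟨hst₁.trans hσ.1.le, hσ.2⟩, h⟩)
  have hsmall : ∀ᶠ σ in 𝓝[>] t₁, f σ < ℓ := by
    have hcont : ContinuousWithinAt f (Ioi t₁) t₁ :=
      ((hf t₁ ⟨hst₁, ht₁x.trans hx.2⟩).mono (Icc_subset_Icc_left hst₁)).mono_of_mem_nhdsWithin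
        (Icc_mem_nhdsGT (ht₁x'.trans_le hx.2))
    exact hcont.eventually (gt_mem_nhds (hft₁ ▸ hℓ))
  obtain ⟨u, hu, hIoc⟩ := mem_nhdsGT_iff_exists_Ioc_subset.1 hsmall
  refine ⟨t₁, min u x, hst₁, lt_min hu ht₁x', (min_le_right _ _).trans hx.2, hft₁,
    fun σ hσ => ⟨hpos σ ⟨hσ.1, hσ.2.trans (min_le_right _ _)⟩,
      hIoc ⟨hσ.1, hσ.2.trans (min_le_left _ _)⟩⟩⟩

/-- The test functions `u` of condition (iii'). -/
def IsAdmissible (b t₁ t₂ : ℝ) (u : ℝ → ℝ) : Prop :=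
  (∃ K, LipschitzOnWith K u (Ioc t₁ t₂)) ∧ (∀ t ∈ Ioc t₁ t₂, u t ∈ Ioo 0 b) ∧
    Tendsto (fun t => u t / (t - t₁)) (𝓝[>] t₁) (𝓝 0)

theorem exists_isAdmissible_mapsTo_Ioc {b ε t₁ t₂ : ℝ} (hε : 0 < ε) (hεb : ε < b)
    (ht : t₁ < t₂) :
    ∃ u, IsAdmissible b t₁ t₂ u ∧ u t₂ = ε ∧ MapsTo u (Ioc t₁ t₂) (Ioc 0 ε) := by
  have hd : 0 < t₂ - t₁ := sub_pos.2 ht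
  set u : ℝ → ℝ := fun t => ε * ((t - t₁) / (t₂ - t₁)) ^ 2
  have hmaps : MapsTo u (Ioc t₁ t₂) (Ioc 0 ε) := fun t ht => by
    have h₀ : 0 < (t - t₁) / (t₂ - t₁) := div_pos (sub_pos.2 ht.1) hd
    have h₁ : (t - t₁) / (t₂ - t₁) ≤ 1 := (div_le_one hd).2 (by linarith [ht.2])
    exact ⟨by positivity, mul_le_of_le_one_right hε.le (pow_le_one₀ h₀.le h₁)⟩
  refine ⟨u, ⟨?_, fun t ht => ⟨(hmaps ht).1, (hmaps ht).2.trans_lt hεb⟩, ?_⟩, ?_, hmaps⟩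
  · obtain ⟨K, hK⟩ := (show ContDiff ℝ 1 u by fun_prop).contDiffOn.exists_lipschitzOnWith
      one_ne_zero (convex_Icc t₁ t₂) isCompact_Icc
    exact ⟨K, hK.mono Ioc_subset_Icc_self⟩
  · have hlin : Tendsto (fun t => ε * (t - t₁) / (t₂ - t₁) ^ 2) (𝓝[>] t₁) (𝓝 0) :=
      ((by fun_prop : Continuous fun t => ε * (t - t₁) / (t₂ - t₁) ^ 2).tendsto' t₁ 0
        (by simp)).mono_left nhdsWithin_le_nhds
    refine hlin.congr' (eventually_nhdsWithin_of_forall fun t ht => ?_)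
    have : t - t₁ ≠ 0 := sub_ne_zero.2 (ne_of_gt ht)
    simp only [u]
    field_simp
  · simp [u, hd.ne']

theorem not_integrableOn_Ioc_of_forall_isAdmissible {w p : ℝ → ℝ} {b c t₁ t₂ : ℝ}
    (hb : 0 < b) (hc : 0 < c) (ht : t₁ < t₂) (hw : ∀ r ∈ Ioc 0 c, 0 ≤ w r)
    (hp : IntervalIntegrable p volume t₁ t₂) (hp0 : ∀ t ∈ Ioc t₁ t₂, 0 < p t)
    (hadm : ∀ u, IsAdmissible b t₁ t₂ u →
      ∃ᶠ t in 𝓝[>] t₁, ∫ s in t..t₂, p s < ∫ r in u t..u t₂, w r) :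
    ¬ IntegrableOn w (Ioc 0 c) := by
  intro hint
  have hpint : ∀ t ∈ Ioc t₁ t₂, IntervalIntegrable p volume t t₂ := fun t htt =>
    hp.mono_set (by rw [uIcc_of_le htt.2, uIcc_of_le ht.le]; exact Icc_subset_Icc_left htt.1.le)
  obtain ⟨t₃, ht₃⟩ := nonempty_Ioo.2 ht
  have hP : 0 < ∫ s in t₃..t₂, p s :=
    intervalIntegral_pos_of_pos_on (hpint t₃ ⟨ht₃.1, ht₃.2.le⟩)
      (fun s hs => hp0 s ⟨ht₃.1.trans hs.1, hs.2.le⟩) ht₃.2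
  obtain ⟨ε, hεP, hε⟩ := (((IntegrableOn.tendsto_intervalIntegral_nhdsGT hint hc).eventually
    (gt_mem_nhds hP)).and (Ioo_mem_nhdsGT (lt_min hc hb))).exists
  obtain ⟨u, hu, hut₂, humaps⟩ :=
    exists_isAdmissible_mapsTo_Ioc hε.1 (hε.2.trans_le (min_le_right _ _)) ht
  obtain ⟨t, hlt, htt₃⟩ := ((hadm u hu).and_eventually (Ioo_mem_nhdsGT ht₃.1)).exists
  have hut := humaps ⟨htt₃.1, (htt₃.2.trans ht₃.2).le⟩
  have hwε : ∫ r in u t..u t₂, w r ≤ ∫ r in 0..ε, w r := by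
    rw [hut₂]
    refine integral_mono_interval hut.1.le hut.2 le_rfl ?_
      ((intervalIntegrable_iff_integrableOn_Ioc_of_le hε.1.le).2
        (hint.mono_set (Ioc_subset_Ioc_right (hε.2.le.trans (min_le_left _ _)))))
    filter_upwards [ae_restrict_mem measurableSet_Ioc] with r hr
    exact hw r ⟨hr.1, hr.2.trans (hε.2.le.trans (min_le_left _ _))⟩
  have hpt : ∫ s in t₃..t₂, p s ≤ ∫ s in t..t₂, p s := by
    refine integral_mono_interval htt₃.2.le ht₃.2.le le_rfl ?_
      (hpint t ⟨htt₃.1, (htt₃.2.trans ht₃.2).le⟩)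
    filter_upwards [ae_restrict_mem measurableSet_Ioc] with s hs
    exact (hp0 s ⟨htt₃.1.trans hs.1, hs.2⟩).le
  linarith

theorem isUniquenessBound_of_limsup_pos_monotone_general
    (a b : ℝ) (hb : 0 < b)
    (g : ℝ → ℝ → ℝ) (p : ℝ → ℝ) (ψ : ℝ → ℝ → ℝ)
    (hgle : ∀ t ∈ Set.Ioc (0:ℝ) a, ∀ x ∈ Set.Icc (0:ℝ) b, g t x ≤ p t * ψ t x)
    (hp : ∀ t ∈ Set.Ioc (0:ℝ) a, 0 < p t)
    (hploc : ∀ c d : ℝ, 0 < c → c ≤ d → d ≤ a → IntegrableOn p (Set.Icc c d))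
    (hψc : ContinuousOn (fun q : ℝ × ℝ => ψ q.1 q.2) (Set.Ioc 0 a ×ˢ Set.Icc 0 (2 * b)))
    -- (i)
    (hi₂ : ∀ t ∈ Set.Ioc (0:ℝ) a, ∀ x ∈ Set.Ioc (0:ℝ) b, 0 < ψ t x)
    -- (ii'): `ψ` is nondecreasing with respect to its first variable
    (hii' : ∀ x ∈ Set.Icc (0:ℝ) (2 * b), ∀ s ∈ Set.Ioc (0:ℝ) a, ∀ t ∈ Set.Ioc (0:ℝ) a,
      s ≤ t → ψ s x ≤ ψ t x)
    -- (iii')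
    (hiii' : ∀ t₁ t₂ : ℝ, 0 ≤ t₁ → t₁ < t₂ → t₂ ≤ a → ∀ u : ℝ → ℝ,
      (∃ K, LipschitzOnWith K u (Set.Ioc t₁ t₂)) →
      (∀ t ∈ Set.Ioc t₁ t₂, u t ∈ Set.Ioo (0:ℝ) b) →
      Tendsto (fun t => u t / (t - t₁)) (nhdsWithin t₁ (Set.Ioi t₁)) (nhds 0) →
      (0 : EReal) < Filter.limsup
        (fun t => (((∫ r in u t..u t₂, 1 / ψ t₂ r) - (∫ s in t..t₂, p s) : ℝ) : EReal))
        (nhdsWithin t₁ (Set.Ioi t₁))) :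
    IsUniquenessBound a b g := by
  intro a' ha' φ ⟨K, hK⟩ hrange hφ0 hφ'0 hineq x hx
  by_contra hφx
  obtain ⟨t₁, t₂, ht₁, ht₁₂, ht₂a', hφt₁, hφmaps⟩ := exists_Ioc_mapsTo_Ioo_of_ne_zero
    hK.continuousOn hφ0 (fun σ hσ => (hrange σ hσ).1) hx hφx hb
  have ht₂ : t₂ ∈ Ioc 0 a := ⟨ht₁.trans_lt ht₁₂, ht₂a'.trans ha'.2⟩
  have hK₁₂ : LipschitzOnWith K φ (Icc t₁ t₂) := hK.mono (Icc_subset_Icc ht₁ ht₂a')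
  have hψt₂ : ContinuousOn (ψ t₂) (Ioo 0 b) := hψc.comp (f := fun r => (t₂, r)) (by fun_prop)
    fun r hr => ⟨ht₂, hr.1.le, hr.2.le.trans (by linarith)⟩
  have hψt₂pos : ∀ r ∈ Ioo 0 b, 0 < ψ t₂ r := fun r hr => hi₂ t₂ ht₂ r ⟨hr.1, hr.2.le⟩
  have hφ' : ∀ᵐ σ, σ ∈ Ioo t₁ t₂ → ∀ y, HasDerivAt φ y σ → y ≤ p σ * ψ t₂ (φ σ) := by
    filter_upwards [hineq] with σ hσ hσ₁₂ y hy
    have hσa' : σ ∈ Icc 0 a' := ⟨ht₁.trans hσ₁₂.1.le, (hσ₁₂.2.trans_le ht₂a').le⟩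
    have hσa : σ ∈ Ioc 0 a := ⟨ht₁.trans_lt hσ₁₂.1, hσa'.2.trans ha'.2⟩
    have hφσ : φ σ ∈ Icc 0 (2 * b) := ⟨(hrange σ hσa').1, (hrange σ hσa').2.trans (by linarith)⟩
    calc y ≤ g σ (φ σ) := hσ ⟨hσa.1, hσa'.2⟩ y hy
      _ ≤ p σ * ψ σ (φ σ) := hgle σ hσa (φ σ) (hrange σ hσa')
      _ ≤ p σ * ψ t₂ (φ σ) :=
        mul_le_mul_of_nonneg_left (hii' _ hφσ σ hσa t₂ ht₂ hσ₁₂.2.le) (hp σ hσa).le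
  have hcomp : ∀ τ ∈ Ioo t₁ t₂, ∫ r in φ τ..φ t₂, 1 / ψ t₂ r ≤ ∫ s in τ..t₂, p s :=
    fun τ hτ => integral_one_div_comp_le_of_deriv_le hτ.2.le hψt₂ hψt₂pos
      (hK₁₂.mono (Icc_subset_Icc_left hτ.1.le)) (hφmaps.mono_left (Icc_subset_Ioc hτ.1 le_rfl))
      ((intervalIntegrable_iff_integrableOn_Icc_of_le hτ.2.le).2
        (hploc τ t₂ (ht₁.trans_lt hτ.1) hτ.2.le ht₂.2))
      (hφ'.mono fun σ hσ hσ' => hσ ⟨hτ.1.trans hσ'.1, hσ'.2⟩)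
  have hadm : ∀ u, IsAdmissible b t₁ t₂ u →
      ∃ᶠ t in 𝓝[>] t₁, ∫ s in t..t₂, p s < ∫ r in u t..u t₂, 1 / ψ t₂ r :=
    fun u ⟨hu, humaps, hut⟩ => (frequently_lt_of_lt_limsup (by isBoundedDefault)
      (hiii' t₁ t₂ ht₁ ht₁₂ ht₂.2 u hu humaps hut)).mono fun t ht =>
        sub_pos.1 (EReal.coe_pos.1 ht)
  rcases ht₁.eq_or_lt with rfl | ht₁
  · have hslope : Tendsto (fun t => φ t / (t - 0)) (𝓝[>] 0) (𝓝 0) := by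
      simpa [slope_fun_def_field, hφ0] using hasDerivWithinAt_iff_tendsto_slope.1 hφ'0
    have hφadm : IsAdmissible b 0 t₂ φ := ⟨⟨K, hK₁₂.mono Ioc_subset_Icc_self⟩, hφmaps, hslope⟩
    obtain ⟨τ, hlt, hτ⟩ := ((hadm φ hφadm).and_eventually (Ioo_mem_nhdsGT ht₁₂)).exists
    exact (hcomp τ hτ).not_gt hlt
  · obtain ⟨hc, hcb⟩ := hφmaps ⟨ht₁₂, le_rfl⟩
    have hsub : Ioc 0 (φ t₂) ⊆ Ioo 0 b := fun r hr => ⟨hr.1, hr.2.trans_lt hcb⟩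
    have hw0 : ∀ r ∈ Ioc 0 (φ t₂), 0 ≤ 1 / ψ t₂ r :=
      fun r hr => (one_div_pos.2 (hψt₂pos r (hsub hr))).le
    have hp₁₂ : ∀ t ∈ Ioc t₁ t₂, 0 < p t := fun t ht => hp t ⟨ht₁.trans ht.1, ht.2.trans ht₂.2⟩
    have hpint : IntervalIntegrable p volume t₁ t₂ :=
      (intervalIntegrable_iff_integrableOn_Icc_of_le ht₁₂.le).2 (hploc t₁ t₂ ht₁ ht₁₂.le ht₂.2)
    have hφt₁ : Tendsto φ (𝓝[>] t₁) (𝓝 0) := hφt₁ ▸ ((hK₁₂.continuousOn t₁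
      (left_mem_Icc.2 ht₁₂.le)).mono_of_mem_nhdsWithin (Icc_mem_nhdsGT ht₁₂)).tendsto
    exact not_integrableOn_Ioc_of_forall_isAdmissible hb hc ht₁₂ hw0 hpint hp₁₂ hadm
      (integrableOn_Ioc_of_intervalIntegral_comp_le ht₁₂
        ((continuousOn_const.div hψt₂ fun r hr => (hψt₂pos r hr).ne').mono hsub) hw0 hφt₁
        (fun τ hτ => (hφmaps ⟨hτ.1, hτ.2.le⟩).1) hpint (fun s hs => (hp₁₂ s hs).le) hcomp)

/-- Theorem 4, with conditions (i), (ii') and (iii'): if `g(t,x) ≤ p(t)ψ(t,x)`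
with `p : (0,a] → (0,∞)` locally integrable, `ψ : (0,a] × [0,2b] → [0,∞)`
continuous, `ψ(t,0) = 0`, `ψ(t,x) > 0` for `x ∈ (0,b]`, `ψ` nondecreasing in its
first variable, and the limsup condition (iii') holding for every Lipschitz
`u : (t₁,t₂] → (0,b)` with `u(t)/(t-t₁) → 0` as `t → t₁⁺`, then `g` is a
uniqueness bound. -/
theorem isUniquenessBound_of_limsup_pos_monotone
    (a b : ℝ) (ha : 0 < a) (hb : 0 < b)
    (g : ℝ → ℝ → ℝ) (p : ℝ → ℝ) (ψ : ℝ → ℝ → ℝ)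
    (hg0 : ∀ t ∈ Set.Ioc (0:ℝ) a, ∀ x ∈ Set.Icc (0:ℝ) b, 0 ≤ g t x)
    (hgle : ∀ t ∈ Set.Ioc (0:ℝ) a, ∀ x ∈ Set.Icc (0:ℝ) b, g t x ≤ p t * ψ t x)
    (hp : ∀ t ∈ Set.Ioc (0:ℝ) a, 0 < p t)
    (hploc : ∀ c d : ℝ, 0 < c → c ≤ d → d ≤ a → IntegrableOn p (Set.Icc c d))
    (hψc : ContinuousOn (fun q : ℝ × ℝ => ψ q.1 q.2) (Set.Ioc 0 a ×ˢ Set.Icc 0 (2 * b)))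
    (hψ0 : ∀ t ∈ Set.Ioc (0:ℝ) a, ∀ x ∈ Set.Icc (0:ℝ) (2 * b), 0 ≤ ψ t x)
    -- (i)
    (hi₁ : ∀ t ∈ Set.Ioc (0:ℝ) a, ψ t 0 = 0)
    (hi₂ : ∀ t ∈ Set.Ioc (0:ℝ) a, ∀ x ∈ Set.Ioc (0:ℝ) b, 0 < ψ t x)
    -- (ii'): `ψ` is nondecreasing with respect to its first variable
    (hii' : ∀ x ∈ Set.Icc (0:ℝ) (2 * b), ∀ s ∈ Set.Ioc (0:ℝ) a, ∀ t ∈ Set.Ioc (0:ℝ) a,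
      s ≤ t → ψ s x ≤ ψ t x)
    -- (iii')
    (hiii' : ∀ t₁ t₂ : ℝ, 0 ≤ t₁ → t₁ < t₂ → t₂ ≤ a → ∀ u : ℝ → ℝ,
      (∃ K, LipschitzOnWith K u (Set.Ioc t₁ t₂)) →
      (∀ t ∈ Set.Ioc t₁ t₂, u t ∈ Set.Ioo (0:ℝ) b) →
      Tendsto (fun t => u t / (t - t₁)) (nhdsWithin t₁ (Set.Ioi t₁)) (nhds 0) →
      (0 : EReal) < Filter.limsup
        (fun t => (((∫ r in u t..u t₂, 1 / ψ t₂ r) - (∫ s in t..t₂, p s) : ℝ) : EReal))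
        (nhdsWithin t₁ (Set.Ioi t₁))) :
    IsUniquenessBound a b g :=
  isUniquenessBound_of_limsup_pos_monotone_general a b hb g p ψ hgle hp hploc hψc hi₂ hii' hiii'
end

section
/- (Osgood bound) Let a, b > 0 and let ψ : [0, 2b] → [0,∞) be continuous with ψ(0) = 0, ψ(x) > 0 for all x ∈ (0, b], and ∫_{0+} ds/ψ(s) = +∞. Then g : (0,a] × [0,b] → [0,∞) defined by g(t,x) = ψ(x) is a uniqueness bound. -/
open MeasureTheory Set

open Filter Topology
open scoped NNReal ENNReal


lemma increment_key {f : ℝ → ℝ} {K : ℝ≥0} {s T C : ℝ} (hsT : s ≤ T)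
    (hf : LipschitzOnWith K f (Set.Icc s T))
    (hder : ∀ᵐ t ∂volume, t ∈ Set.Ioo s T → ∃ y, HasDerivAt f y t ∧ y ≤ C) :
    f T - f s ≤ C * (T - s) := by
  refine le_of_forall_pos_le_add fun δ hδ => ?_
  have hTs : (0:ℝ) ≤ T - s := sub_nonneg.2 hsT
  set Kc : ℝ := (K : ℝ) + |C| + 1 with hKc
  have hKcpos : 0 < Kc := by positivity
  set δ₁ : ℝ := δ / (2 * (T - s + 1)) with hδ₁def
  have hδ₁pos : 0 < δ₁ := div_pos hδ (by nlinarith)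
  set δ₂ : ℝ := δ / (2 * Kc) with hδ₂def
  have hδ₂pos : 0 < δ₂ := div_pos hδ (by nlinarith)
  set N : Set ℝ := {t | ¬ (t ∈ Set.Ioo s T → ∃ y, HasDerivAt f y t ∧ y ≤ C)} with hN
  have hNnull : volume N = 0 := hder
  have hN'null : volume (N ∪ {s}) = 0 := by
    refine le_antisymm ?_ (zero_le)
    refine le_trans (measure_union_le _ _) ?_
    simp [hNnull]
  obtain ⟨U, hNU, hUopen, hUvol⟩ :=
    Set.exists_isOpen_lt_of_lt (N ∪ {s}) (ENNReal.ofReal δ₂)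
      (by rw [hN'null]; exact ENNReal.ofReal_pos.2 hδ₂pos)
  set m : ℝ → ℝ := fun t => (volume (U ∩ Set.Ioc s t)).toReal with hm
  have hfin : ∀ t, volume (U ∩ Set.Ioc s t) ≠ ⊤ := by
    intro t
    exact ne_top_of_le_ne_top (by simp [Real.volume_Ioc]) (measure_mono inter_subset_right)
  have hmono : ∀ x y : ℝ, x ≤ y → m x ≤ m y := by
    intro x y hxy
    exact ENNReal.toReal_mono (hfin y)
      (measure_mono (inter_subset_inter_right _ (Set.Ioc_subset_Ioc_right hxy)))
  have hlip : ∀ x y : ℝ, x ≤ y → m y - m x ≤ y - x := by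
    intro x y hxy
    have hsub : U ∩ Set.Ioc s y ⊆ (U ∩ Set.Ioc s x) ∪ Set.Ioc x y := by
      rintro u ⟨hu1, hu2, hu3⟩
      rcases le_or_gt u x with h | h
      · exact Or.inl ⟨hu1, hu2, h⟩
      · exact Or.inr ⟨h, hu3⟩
    have hμ : volume (U ∩ Set.Ioc s y) ≤ volume (U ∩ Set.Ioc s x) + ENNReal.ofReal (y - x) := by
      refine le_trans (measure_mono hsub) (le_trans (measure_union_le _ _) ?_)
      gcongr
      simp [Real.volume_Ioc]
    have h2 := ENNReal.toReal_mono
      (ENNReal.add_ne_top.2 ⟨hfin x, ENNReal.ofReal_ne_top⟩) hμ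
    rw [ENNReal.toReal_add (hfin x) ENNReal.ofReal_ne_top,
      ENNReal.toReal_ofReal (sub_nonneg.2 hxy)] at h2
    linarith [h2]
  have hmcont : Continuous m := by
    rw [Metric.continuous_iff]
    intro x ε hε
    refine ⟨ε, hε, fun y hy => ?_⟩
    rw [Real.dist_eq] at hy ⊢
    rw [abs_sub_lt_iff] at hy ⊢
    rcases le_total x y with h | h
    · have h1 := hlip x y h
      have h2 := hmono x y h
      constructor <;> linarith
    · have h1 := hlip y x h
      have h2 := hmono y x h
      constructor <;> linarith
  have hms : m s = 0 := by simp [hm]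
  have hmT : m T ≤ δ₂ := by
    refine le_trans (ENNReal.toReal_mono (by simp [ne_top_of_lt hUvol])
      (measure_mono inter_subset_left)) ?_
    exact ENNReal.toReal_le_of_le_ofReal hδ₂pos.le hUvol.le
  set g : ℝ → ℝ := fun t => f t - C * (t - s) - Kc * m t - δ₁ * (t - s) with hg
  have hgcont : ContinuousOn g (Set.Icc s T) := by
    have h1 : Continuous fun t : ℝ => C * (t - s) := by fun_prop
    have h2 : Continuous fun t : ℝ => Kc * m t := continuous_const.mul hmcont
    have h3 : Continuous fun t : ℝ => δ₁ * (t - s) := by fun_prop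
    exact ((hf.continuousOn.sub h1.continuousOn).sub h2.continuousOn).sub h3.continuousOn
  have key : ∀ ⦃x⦄, x ∈ Set.Icc s T → g x ≤ (fun _ => f s) x := by
    apply image_le_of_liminf_slope_right_lt_deriv_boundary (f' := fun _ => -δ₁)
      (B' := fun _ => 0) hgcont ?_ ?_ ?_ ?_
    · -- slope condition
      intro x hx r hr
      replace hr : -δ₁ < r := hr
      by_cases hxU : x ∈ U
      · obtain ⟨η, hη, hball⟩ := Metric.isOpen_iff.1 hUopen x hxU
        set w := min (x + η / 2) T with hw
        have hxw : x < w := lt_min (by linarith) hx.2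
        have hIoc : Set.Ioc x w ∈ 𝓝[>] x := Ioc_mem_nhdsGT_of_mem ⟨le_rfl, hxw⟩
        refine (Filter.eventually_of_mem hIoc fun z hz => ?_).frequently
        have hzT : z ≤ T := le_trans hz.2 (min_le_right _ _)
        have hzx : (0:ℝ) < z - x := by linarith [hz.1]
        have hgrow : m x + (z - x) ≤ m z := by
          have hsub2 : (U ∩ Set.Ioc s x) ∪ Set.Ioc x z ⊆ U ∩ Set.Ioc s z := by
            rintro u (⟨hu1, hu2, hu3⟩ | ⟨hu1, hu2⟩)
            · exact ⟨hu1, hu2, le_trans hu3 hz.1.le⟩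
            · refine ⟨hball ?_, lt_of_le_of_lt hx.1 hu1, hu2⟩
              rw [Metric.mem_ball, Real.dist_eq, abs_of_pos (by linarith)]
              have : z ≤ x + η / 2 := le_trans hz.2 (min_le_left _ _)
              linarith
          have hdisj : Disjoint (U ∩ Set.Ioc s x) (Set.Ioc x z) :=
            Disjoint.mono_left inter_subset_right (Set.Ioc_disjoint_Ioc_of_le le_rfl)
          have hum := measure_union (μ := volume) hdisj (measurableSet_Ioc (a:=x) (b:=z))
          have hle : volume (U ∩ Set.Ioc s x) + volume (Set.Ioc x z)
              ≤ volume (U ∩ Set.Ioc s z) := hum ▸ measure_mono hsub2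
          have h5 := ENNReal.toReal_mono (hfin z) hle
          rw [ENNReal.toReal_add (hfin x) (by simp [Real.volume_Ioc]),
            Real.volume_Ioc, ENNReal.toReal_ofReal (by linarith : (0:ℝ) ≤ z - x)] at h5
          linarith
        have hfz : f z - f x ≤ (K : ℝ) * (z - x) := by
          have hd := hf.dist_le_mul z ⟨le_trans hx.1 hz.1.le, hzT⟩ x ⟨hx.1, hx.2.le⟩
          rw [Real.dist_eq, Real.dist_eq, abs_of_pos hzx] at hd
          exact le_trans (le_abs_self _) hd
        rw [slope_def_field, div_lt_iff₀ hzx]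
        have hCb : -(C * (z - s)) + C * (x - s) ≤ |C| * (z - x) := by
          have he : -(C * (z - s)) + C * (x - s) = -(C * (z - x)) := by ring
          rw [he]
          calc -(C * (z - x)) ≤ |C * (z - x)| := neg_le_abs _
            _ = |C| * |z - x| := abs_mul _ _
            _ = |C| * (z - x) := by rw [abs_of_pos hzx]
        have hKce : Kc * (z - x) = (K:ℝ) * (z - x) + |C| * (z - x) + (z - x) := by
          rw [hKc]; ring
        have hKcg := mul_le_mul_of_nonneg_left hgrow hKcpos.le
        have hrz := mul_lt_mul_of_pos_right hr hzx
        simp only [hg]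
        nlinarith [hKcg, hrz, hfz, hCb, hKce]
      · have hxN : x ∉ N ∪ {s} := fun h => hxU (hNU h)
        have hxs : x ≠ s := fun h => hxN (Or.inr (by simp [h]))
        have hxIoo : x ∈ Set.Ioo s T := ⟨lt_of_le_of_ne hx.1 (Ne.symm hxs), hx.2⟩
        have hxgood : x ∈ Set.Ioo s T → ∃ y, HasDerivAt f y x ∧ y ≤ C := by
          by_contra h
          exact hxN (Or.inl h)
        obtain ⟨y, hy, hyC⟩ := hxgood hxIoo
        have hslope : Tendsto (slope f x) (𝓝[>] x) (𝓝 y) :=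
          (hasDerivAt_iff_tendsto_slope.1 hy).mono_left
            (nhdsWithin_mono _ fun z hz => ne_of_gt hz)
        have hrδ : 0 < r + δ₁ := by linarith
        have hev1 : ∀ᶠ z in 𝓝[>] x, slope f x z < y + (r + δ₁) :=
          hslope.eventually_lt_const (by linarith)
        have hev2 : Set.Ioc x T ∈ 𝓝[>] x := Ioc_mem_nhdsGT_of_mem ⟨le_rfl, hx.2⟩
        refine ((hev1.and (Filter.eventually_of_mem hev2 fun z hz => hz)).mono
          fun z hz12 => ?_).frequently
        obtain ⟨h1, h2⟩ := hz12
        have hzx : (0:ℝ) < z - x := by linarith [h2.1]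
        rw [slope_def_field, div_lt_iff₀ hzx] at h1 ⊢
        have hm1 : 0 ≤ m z - m x := by linarith [hmono x z (by linarith [h2.1])]
        have hyCz := mul_le_mul_of_nonneg_right hyC hzx.le
        have hKcm := mul_nonneg hKcpos.le hm1
        simp only [hg]
        nlinarith [h1, hyCz, hKcm]
    · simp [hg, hms]
    · exact fun x => hasDerivAt_const x (f s)
    · intro x _ _
      show -δ₁ < (0:ℝ)
      linarith
  have hkey := key (right_mem_Icc.2 hsT)
  simp only [hg, hms] at hkey
  have h1 : Kc * m T ≤ Kc * δ₂ := mul_le_mul_of_nonneg_left hmT hKcpos.le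
  have h2 : Kc * δ₂ = δ / 2 := by
    rw [hδ₂def]; field_simp
  have h3 : δ₁ * (T - s) ≤ δ / 2 := by
    rw [hδ₁def, div_mul_eq_mul_div, div_le_iff₀ (by nlinarith : (0:ℝ) < 2 * (T - s + 1))]
    nlinarith
  clear_value Kc δ₁ δ₂
  linarith [hkey, h1, h2, h3]

lemma divergence_aux {χ : ℝ → ℝ} {ε : ℝ} (hε : 0 < ε) (hcont : Continuous χ)
    (hpos : ∀ x : ℝ, 0 < x → 0 < χ x)
    (hdiv : ∫⁻ s in Set.Ioc (0:ℝ) ε, ENNReal.ofReal (1 / χ s) = ⊤) (M : ℝ) :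
    ∃ x₀, x₀ ∈ Set.Ioc (0:ℝ) ε ∧ M < ∫ u in x₀..ε, (χ u)⁻¹ := by
  by_contra h
  push_neg at h
  set gE : ℝ → ℝ≥0∞ := fun s => ENNReal.ofReal (1 / χ s) with hgE
  have hgEm : Measurable gE := (measurable_const.div hcont.measurable).ennreal_ofReal
  have hbound : ∀ n : ℕ, ∫⁻ s in Set.Ioc (ε / (n + 2)) ε, gE s ≤ ENNReal.ofReal M := by
    intro n
    have hn2 : (0:ℝ) < (n:ℝ) + 2 := by positivity
    have hc : 0 < ε / ((n:ℝ) + 2) := div_pos hε hn2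
    have hcε : ε / ((n:ℝ) + 2) ≤ ε := by
      rw [div_le_iff₀ hn2]; nlinarith
    have hco : ContinuousOn (fun s => 1 / χ s) (Set.Icc (ε / ((n:ℝ)+2)) ε) := by
      apply ContinuousOn.div continuousOn_const hcont.continuousOn
      intro v hv; exact (hpos v (lt_of_lt_of_le hc hv.1)).ne'
    have hint : IntegrableOn (fun s => 1 / χ s) (Set.Ioc (ε / ((n:ℝ)+2)) ε) volume :=
      (hco.integrableOn_Icc).mono_set Set.Ioc_subset_Icc_self
    have hnn : 0 ≤ᵐ[volume.restrict (Set.Ioc (ε / ((n:ℝ)+2)) ε)] fun s => 1 / χ s := by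
      filter_upwards [ae_restrict_mem measurableSet_Ioc] with s hs
      have := hpos s (lt_trans hc hs.1)
      positivity
    rw [← ofReal_integral_eq_lintegral_ofReal hint hnn]
    apply ENNReal.ofReal_le_ofReal
    have heq : ∫ s in Set.Ioc (ε/((n:ℝ)+2)) ε, 1 / χ s = ∫ u in (ε/((n:ℝ)+2))..ε, (χ u)⁻¹ := by
      rw [intervalIntegral.integral_of_le hcε]
      simp [one_div]
    rw [heq]
    exact h _ ⟨hc, hcε⟩
  have hsup : (fun s => ⨆ n : ℕ, (Set.Ioc (ε / ((n:ℝ) + 2)) ε).indicator gE s)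
      = (Set.Ioc (0:ℝ) ε).indicator gE := by
    funext s
    by_cases hs : s ∈ Set.Ioc (0:ℝ) ε
    · rw [Set.indicator_of_mem hs]
      obtain ⟨n, hn⟩ := exists_nat_gt (ε / s)
      have hsn : s ∈ Set.Ioc (ε / ((n:ℝ) + 2)) ε := by
        refine ⟨?_, hs.2⟩
        rw [div_lt_iff₀ (by positivity)]
        have h1 : ε / s < (n:ℝ) := hn
        have h2 : (0:ℝ) < s := hs.1
        have h3 : ε / s * s = ε := div_mul_cancel₀ ε h2.ne'
        nlinarith
      apply le_antisymm
      · exact iSup_le fun k => Set.indicator_le_self _ _ s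
      · exact le_iSup_of_le n (le_of_eq (Set.indicator_of_mem hsn gE).symm)
    · rw [Set.indicator_of_notMem hs]
      refine le_antisymm (iSup_le fun n => ?_) (zero_le)
      rw [Set.indicator_of_notMem]
      intro hmem
      exact hs ⟨lt_trans (div_pos hε (by positivity)) hmem.1, hmem.2⟩
  have hmon : Monotone fun n : ℕ => (Set.Ioc (ε / ((n:ℝ) + 2)) ε).indicator gE := by
    intro i j hij
    refine Set.indicator_le_indicator_of_subset (Set.Ioc_subset_Ioc_left ?_) (fun a => zero_le)
    gcongr
  have hlim := lintegral_iSup (μ := volume)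
    (fun n => hgEm.indicator measurableSet_Ioc) hmon
  have htop : (⊤ : ℝ≥0∞) ≤ ENNReal.ofReal M := by
    calc (⊤:ℝ≥0∞) = ∫⁻ s in Set.Ioc (0:ℝ) ε, gE s := hdiv.symm
      _ = ∫⁻ s, (Set.Ioc (0:ℝ) ε).indicator gE s := (lintegral_indicator measurableSet_Ioc gE).symm
      _ = ∫⁻ s, ⨆ n : ℕ, (Set.Ioc (ε / ((n:ℝ) + 2)) ε).indicator gE s :=
          lintegral_congr fun s => (congrFun hsup s).symm
      _ = ⨆ n : ℕ, ∫⁻ s, (Set.Ioc (ε / ((n:ℝ) + 2)) ε).indicator gE s := hlim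
      _ = ⨆ n : ℕ, ∫⁻ s in Set.Ioc (ε / ((n:ℝ) + 2)) ε, gE s := by
          refine iSup_congr fun n => lintegral_indicator measurableSet_Ioc gE
      _ ≤ ENNReal.ofReal M := iSup_le hbound
  exact lt_irrefl _ (lt_of_le_of_lt htop ENNReal.ofReal_lt_top)

private theorem isUniquenessBound_osgood_main (a b : ℝ) (ha : 0 < a) (hb : 0 < b)
    (ψ : ℝ → ℝ)
    (hψc : ContinuousOn ψ (Set.Icc 0 (2 * b)))
    (hψnonneg : ∀ x ∈ Set.Icc (0:ℝ) (2 * b), 0 ≤ ψ x)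
    (hψ0 : ψ 0 = 0)
    (hψpos : ∀ x ∈ Set.Ioc (0:ℝ) b, 0 < ψ x)
    (hψdiv : ∃ ε ∈ Set.Ioc (0:ℝ) b, ∫⁻ s in Set.Ioc (0:ℝ) ε, ENNReal.ofReal (1 / ψ s) = ⊤)
    (a' : ℝ) (ha' : a' ∈ Set.Ioc (0:ℝ) a) (φ : ℝ → ℝ)
    (hKex : ∃ K, LipschitzOnWith K φ (Set.Icc 0 a'))
    (hrange : ∀ t ∈ Set.Icc (0:ℝ) a', φ t ∈ Set.Icc (0:ℝ) b)
    (hφ0 : φ 0 = 0)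
    (hae : ∀ᵐ t ∂volume, t ∈ Set.Ioc (0:ℝ) a' → ∀ y, HasDerivAt φ y t → y ≤ ψ (φ t)) :
    ∀ t ∈ Set.Icc (0:ℝ) a', φ t = 0 := by
  obtain ⟨ε, hεIoc, hdivψ⟩ := hψdiv
  obtain ⟨K, hK⟩ := hKex
  set χ : ℝ → ℝ := fun x => ψ (max 0 (min x b)) with hχdef
  have hmemχ : ∀ x : ℝ, max 0 (min x b) ∈ Set.Icc (0:ℝ) (2*b) := by
    intro x
    refine ⟨le_max_left _ _, ?_⟩
    have h1 : min x b ≤ b := min_le_right _ _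
    have h2 : max 0 (min x b) ≤ b := max_le (by linarith) h1
    linarith
  have hχcont : Continuous χ := hψc.comp_continuous (by fun_prop) hmemχ
  have hχpos : ∀ x : ℝ, 0 < x → 0 < χ x := by
    intro x hx
    have h1 : max 0 (min x b) = min x b := max_eq_right (le_min hx.le hb.le)
    rw [hχdef]; dsimp only; rw [h1]
    exact hψpos _ ⟨lt_min hx hb, min_le_right _ _⟩
  have hχeq : ∀ x ∈ Set.Icc (0:ℝ) b, χ x = ψ x := by
    intro x hx
    rw [hχdef]; dsimp only
    rw [min_eq_left hx.2, max_eq_right hx.1]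
  have hεb : 0 < ε := hεIoc.1
  have hdiv : ∫⁻ s in Set.Ioc (0:ℝ) ε, ENNReal.ofReal (1 / χ s) = ⊤ := by
    rw [← hdivψ]
    apply setLIntegral_congr_fun measurableSet_Ioc
    intro s hs
    simp only [hχeq s ⟨hs.1.le, le_trans hs.2 hεIoc.2⟩]
  set J : ℝ → ℝ := fun x => ∫ u in x..ε, (χ u)⁻¹ with hJdef
  have hinvcont : ContinuousOn (fun u => (χ u)⁻¹) (Set.Ioi (0:ℝ)) :=
    ContinuousOn.inv₀ hχcont.continuousOn fun v hv => (hχpos v hv).ne'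
  have hIntOn : ∀ x y : ℝ, 0 < x → 0 < y →
      IntervalIntegrable (fun u => (χ u)⁻¹) volume x y := by
    intro x y hx hy
    apply ContinuousOn.intervalIntegrable
    apply hinvcont.mono
    intro u hu
    exact lt_of_lt_of_le (lt_min hx hy) hu.1
  have hJder : ∀ x : ℝ, 0 < x → HasDerivAt J (-(χ x)⁻¹) x := by
    intro x hx
    exact intervalIntegral.integral_hasDerivAt_left (hIntOn x ε hx hεb)
      (hinvcont.stronglyMeasurableAtFilter isOpen_Ioi x hx)
      (hinvcont.continuousAt (Ioi_mem_nhds hx))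
  have hJanti : ∀ x y : ℝ, 0 < x → x ≤ y → J y ≤ J x := by
    intro x y hx hxy
    have hy : 0 < y := lt_of_lt_of_le hx hxy
    have hadd := intervalIntegral.integral_add_adjacent_intervals
      (hIntOn x y hx hy) (hIntOn y ε hy hεb)
    have hnn : 0 ≤ ∫ u in x..y, (χ u)⁻¹ := by
      apply intervalIntegral.integral_nonneg hxy
      intro u hu
      exact inv_nonneg.2 (hχpos u (lt_of_lt_of_le hx hu.1)).le
    rw [hJdef]; dsimp only
    rw [← hadd]
    linarith
  intro t ht
  by_contra hφt
  have hφTpos : 0 < φ t := lt_of_le_of_ne (hrange t ht).1 (Ne.symm hφt)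
  have hT0 : 0 < t := by
    rcases ht.1.lt_or_eq with h | h
    · exact h
    · exact absurd (by rw [← h]; exact hφ0) hφt
  have hφcont : ContinuousOn φ (Set.Icc 0 a') := hK.continuousOn
  set S : Set ℝ := Set.Icc 0 t ∩ φ ⁻¹' {0} with hSdef
  have hS0 : (0:ℝ) ∈ S := ⟨⟨le_rfl, ht.1⟩, hφ0⟩
  have hSclosed : IsClosed S :=
    (hφcont.mono (Set.Icc_subset_Icc le_rfl ht.2)).preimage_isClosed_of_isClosed
      isClosed_Icc isClosed_singleton
  have hSbdd : BddAbove S := ⟨t, fun u hu => hu.1.2⟩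
  set t₁ := sSup S with ht₁def
  have ht₁S : t₁ ∈ S := hSclosed.csSup_mem ⟨0, hS0⟩ hSbdd
  have ht₁mem : t₁ ∈ Set.Icc 0 t := ht₁S.1
  have hφt₁ : φ t₁ = 0 := ht₁S.2
  have ht₁T : t₁ < t := by
    rcases ht₁mem.2.lt_or_eq with h | h
    · exact h
    · exact absurd (by rw [← h]; exact hφt₁) hφt
  have hposafter : ∀ u, t₁ < u → u ≤ t → 0 < φ u := by
    intro u h1 h2
    have hu : u ∈ Set.Icc 0 a' := ⟨le_trans ht₁mem.1 h1.le, le_trans h2 ht.2⟩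
    rcases (hrange u hu).1.lt_or_eq with h | h
    · exact h
    · exact absurd (le_csSup hSbdd ⟨⟨hu.1, h2⟩, h.symm⟩) (not_le.2 h1)
  obtain ⟨x₀, hx₀mem, hx₀J⟩ := divergence_aux hεb hχcont hχpos hdiv (J (φ t) + (t - t₁))
  have hx₀pos : 0 < x₀ := hx₀mem.1
  have hKpos : (0:ℝ) < (K:ℝ) + 1 := by positivity
  set s := min t (t₁ + x₀ / (2 * ((K:ℝ) + 1))) with hsdef
  have hst₁ : t₁ < s := lt_min ht₁T (lt_add_of_pos_right _ (div_pos hx₀pos (by positivity)))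
  have hsT : s ≤ t := min_le_left _ _
  have hsIcc : s ∈ Set.Icc 0 a' := ⟨le_trans ht₁mem.1 hst₁.le, le_trans hsT ht.2⟩
  have ht₁Icc : t₁ ∈ Set.Icc 0 a' := ⟨ht₁mem.1, le_trans ht₁mem.2 ht.2⟩
  have hφs_le : φ s ≤ x₀ := by
    have hd := hK.dist_le_mul s hsIcc t₁ ht₁Icc
    rw [Real.dist_eq, Real.dist_eq, hφt₁, sub_zero,
      abs_of_pos (by linarith : (0:ℝ) < s - t₁)] at hd
    have h2 : s - t₁ ≤ x₀ / (2 * ((K:ℝ)+1)) := by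
      have h := min_le_right t (t₁ + x₀ / (2 * ((K:ℝ) + 1)))
      rw [← hsdef] at h
      linarith
    have h3 : (K:ℝ) * (s - t₁) ≤ (K:ℝ) * (x₀ / (2*((K:ℝ)+1))) :=
      mul_le_mul_of_nonneg_left h2 K.coe_nonneg
    have h4 : (K:ℝ) * (x₀ / (2*((K:ℝ)+1))) ≤ x₀ / 2 := by
      rw [mul_comm, div_mul_eq_mul_div, div_le_div_iff₀ (by positivity) (by norm_num : (0:ℝ) < 2)]
      nlinarith [K.coe_nonneg]
    have h5 : φ s ≤ |φ s| := le_abs_self _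
    linarith
  have hφspos : 0 < φ s := hposafter s hst₁ hsT
  obtain ⟨u₀, hu₀mem, hu₀min⟩ := isCompact_Icc.exists_isMinOn (Set.nonempty_Icc.2 hsT)
    (hφcont.mono (Set.Icc_subset_Icc hsIcc.1 ht.2))
  rw [isMinOn_iff] at hu₀min
  set m := φ u₀ with hmdef
  have hmpos : 0 < m := hposafter u₀ (lt_of_lt_of_le hst₁ hu₀mem.1) hu₀mem.2
  have hmb : m ≤ b :=
    (hrange u₀ ⟨le_trans hsIcc.1 hu₀mem.1, le_trans hu₀mem.2 ht.2⟩).2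
  obtain ⟨v₀, hv₀mem, hv₀min⟩ := isCompact_Icc.exists_isMinOn (Set.nonempty_Icc.2 hmb)
    (hχcont.continuousOn (s := Set.Icc m b))
  rw [isMinOn_iff] at hv₀min
  set c := χ v₀ with hcdef
  have hcpos : 0 < c := hχpos v₀ (lt_of_lt_of_le hmpos hv₀mem.1)
  have hJkey : ∀ x ∈ Set.Icc m b, ∀ y ∈ Set.Icc m b, x ≤ y →
      J x - J y ≤ c⁻¹ * (y - x) := by
    intro x hx y hy hxy
    have hxpos : 0 < x := lt_of_lt_of_le hmpos hx.1
    have hypos : 0 < y := lt_of_lt_of_le hxpos hxy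
    have hadd := intervalIntegral.integral_add_adjacent_intervals
      (hIntOn x y hxpos hypos) (hIntOn y ε hypos hεb)
    have hbnd : ∫ u in x..y, (χ u)⁻¹ ≤ ∫ u in x..y, c⁻¹ := by
      apply intervalIntegral.integral_mono_on hxy (hIntOn x y hxpos hypos)
        intervalIntegrable_const
      intro u hu
      exact inv_anti₀ hcpos (hv₀min u ⟨le_trans hx.1 hu.1, le_trans hu.2 hy.2⟩)
    rw [intervalIntegral.integral_const, smul_eq_mul] at hbnd
    rw [hJdef]; dsimp only
    rw [← hadd]
    linarith
  have hJlip : ∀ x ∈ Set.Icc m b, ∀ y ∈ Set.Icc m b, |J x - J y| ≤ c⁻¹ * |x - y| := by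
    intro x hx y hy
    rcases le_total x y with h | h
    · have h1 := hJkey x hx y hy h
      have h2 : 0 ≤ J x - J y := by
        linarith [hJanti x y (lt_of_lt_of_le hmpos hx.1) h]
      rw [abs_of_nonneg h2, abs_of_nonpos (by linarith : x - y ≤ 0)]
      linarith
    · have h1 := hJkey y hy x hx h
      have h2 : 0 ≤ J y - J x := by
        linarith [hJanti y x (lt_of_lt_of_le hmpos hy.1) h]
      rw [abs_of_nonpos (by linarith : J x - J y ≤ 0), abs_of_nonneg (by linarith : 0 ≤ x - y)]
      linarith
  set F : ℝ → ℝ := fun u => -(J (φ u)) with hFdef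
  have hφmem : ∀ u ∈ Set.Icc s t, φ u ∈ Set.Icc m b := by
    intro u hu
    exact ⟨hu₀min u hu, (hrange u ⟨le_trans hsIcc.1 hu.1, le_trans hu.2 ht.2⟩).2⟩
  have hFlip : LipschitzOnWith (Real.toNNReal c⁻¹ * K) F (Set.Icc s t) := by
    apply LipschitzOnWith.of_dist_le_mul
    intro u hu v hv
    have hφd := hK.dist_le_mul u ⟨le_trans hsIcc.1 hu.1, le_trans hu.2 ht.2⟩
      v ⟨le_trans hsIcc.1 hv.1, le_trans hv.2 ht.2⟩
    have hJd := hJlip (φ u) (hφmem u hu) (φ v) (hφmem v hv)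
    rw [Real.dist_eq, Real.dist_eq] at *
    have hFuv : |F u - F v| = |J (φ u) - J (φ v)| := by
      rw [hFdef]; dsimp only
      rw [← abs_neg]; congr 1; ring
    rw [hFuv]
    have hcoe : ((Real.toNNReal c⁻¹ * K : ℝ≥0) : ℝ) = c⁻¹ * (K:ℝ) := by
      rw [NNReal.coe_mul, Real.coe_toNNReal _ (inv_nonneg.2 hcpos.le)]
    rw [hcoe]
    calc |J (φ u) - J (φ v)| ≤ c⁻¹ * |φ u - φ v| := hJd
      _ ≤ c⁻¹ * ((K:ℝ) * |u - v|) :=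
          mul_le_mul_of_nonneg_left hφd (inv_nonneg.2 hcpos.le)
      _ = c⁻¹ * (K:ℝ) * |u - v| := by ring
  obtain ⟨φe, hφeLip, hφeEq⟩ := hK.extend_real
  have hrad := hφeLip.ae_differentiableAt_real
  have hae' : ∀ᵐ u ∂volume, u ∈ Set.Ioo s t → ∃ y, HasDerivAt F y u ∧ y ≤ 1 := by
    filter_upwards [hrad, hae] with u hdiff hbound hu
    have hu0 : 0 < u := lt_of_le_of_lt hsIcc.1 hu.1
    have hua : u ≤ a' := le_trans hu.2.le ht.2
    have huIoc : u ∈ Set.Ioc 0 a' := ⟨hu0, hua⟩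
    have hnhds : Set.Icc 0 a' ∈ 𝓝 u :=
      Icc_mem_nhds hu0 (lt_of_lt_of_le hu.2 ht.2)
    have heqn : φ =ᶠ[𝓝 u] φe := eventually_of_mem hnhds fun v hv => hφeEq hv
    have hder : HasDerivAt φ (deriv φe u) u :=
      (hdiff.hasDerivAt.congr_of_eventuallyEq heqn)
    have hyb : deriv φe u ≤ χ (φ u) := by
      have h1 := hbound huIoc (deriv φe u) hder
      rwa [hχeq (φ u) (hrange u ⟨hu0.le, hua⟩)]
    have hφupos : 0 < φ u := hposafter u (lt_trans hst₁ hu.1) hu.2.le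
    have hc2 : 0 < χ (φ u) := hχpos _ hφupos
    have hJd := hJder (φ u) hφupos
    have hneg : HasDerivAt (fun x => -(J x)) ((χ (φ u))⁻¹) (φ u) := by
      have := hJd.neg; rw [neg_neg] at this; exact this
    have hFd : HasDerivAt F ((χ (φ u))⁻¹ * deriv φe u) u := hneg.comp u hder
    refine ⟨_, hFd, ?_⟩
    calc (χ (φ u))⁻¹ * deriv φe u ≤ (χ (φ u))⁻¹ * χ (φ u) :=
        mul_le_mul_of_nonneg_left hyb (inv_nonneg.2 hc2.le)
      _ = 1 := inv_mul_cancel₀ hc2.ne'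
  have hinc := increment_key hsT hFlip hae'
  have hFt : F t - F s = J (φ s) - J (φ t) := by
    rw [hFdef]; ring
  rw [hFt, one_mul] at hinc
  have h6 : J x₀ ≤ J (φ s) := hJanti (φ s) x₀ hφspos hφs_le
  linarith [hinc, hx₀J, h6, hst₁]


/-- Osgood's Theorem: if `ψ : [0,2b] → [0,∞)` is continuous, `ψ(0) = 0`,
`ψ(x) > 0` for `x ∈ (0,b]` and `∫_{0+} ds/ψ(s) = +∞`, then `g(t,x) = ψ(x)` is a
uniqueness bound. -/
theorem isUniquenessBound_osgood (a b : ℝ) (ha : 0 < a) (hb : 0 < b)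
    (ψ : ℝ → ℝ)
    (hψc : ContinuousOn ψ (Set.Icc 0 (2 * b)))
    (hψnonneg : ∀ x ∈ Set.Icc (0:ℝ) (2 * b), 0 ≤ ψ x)
    (hψ0 : ψ 0 = 0)
    (hψpos : ∀ x ∈ Set.Ioc (0:ℝ) b, 0 < ψ x)
    (hψdiv : ∃ ε ∈ Set.Ioc (0:ℝ) b, ∫⁻ s in Set.Ioc (0:ℝ) ε, ENNReal.ofReal (1 / ψ s) = ⊤) :
    IsUniquenessBound a b (fun _ x => ψ x) := by
  intro a' ha' φ hKex hrange hφ0 _hφd0 hae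
  exact isUniquenessBound_osgood_main a b ha hb ψ hψc hψnonneg hψ0 hψpos hψdiv
    a' ha' φ hKex hrange hφ0 hae
end

section
/- (Montel–Tonelli bound) Let a, b > 0, let p : (0,a] → (0,∞) be locally integrable on (0,a] with ∫_0^a p(s) ds < +∞, and let ψ : [0, 2b] → [0,∞) be continuous with ψ(0) = 0, ψ(x) > 0 for all x ∈ (0, b], and ∫_{0+} ds/ψ(s) = +∞. Then g : (0,a] × [0,b] → [0,∞) defined by g(t,x) = p(t) ψ(x) is a uniqueness bound. -/
open MeasureTheory Set Filter
open scoped NNReal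

/-!
Osgood's separation of variables. Suppose `φ (t₁) > 0`. Since `1/ψ` is not integrable at `0`,
there is `x₀ ∈ (0, φ t₁)` with `∫_{x₀}^{φ t₁} 1/ψ > ∫_0^{a'} p`. Let `t` be the last time before
`t₁` at which `φ = x₀`; on `[t, t₁]` the function `φ` stays in `[x₀, b]`, where `1/ψ` is
continuous. There a primitive `Φ` of `1/ψ` makes `Φ ∘ φ` Lipschitz with `(Φ ∘ φ)' ≤ p` a.e., so
`∫_{x₀}^{φ t₁} 1/ψ = Φ (φ t₁) - Φ (φ t) ≤ ∫_t^{t₁} p ≤ ∫_0^{a'} p`, a contradiction.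
-/

theorem ContinuousOn.exists_eq_and_forall_le_of_mem_Icc {f : ℝ → ℝ} {a b y : ℝ} (hab : a ≤ b)
    (hf : ContinuousOn f (Icc a b)) (ha : f a ≤ y) (hb : y ≤ f b) :
    ∃ c ∈ Icc a b, f c = y ∧ ∀ x ∈ Icc c b, y ≤ f x := by
  set S := Icc a b ∩ f ⁻¹' Iic y
  have hS : IsCompact S :=
    isCompact_Icc.of_isClosed_subset (hf.preimage_isClosed_of_isClosed isClosed_Icc isClosed_Iic)
      inter_subset_left
  have hcS : sSup S ∈ S := hS.sSup_mem ⟨a, left_mem_Icc.2 hab, ha⟩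
  have hle : ∀ x ∈ Icc (sSup S) b, f x ≤ y → x = sSup S := fun x hx hfx =>
    le_antisymm (le_csSup hS.bddAbove ⟨⟨hcS.1.1.trans hx.1, hx.2⟩, hfx⟩) hx.1
  obtain ⟨x, hx, hfx⟩ := intermediate_value_Icc hcS.1.2 (hf.mono (Icc_subset_Icc_left hcS.1.1))
    ⟨hcS.2, hb⟩
  have hfc : f (sSup S) = y := hle x hx hfx.le ▸ hfx
  refine ⟨sSup S, hcS.1, hfc, fun z hz => ?_⟩
  by_contra! hlt
  exact (hle z hz hlt.le ▸ hlt).ne hfc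

theorem not_integrableOn_Ioc_of_not_integrableOn_Ioc {f : ℝ → ℝ} {a b c d : ℝ}
    (hf : ContinuousOn f (Ioc a b)) (hc : c ∈ Ioc a b) (hd : d ∈ Ioc a b)
    (hni : ¬ IntegrableOn f (Ioc a c)) : ¬ IntegrableOn f (Ioc a d) := by
  intro hint
  rcases le_total c d with hcd | hdc
  · exact hni (hint.mono_set (Ioc_subset_Ioc_right hcd))
  · rw [← Ioc_union_Ioc_eq_Ioc hd.1.le hdc] at hni
    exact hni (hint.union ((hf.mono (Icc_subset_Ioc hd.1 hc.2)).integrableOn_Icc.mono_set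
      Ioc_subset_Icc_self))

theorem exists_lt_intervalIntegral_of_not_integrableOn {f : ℝ → ℝ} {a b : ℝ}
    (hf : ContinuousOn f (Ioc a b)) (hf0 : ∀ x ∈ Ioc a b, 0 ≤ f x)
    (hni : ¬ IntegrableOn f (Ioc a b)) (C : ℝ) : ∃ x ∈ Ioo a b, C < ∫ s in x..b, f s := by
  by_contra! hC
  have hab : a < b := by
    by_contra! hba
    exact hni (by simp [Ioc_eq_empty_of_le hba])
  set x : ℕ → ℝ := fun n => a + (b - a) / 2 * (1 / (n + 1))
  have hx : ∀ n, x n ∈ Ioo a b := fun n => by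
    have h0 : (0 : ℝ) < 1 / (n + 1) := by positivity
    have h1 : 1 / ((n : ℝ) + 1) ≤ 1 := div_le_one_of_le₀ (by simp) (by positivity)
    constructor <;> dsimp only [x] <;> nlinarith
  refine hni (integrableOn_Ioc_of_intervalIntegral_norm_bounded_left (l := atTop) (I := C)
    (fun n => (hf.mono (Icc_subset_Ioc (hx n).1 le_rfl)).integrableOn_Icc.mono_set
      Ioc_subset_Icc_self) ?_ (Eventually.of_forall fun n => ?_))
  · simpa [x] using (tendsto_one_div_add_atTop_nhds_zero_nat.const_mul ((b - a) / 2)).const_add a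
  · rw [← intervalIntegral.integral_of_le (hx n).2.le]
    refine (intervalIntegral.integral_congr fun s hs => ?_).trans_le (hC (x n) (hx n))
    rw [uIcc_of_le (hx n).2.le] at hs
    exact Real.norm_of_nonneg (hf0 s ⟨(hx n).1.trans_le hs.1, hs.2⟩)

theorem ContinuousOn.exists_lipschitzWith_primitive_Icc {w : ℝ → ℝ} {m M : ℝ} (hmM : m ≤ M)
    (hw : ContinuousOn w (Icc m M)) :
    ∃ (Φ : ℝ → ℝ) (L : ℝ≥0), LipschitzWith L Φ ∧
      (∀ x ∈ Icc m M, HasDerivAt Φ (w x) x) ∧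
      ∀ x ∈ Icc m M, ∀ y ∈ Icc m M, Φ y - Φ x = ∫ u in x..y, w u := by
  set q := IccExtend hmM ((Icc m M).domRestrict w)
  have hq : Continuous q := hw.domRestrict.Icc_extend'
  have hqw : EqOn q w (Icc m M) := fun x hx => IccExtend_of_mem hmM _ hx
  have hrange : IsCompact (range q) := by
    rw [IccExtend_range]
    exact isCompact_range hw.domRestrict
  obtain ⟨B, hB⟩ := hrange.isBounded.exists_norm_le
  have hΦ : ∀ x, HasDerivAt (fun y => ∫ u in m..y, q u) (q x) x := fun x =>
    (hq.integral_hasStrictDerivAt m x).hasDerivAt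
  refine ⟨fun y => ∫ u in m..y, q u, B.toNNReal,
    lipschitzWith_of_nnnorm_deriv_le (fun x => (hΦ x).differentiableAt) fun x => ?_,
    fun x hx => hqw hx ▸ hΦ x, fun x hx y hy => ?_⟩
  · rw [(hΦ x).deriv, ← Real.toNNReal_coe (r := ‖q x‖₊), coe_nnnorm]
    exact Real.toNNReal_le_toNNReal (hB _ (mem_range_self x))
  · rw [intervalIntegral.integral_interval_sub_left (hq.intervalIntegrable _ _)
      (hq.intervalIntegrable _ _)]
    exact intervalIntegral.integral_congr (hqw.mono (uIcc_subset_Icc hx hy))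

theorem intervalIntegral_one_div_le_of_hasDerivAt_le_mul {φ p ψ : ℝ → ℝ} {t₁ t₂ m M : ℝ}
    {K : ℝ≥0} (ht : t₁ ≤ t₂) (hφ : LipschitzOnWith K φ (Icc t₁ t₂))
    (hφmaps : MapsTo φ (Icc t₁ t₂) (Icc m M)) (hψ : ContinuousOn ψ (Icc m M))
    (hψpos : ∀ x ∈ Icc m M, 0 < ψ x) (hp : IntervalIntegrable p volume t₁ t₂)
    (hder : ∀ᵐ s, s ∈ Ioo t₁ t₂ → ∀ y, HasDerivAt φ y s → y ≤ p s * ψ (φ s)) :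
    ∫ x in φ t₁..φ t₂, 1 / ψ x ≤ ∫ s in t₁..t₂, p s := by
  have hφ₁ := hφmaps (left_mem_Icc.2 ht)
  have hφ₂ := hφmaps (right_mem_Icc.2 ht)
  obtain ⟨Φ, L, hΦlip, hΦderiv, hΦsub⟩ := ContinuousOn.exists_lipschitzWith_primitive_Icc
    (w := fun x => 1 / ψ x) (hφ₁.1.trans hφ₁.2)
    (continuousOn_const.div hψ fun x hx => (hψpos x hx).ne')
  have hac : ∀ {f : ℝ → ℝ} {L : ℝ≥0}, LipschitzOnWith L f (Icc t₁ t₂) →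
      AbsolutelyContinuousOnInterval f t₁ t₂ := fun hf =>
    LipschitzOnWith.absolutelyContinuousOnInterval (uIcc_of_le ht ▸ hf)
  have hD := hac (hΦlip.comp_lipschitzOnWith hφ)
  have hderiv : ∀ᵐ s, s ∈ Ioo t₁ t₂ → deriv (Φ ∘ φ) s ≤ p s := by
    filter_upwards [(hac hφ).ae_differentiableAt, hder] with s hdiff hbound hs
    have hφs : HasDerivAt φ (deriv φ s) s :=
      (hdiff (uIcc_of_le ht ▸ Ioo_subset_Icc_self hs)).hasDerivAt
    have hmem := hφmaps (Ioo_subset_Icc_self hs)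
    rw [((hΦderiv _ hmem).comp s hφs).deriv, one_div_mul_eq_div, div_le_iff₀ (hψpos _ hmem)]
    exact hbound hs _ hφs
  calc ∫ x in φ t₁..φ t₂, 1 / ψ x = (Φ ∘ φ) t₂ - (Φ ∘ φ) t₁ := (hΦsub _ hφ₁ _ hφ₂).symm
    _ = ∫ s in t₁..t₂, deriv (Φ ∘ φ) s := hD.integral_deriv_eq_sub.symm
    _ ≤ ∫ s in t₁..t₂, p s := by
      refine intervalIntegral.integral_mono_ae_restrict ht hD.intervalIntegrable_deriv hp ?_
      rw [← Measure.restrict_congr_set Ioo_ae_eq_Icc]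
      exact (ae_restrict_iff' measurableSet_Ioo).2 hderiv

theorem isUniquenessBound_montel_tonelli_general (a b : ℝ)
    (p : ℝ → ℝ)
    (hp : ∀ t ∈ Set.Ioc (0:ℝ) a, 0 < p t)
    (hpint : IntegrableOn p (Set.Ioc 0 a))
    (ψ : ℝ → ℝ)
    (hψc : ContinuousOn ψ (Set.Icc 0 (2 * b)))
    (hψpos : ∀ x ∈ Set.Ioc (0:ℝ) b, 0 < ψ x)
    (hψdiv : ∃ ε ∈ Set.Ioc (0:ℝ) b, ∫⁻ s in Set.Ioc (0:ℝ) ε, ENNReal.ofReal (1 / ψ s) = ⊤) :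
    IsUniquenessBound a b (fun t x => p t * ψ x) := by
  rintro a' ⟨ha', ha'a⟩ φ ⟨K, hK⟩ hrange hφ0 - hder t₁ ht₁
  by_contra hne
  have hφt₁ : φ t₁ ∈ Ioc 0 b := ⟨(hrange t₁ ht₁).1.lt_of_ne' hne, (hrange t₁ ht₁).2⟩
  have hinv : ContinuousOn (fun x => 1 / ψ x) (Ioc 0 b) :=
    continuousOn_const.div (hψc.mono fun x hx => ⟨hx.1.le, by linarith [hx.1, hx.2]⟩)
      fun x hx => (hψpos x hx).ne'
  obtain ⟨ε, hε, hεdiv⟩ := hψdiv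
  have hni : ¬ IntegrableOn (fun x => 1 / ψ x) (Ioc 0 (φ t₁)) :=
    not_integrableOn_Ioc_of_not_integrableOn_Ioc hinv hε hφt₁ fun h => h.lintegral_lt_top.ne hεdiv
  have hpi : IntervalIntegrable p volume 0 a' :=
    (intervalIntegrable_iff_integrableOn_Ioc_of_le ha'.le).2
      (hpint.mono_set (Ioc_subset_Ioc_right ha'a))
  obtain ⟨x₀, hx₀, hx₀_lt⟩ := exists_lt_intervalIntegral_of_not_integrableOn
    (hinv.mono (Ioc_subset_Ioc_right hφt₁.2))
    (fun x hx => one_div_nonneg.2 (hψpos x ⟨hx.1, hx.2.trans hφt₁.2⟩).le) hni (∫ s in 0..a', p s)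
  obtain ⟨t, ht, hφt, hφge⟩ := ContinuousOn.exists_eq_and_forall_le_of_mem_Icc ht₁.1
    (hK.continuousOn.mono (Icc_subset_Icc_right ht₁.2)) (hφ0.le.trans hx₀.1.le) hx₀.2.le
  have hsep := intervalIntegral_one_div_le_of_hasDerivAt_le_mul ht.2
    (hK.mono (Icc_subset_Icc ht.1 ht₁.2))
    (fun s hs => ⟨hφge s hs, (hrange s ⟨ht.1.trans hs.1, hs.2.trans ht₁.2⟩).2⟩)
    (hψc.mono (Icc_subset_Icc hx₀.1.le (by linarith [hφt₁.1, hφt₁.2])))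
    (fun x hx => hψpos x ⟨hx₀.1.trans_le hx.1, hx.2⟩)
    (hpi.mono_set (by rw [uIcc_of_le ht.2, uIcc_of_le ha'.le]; exact Icc_subset_Icc ht.1 ht₁.2))
    (by filter_upwards [hder] with s hs hs' using hs ⟨ht.1.trans_lt hs'.1, hs'.2.le.trans ht₁.2⟩)
  have hp_le : ∫ s in t..t₁, p s ≤ ∫ s in 0..a', p s :=
    intervalIntegral.integral_mono_interval ht.1 ht.2 ht₁.2
      ((ae_restrict_iff' measurableSet_Ioc).2 <|
        Eventually.of_forall fun s hs => (hp s ⟨hs.1, hs.2.trans ha'a⟩).le) hpi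
  rw [hφt] at hsep
  linarith

/-- Montel–Tonelli's Theorem: if `p : (0,a] → (0,∞)` is locally integrable with
`∫_0^a p(s) ds < +∞` and `ψ` is as in Osgood's Theorem, then `g(t,x) = p(t)ψ(x)`
is a uniqueness bound. -/
theorem isUniquenessBound_montel_tonelli (a b : ℝ) (ha : 0 < a) (hb : 0 < b)
    (p : ℝ → ℝ)
    (hp : ∀ t ∈ Set.Ioc (0:ℝ) a, 0 < p t)
    (hpint : IntegrableOn p (Set.Ioc 0 a))
    (ψ : ℝ → ℝ)
    (hψc : ContinuousOn ψ (Set.Icc 0 (2 * b)))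
    (hψnonneg : ∀ x ∈ Set.Icc (0:ℝ) (2 * b), 0 ≤ ψ x)
    (hψ0 : ψ 0 = 0)
    (hψpos : ∀ x ∈ Set.Ioc (0:ℝ) b, 0 < ψ x)
    (hψdiv : ∃ ε ∈ Set.Ioc (0:ℝ) b, ∫⁻ s in Set.Ioc (0:ℝ) ε, ENNReal.ofReal (1 / ψ s) = ⊤) :
    IsUniquenessBound a b (fun t x => p t * ψ x) :=
  isUniquenessBound_montel_tonelli_general a b p hp hpint ψ hψc hψpos hψdiv
end

section
/- (Nagumo bound) Let a, b > 0. The function g : (0,a] × [0,b] → [0,∞) defined by g(t,x) = x/t is a uniqueness bound. -/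
/-!
Nagumo's argument: the inequality `φ' ≤ φ / t` says exactly that `t ↦ φ t / t` is nonincreasing,
being absolutely continuous with a.e. nonpositive derivative. As `t → 0⁺` this quotient tends to
`φ'(0) = 0`, so `φ t / t ≤ 0`, which together with `φ ≥ 0` forces `φ = 0`.
-/

open MeasureTheory Set

open Filter Topology

theorem AbsolutelyContinuousOnInterval.le_of_ae_hasDerivAt_nonpos {f : ℝ → ℝ} {c d : ℝ}
    (hf : AbsolutelyContinuousOnInterval f c d) (hcd : c ≤ d)
    (h : ∀ᵐ x, x ∈ Ioo c d → ∀ y, HasDerivAt f y x → y ≤ 0) : f d ≤ f c := by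
  have hint : ∫ x in c..d, deriv f x ≤ 0 := by
    rw [intervalIntegral.integral_of_le hcd, Measure.restrict_congr_set Ioo_ae_eq_Ioc.symm]
    refine integral_nonpos_of_ae ((ae_restrict_iff' measurableSet_Ioo).2 ?_)
    filter_upwards [h, hf.ae_differentiableAt] with x hderiv hdiff hx
    exact hderiv hx _ (hdiff (Ioo_subset_Icc_self.trans Icc_subset_uIcc hx)).hasDerivAt
  linarith [hf.integral_deriv_eq_sub]

theorem AbsolutelyContinuousOnInterval.div_id {f : ℝ → ℝ} {c d : ℝ}
    (hf : AbsolutelyContinuousOnInterval f c d) (hc : 0 < c) (hd : 0 < d) :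
    AbsolutelyContinuousOnInterval (fun x => f x / x) c d := by
  have hinv : AbsolutelyContinuousOnInterval (fun x : ℝ => x⁻¹) c d :=
    (ContDiffOn.mono (contDiffOn_inv ℝ) fun x hx =>
      mem_compl_singleton_iff.2 ((lt_min hc hd).trans_le hx.1).ne').absolutelyContinuousOnInterval
  simpa only [div_eq_mul_inv] using hf.fun_mul hinv

theorem nonpos_of_hasDerivAt_div_id {f : ℝ → ℝ} {x y : ℝ} (hx : 0 < x)
    (hdiv : HasDerivAt (fun u => f u / u) y x) (hf : ∀ y', HasDerivAt f y' x → y' ≤ f x / x) :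
    y ≤ 0 := by
  have hmul : HasDerivAt (fun u => u * (f u / u)) (1 * (f x / x) + x * y) x :=
    (hasDerivAt_id x).mul hdiv
  have heq : (fun u => u * (f u / u)) =ᶠ[𝓝 x] f := by
    filter_upwards [eventually_ne_nhds hx.ne'] with u hu
    exact mul_div_cancel₀ _ hu
  have := hf _ (hmul.congr_of_eventuallyEq heq.symm)
  nlinarith

theorem div_id_le_of_ae_hasDerivAt_le_div {f : ℝ → ℝ} {c d : ℝ}
    (hf : AbsolutelyContinuousOnInterval f c d) (hc : 0 < c) (hcd : c ≤ d)
    (h : ∀ᵐ x, x ∈ Ioo c d → ∀ y, HasDerivAt f y x → y ≤ f x / x) : f d / d ≤ f c / c := by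
  refine (hf.div_id hc (hc.trans_le hcd)).le_of_ae_hasDerivAt_nonpos hcd ?_
  filter_upwards [h] with x hx hmem y hy
  exact nonpos_of_hasDerivAt_div_id (hc.trans hmem.1) hy (hx hmem)

theorem isUniquenessBound_nagumo_general (a b : ℝ) :
    IsUniquenessBound a b (fun t x => x / t) := by
  rintro a' - φ ⟨K, hK⟩ hrange h0 hd0 hae t ⟨ht0, hta⟩
  rcases ht0.eq_or_lt with rfl | ht0
  · exact h0
  have hslope : Tendsto (fun s => φ s / s) (𝓝[>] 0) (𝓝 0) := by
    simpa [slope_fun_def_field, h0] using (hasDerivWithinAt_iff_tendsto_slope'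
      (s := Ioi 0) (lt_irrefl 0)).1 (hasDerivWithinAt_Ioi_iff_Ici.2 hd0)
  have hmono : ∀ s ∈ Ioo 0 t, φ t / t ≤ φ s / s := by
    intro s ⟨hs0, hst⟩
    have hsub : uIcc s t ⊆ Icc 0 a' := uIcc_of_le hst.le ▸ Icc_subset_Icc hs0.le hta
    refine div_id_le_of_ae_hasDerivAt_le_div (hK.mono hsub).absolutelyContinuousOnInterval
      hs0 hst.le ?_
    filter_upwards [hae] with x hx hmem
    exact hx ⟨hs0.trans hmem.1, hmem.2.le.trans hta⟩
  have hle : φ t / t ≤ 0 :=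
    ge_of_tendsto hslope (eventually_of_mem (Ioo_mem_nhdsGT ht0) hmono)
  rw [div_le_iff₀ ht0, zero_mul] at hle
  exact le_antisymm hle (hrange t ⟨ht0.le, hta⟩).1

/-- Nagumo's Theorem: `g(t,x) = x/t` is a uniqueness bound. -/
theorem isUniquenessBound_nagumo (a b : ℝ) (ha : 0 < a) (hb : 0 < b) :
    IsUniquenessBound a b (fun t x => x / t) :=
  isUniquenessBound_nagumo_general a b
end

section
/- (Van Kampen bound) Let a, b > 0 and let q : (0,a] → [0,∞) be a measurable function with ∫_0^a q(s)/s ds < +∞. Then g : (0,a] × [0,b] → [0,∞) defined by g(t,x) = (1 + q(t)) x / t is a uniqueness bound. -/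
open MeasureTheory Set

/-!
On `[ε, t]` the integrating factor `exp (-∫ ε..x, (1 + q s) / s)` turns the differential
inequality into an a.e. nonpositive derivative of an absolutely continuous function, which gives
`φ t ≤ (t / ε) · exp (∫₀ᵃ q(s)/s ds) · φ ε`. As `ε → 0⁺`, `φ ε / ε → φ'(0) = 0`, so `φ t ≤ 0`.
-/

open Filter Topology

theorem LocallyLipschitz.comp_absolutelyContinuousOnInterval {E F : Type*}
    [SeminormedAddCommGroup E] [PseudoMetricSpace F] {g : E → F} {f : ℝ → E} {a b : ℝ}
    (hg : LocallyLipschitz g) (hf : AbsolutelyContinuousOnInterval f a b) :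
    AbsolutelyContinuousOnInterval (g ∘ f) a b := by
  obtain ⟨K, hK⟩ := (hg.locallyLipschitzOn (s := f '' uIcc a b)).exists_lipschitzOnWith_of_compact
    (isCompact_uIcc.image_of_continuousOn hf.continuousOn)
  unfold AbsolutelyContinuousOnInterval at hf ⊢
  apply squeeze_zero' (Eventually.of_forall fun _ ↦ Finset.sum_nonneg fun _ _ ↦ dist_nonneg) ?_
    (by simpa using hf.const_mul (K : ℝ))
  rw [eventually_inf_principal]
  filter_upwards with ⟨n, I⟩ hnI
  simp only [AbsolutelyContinuousOnInterval.disjWithin, mem_ofPred_eq] at hnI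
  rw [Finset.mul_sum]
  gcongr with i hi
  exact hK.dist_le_mul _ (mem_image_of_mem f (hnI.1 i hi).1) _ (mem_image_of_mem f (hnI.1 i hi).2)

namespace AbsolutelyContinuousOnInterval

theorem le_of_ae_hasDerivAt_nonpos_s12 {f : ℝ → ℝ} {a b : ℝ} (hab : a ≤ b)
    (hf : AbsolutelyContinuousOnInterval f a b)
    (hf' : ∀ᵐ x, x ∈ Ioo a b → ∀ y, HasDerivAt f y x → y ≤ 0) : f b ≤ f a := by
  rw [← sub_nonpos, ← hf.integral_deriv_eq_sub, intervalIntegral.integral_of_le hab,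
    integral_Ioc_eq_integral_Ioo]
  refine setIntegral_nonpos_ae measurableSet_Ioo ?_
  filter_upwards [hf.ae_differentiableAt, hf'] with x hdiff hle hx
  exact hle hx _ (hdiff (Ioo_subset_Icc_self.trans Icc_subset_uIcc hx)).hasDerivAt

theorem le_exp_integral_mul_of_ae_hasDerivAt_le {φ d : ℝ → ℝ} {a b : ℝ} (hab : a ≤ b)
    (hφ : AbsolutelyContinuousOnInterval φ a b) (hd : IntervalIntegrable d volume a b)
    (hφ' : ∀ᵐ x, x ∈ Ioo a b → ∀ y, HasDerivAt φ y x → y ≤ d x * φ x) :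
    φ b ≤ Real.exp (∫ x in a..b, d x) * φ a := by
  set D : ℝ → ℝ := fun x ↦ ∫ s in a..x, d s
  have hE : AbsolutelyContinuousOnInterval (fun x ↦ Real.exp (-D x)) a b :=
    Real.contDiff_exp.locallyLipschitz.comp_absolutelyContinuousOnInterval
      (hd.absolutelyContinuousOnInterval_intervalIntegral left_mem_uIcc).neg
  have hψ : φ b * Real.exp (-D b) ≤ φ a * Real.exp (-D a) := by
    refine (hφ.fun_mul hE).le_of_ae_hasDerivAt_nonpos_s12 hab ?_
    filter_upwards [hd.ae_hasDerivAt_integral, hφ.ae_differentiableAt, hφ'] with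
      x hD hφx hle hx y hy
    have hxI : x ∈ uIcc a b := Ioo_subset_Icc_self.trans Icc_subset_uIcc hx
    have hφd := (hφx hxI).hasDerivAt
    rw [hy.unique (hφd.mul (hD hxI a left_mem_uIcc).neg.exp)]
    calc deriv φ x * Real.exp (-D x) + φ x * (Real.exp (-D x) * -d x)
        = (deriv φ x - d x * φ x) * Real.exp (-D x) := by ring
      _ ≤ 0 := mul_nonpos_of_nonpos_of_nonneg (by linarith [hle hx _ hφd]) (Real.exp_pos _).le
  have hDa : D a = 0 := intervalIntegral.integral_same
  rw [hDa, neg_zero, Real.exp_zero, mul_one] at hψ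
  calc φ b = φ b * Real.exp (-D b) * Real.exp (D b) := by
        rw [mul_assoc, ← Real.exp_add, neg_add_cancel, Real.exp_zero, mul_one]
    _ ≤ Real.exp (D b) * φ a := by
        rw [mul_comm (Real.exp _)]
        exact mul_le_mul_of_nonneg_right hψ (Real.exp_pos _).le

end AbsolutelyContinuousOnInterval

theorem tendsto_div_self_nhdsGT_of_hasDerivWithinAt_zero {φ : ℝ → ℝ} (h₀ : φ 0 = 0)
    (hφ : HasDerivWithinAt φ 0 (Ici 0) 0) : Tendsto (fun x ↦ φ x / x) (𝓝[>] 0) (𝓝 0) := by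
  refine ((hasDerivWithinAt_iff_tendsto_slope' (lt_irrefl 0)).1 hφ.Ioi_of_Ici).congr fun x ↦ ?_
  simp [slope, h₀, div_eq_inv_mul]

section VanKampenWeight

variable {q : ℝ → ℝ} {a ε t : ℝ}

theorem intervalIntegrable_one_add_div (hε : 0 < ε) (hεt : ε ≤ t) (hta : t ≤ a)
    (hq : IntegrableOn (fun s ↦ q s / s) (Ioc 0 a)) :
    IntervalIntegrable (fun s ↦ (1 + q s) / s) volume ε t := by
  simp_rw [add_div, one_div]
  refine .add (intervalIntegrable_inv_iff.2 (.inr fun h ↦ ?_)) ?_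
  · linarith [(uIcc_of_le hεt ▸ h).1]
  · exact (intervalIntegrable_iff_integrableOn_Ioc_of_le hεt).2
      (hq.mono_set (Ioc_subset_Ioc hε.le hta))

theorem integral_one_add_div_le_log_add (hε : 0 < ε) (hεt : ε ≤ t) (hta : t ≤ a)
    (hq₀ : ∀ s ∈ Ioc 0 a, 0 ≤ q s) (hq : IntegrableOn (fun s ↦ q s / s) (Ioc 0 a)) :
    ∫ s in ε..t, (1 + q s) / s ≤ Real.log (t / ε) + ∫ s in Ioc 0 a, q s / s := by
  have hinv : IntervalIntegrable (fun s : ℝ ↦ s⁻¹) volume ε t :=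
    intervalIntegrable_inv_iff.2 (.inr fun h ↦ by linarith [(uIcc_of_le hεt ▸ h).1])
  have hq' : IntegrableOn (fun s ↦ q s / s) (Ioc ε t) := hq.mono_set (Ioc_subset_Ioc hε.le hta)
  simp_rw [add_div, one_div]
  rw [intervalIntegral.integral_add hinv
      ((intervalIntegrable_iff_integrableOn_Ioc_of_le hεt).2 hq'),
    integral_inv_of_pos hε (hε.trans_le hεt), intervalIntegral.integral_of_le hεt]
  refine add_le_add_right (setIntegral_mono_set hq ?_ (Ioc_subset_Ioc hε.le hta).eventuallyLE) _
  exact (ae_restrict_iff' measurableSet_Ioc).2 (.of_forall fun s hs ↦ div_nonneg (hq₀ s hs) hs.1.le)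

theorem le_mul_exp_mul_div_of_ae_hasDerivAt_le_one_add_div_mul {φ : ℝ → ℝ} (hε : 0 < ε)
    (hεt : ε ≤ t) (hta : t ≤ a) (hq₀ : ∀ s ∈ Ioc 0 a, 0 ≤ q s)
    (hq : IntegrableOn (fun s ↦ q s / s) (Ioc 0 a)) (hφ : AbsolutelyContinuousOnInterval φ ε t)
    (hφε : 0 ≤ φ ε) (hφ' : ∀ᵐ x, x ∈ Ioo ε t → ∀ y, HasDerivAt φ y x → y ≤ (1 + q x) / x * φ x) :
    φ t ≤ t * Real.exp (∫ s in Ioc 0 a, q s / s) * (φ ε / ε) :=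
  calc φ t ≤ Real.exp (∫ s in ε..t, (1 + q s) / s) * φ ε :=
        hφ.le_exp_integral_mul_of_ae_hasDerivAt_le hεt
          (intervalIntegrable_one_add_div hε hεt hta hq) hφ'
    _ ≤ Real.exp (Real.log (t / ε) + ∫ s in Ioc 0 a, q s / s) * φ ε := by
        gcongr
        exact integral_one_add_div_le_log_add hε hεt hta hq₀ hq
    _ = t * Real.exp (∫ s in Ioc 0 a, q s / s) * (φ ε / ε) := by
        rw [Real.exp_add, Real.exp_log (div_pos (hε.trans_le hεt) hε)]
        ring

end VanKampenWeight

theorem isUniquenessBound_vanKampen_general (a b : ℝ)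
    (q : ℝ → ℝ)
    (hq0 : ∀ t ∈ Set.Ioc (0:ℝ) a, 0 ≤ q t)
    (hqint : IntegrableOn (fun s => q s / s) (Set.Ioc 0 a)) :
    IsUniquenessBound a b (fun t x => (1 + q t) * x / t) := by
  intro a' ha' φ ⟨K, hK⟩ hmem h0 hd0 hae t ht
  rcases ht.1.eq_or_lt with rfl | ht₀
  · exact h0
  have hbound : ∀ ε ∈ Ioc 0 t, φ t ≤ t * Real.exp (∫ s in Ioc 0 a, q s / s) * (φ ε / ε) := by
    rintro ε ⟨hε, hεt⟩
    refine le_mul_exp_mul_div_of_ae_hasDerivAt_le_one_add_div_mul hε hεt (ht.2.trans ha'.2) hq0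
      hqint ?_ (hmem ε ⟨hε.le, hεt.trans ht.2⟩).1 ?_
    · exact (hK.mono (uIcc_of_le hεt ▸ Icc_subset_Icc hε.le ht.2)).absolutelyContinuousOnInterval
    · filter_upwards [hae] with x hx hxI y hy
      exact (hx ⟨hε.trans hxI.1, hxI.2.le.trans ht.2⟩ y hy).trans_eq (div_mul_eq_mul_div _ _ _).symm
  refine le_antisymm ?_ (hmem t ht).1
  have hlim := (tendsto_div_self_nhdsGT_of_hasDerivWithinAt_zero h0 hd0).const_mul
    (t * Real.exp (∫ s in Ioc 0 a, q s / s))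
  rw [mul_zero] at hlim
  refine ge_of_tendsto hlim ?_
  filter_upwards [Ioc_mem_nhdsGT ht₀] with ε hε using hbound ε hε

/-- Van Kampen's Theorem: if `q : (0,a] → [0,∞)` is measurable with
`∫_0^a q(s)/s ds < +∞`, then `g(t,x) = (1 + q(t))·x/t` is a uniqueness bound. -/
theorem isUniquenessBound_vanKampen (a b : ℝ) (ha : 0 < a) (hb : 0 < b)
    (q : ℝ → ℝ)
    (hq0 : ∀ t ∈ Set.Ioc (0:ℝ) a, 0 ≤ q t)
    (hqm : AEMeasurable q (volume.restrict (Set.Ioc 0 a)))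
    (hqint : IntegrableOn (fun s => q s / s) (Set.Ioc 0 a)) :
    IsUniquenessBound a b (fun t x => (1 + q t) * x / t) :=
  isUniquenessBound_vanKampen_general a b q hq0 hqint
end
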